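/- arXiv:2303.11532 — 8 statements merged into one kernel-verified Lean document; each statement's English description precedes it below -/
import Mathlib

section
/- If ℝ = A ∪ B is a partition of ℝ into two disjoint sets, then there exists an open interval I such that the suborder A ∩ I is not order-isomorphic to the suborder B ∩ I. -/
open Set

/-- `I` is an open interval of `ℝ`: one of `(a,b)`, `(a,∞)`, `(-∞,b)`, `(-∞,∞)`. -/
def IsOpenIntervalR (I : Set ℝ) : Prop :=
  (∃ a b : ℝ, I = Ioo a b) ∨ (∃ a : ℝ, I = Ioi a) ∨ (∃ b : ℝ, I = Iio b) ∨ I = univ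

open Function


/-- Order-theoretic crossing lemma: if a "nice" map φ is below ψ at m and above at M,
they coincide somewhere in between. -/
lemma cross_lemma {φ ψ : ℝ → ℝ} {u v m M : ℝ}
    (hm : m ∈ Ioo u v) (hM : M ∈ Ioo u v) (hmM : m < M)
    (hφmono : StrictMonoOn φ (Ioo u v))
    (hφmap : MapsTo φ (Ioo u v) (Ioo u v))
    (hφsurj : SurjOn φ (Ioo u v) (Ioo u v))
    (hψmono : StrictMonoOn ψ (Ioo u v))
    (hψlow : ∀ x ∈ Ioo u v, u < ψ x)
    (h1 : φ m < ψ m) (h2 : ψ M < φ M) :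
    ∃ w ∈ Ioo u v, φ w = ψ w := by
  set S : Set ℝ := {x | x ∈ Icc m M ∧ φ x < ψ x} with hS
  have hmS : m ∈ S := ⟨⟨le_refl m, le_of_lt hmM⟩, h1⟩
  have hSne : S.Nonempty := ⟨m, hmS⟩
  have hSbdd : BddAbove S := ⟨M, fun x hx => hx.1.2⟩
  set p := sSup S with hp
  have hpm : m ≤ p := le_csSup hSbdd hmS
  have hpM : p ≤ M := csSup_le hSne (fun x hx => hx.1.2)
  have hpIoo : p ∈ Ioo u v := ⟨lt_of_lt_of_le hm.1 hpm, lt_of_le_of_lt hpM hM.2⟩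
  have hIccIoo : Icc m M ⊆ Ioo u v := fun x hx => ⟨lt_of_lt_of_le hm.1 hx.1, lt_of_le_of_lt hx.2 hM.2⟩
  rcases lt_trichotomy (φ p) (ψ p) with hlt | heq | hgt
  · -- φ p < ψ p : find point of S above p, contradiction
    have hpltM : p < M := by
      rcases lt_or_eq_of_le hpM with h | h
      · exact h
      · exfalso; rw [h] at hlt; exact absurd hlt (not_lt.mpr (le_of_lt h2))
    -- choose z ∈ (φ p, min (ψ p) v)
    obtain ⟨z, hz1, hz2⟩ := exists_between (lt_min hlt (hφmap hpIoo).2)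
    have hzIoo : z ∈ Ioo u v := ⟨lt_trans (hφmap hpIoo).1 hz1, lt_of_lt_of_le hz2 (min_le_right _ _)⟩
    obtain ⟨x, hxIoo, hxz⟩ := hφsurj hzIoo
    have hpx : p < x := by
      by_contra hc
      push_neg at hc
      have := hφmono.monotoneOn hxIoo hpIoo hc
      rw [hxz] at this
      exact absurd hz1 (not_lt.mpr this)
    have hxM : x < M := by
      have hψpM : ψ p ≤ ψ M := hψmono.monotoneOn hpIoo hM (le_of_lt hpltM)
      have : φ x < φ M := by
        rw [hxz]
        exact lt_trans (lt_of_lt_of_le hz2 (min_le_left _ _)) (lt_of_le_of_lt hψpM h2)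
      exact ((hφmono.lt_iff_lt hxIoo hM).mp this)
    have hxS : x ∈ S := by
      refine ⟨⟨le_trans hpm (le_of_lt hpx), le_of_lt hxM⟩, ?_⟩
      rw [hxz]
      exact lt_trans (lt_of_lt_of_le hz2 (min_le_left _ _)) (hψmono hpIoo hxIoo hpx)
    exact absurd (le_csSup hSbdd hxS) (not_le.mpr hpx)
  · exact ⟨p, hpIoo, heq⟩
  · -- ψ p < φ p
    obtain ⟨z, hz1, hz2⟩ := exists_between hgt
    have hzIoo : z ∈ Ioo u v := ⟨lt_trans (hψlow p hpIoo) hz1, lt_trans hz2 (hφmap hpIoo).2⟩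
    obtain ⟨x, hxIoo, hxz⟩ := hφsurj hzIoo
    have hxp : x < p := by
      have : φ x < φ p := by rw [hxz]; exact hz2
      exact (hφmono.lt_iff_lt hxIoo hpIoo).mp this
    obtain ⟨x', hx'S, hxx'⟩ := exists_lt_of_lt_csSup hSne hxp
    have hx'Ioo : x' ∈ Ioo u v := hIccIoo hx'S.1
    have h3 : φ x < φ x' := hφmono hxIoo hx'Ioo hxx'
    have hx'p : x' ≤ p := le_csSup hSbdd hx'S
    have h4 : ψ x' ≤ ψ p := hψmono.monotoneOn hx'Ioo hpIoo hx'p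
    have h5 : φ x' < φ x := by
      rw [hxz]; exact lt_trans (lt_of_lt_of_le hx'S.2 h4) hz1
    exact absurd h3 (not_lt.mpr (le_of_lt h5))

lemma strictMonoOn_iterate {f : ℝ → ℝ} {s : Set ℝ} (hmono : StrictMonoOn f s)
    (hmap : MapsTo f s s) : ∀ n, StrictMonoOn f^[n] s := by
  intro n
  induction n with
  | zero => intro a ha b hb hab; simpa using hab
  | succ k ih =>
    intro a ha b hb hab
    rw [Function.iterate_succ_apply' f k a, Function.iterate_succ_apply' f k b]
    exact hmono (hmap.iterate k ha) (hmap.iterate k hb) (ih ha hb hab)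

lemma surjOn_iterate {f : ℝ → ℝ} {s : Set ℝ} (hsurj : SurjOn f s s) :
    ∀ n, SurjOn f^[n] s s := by
  intro n
  induction n with
  | zero => intro z hz; exact ⟨z, hz, rfl⟩
  | succ k ih =>
    intro z hz
    obtain ⟨y, hy, hyz⟩ := hsurj hz
    obtain ⟨x, hx, hxy⟩ := ih hy
    exact ⟨x, hx, by rw [Function.iterate_succ_apply' f k x, hxy, hyz]⟩

lemma pred_iterate {f : ℝ → ℝ} {s : Set ℝ} {P : ℝ → Prop} (hmap : MapsTo f s s)
    (h : ∀ x ∈ s, P x → P (f x)) : ∀ n, ∀ x ∈ s, P x → P (f^[n] x) := by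
  intro n
  induction n with
  | zero => intro x _ hx; simpa using hx
  | succ k ih =>
    intro x hx hPx
    rw [Function.iterate_succ_apply' f k x]
    exact h _ (hmap.iterate k hx) (ih x hx hPx)

/-- orbit of an increasing-above-identity surjective map reaches arbitrarily close to `v`. -/
lemma orbit_lemma {H : ℝ → ℝ} {u v : ℝ}
    (hmono : StrictMonoOn H (Ioo u v)) (hmap : MapsTo H (Ioo u v) (Ioo u v))
    (hsurj : SurjOn H (Ioo u v) (Ioo u v)) (hgt : ∀ x ∈ Ioo u v, x < H x) :
    ∀ y ∈ Ioo u v, ∀ c, c < v → ∃ k, c < H^[k] y := by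
  intro y hy c hc
  by_contra hcon
  push_neg at hcon
  set R : Set ℝ := Set.range (fun k => H^[k] y) with hR
  have hRne : R.Nonempty := ⟨y, 0, rfl⟩
  have hRbdd : BddAbove R := ⟨c, by rintro _ ⟨k, rfl⟩; exact hcon k⟩
  set L := sSup R with hL
  have hyL : y ≤ L := le_csSup hRbdd ⟨0, rfl⟩
  have hLc : L ≤ c := csSup_le hRne (by rintro _ ⟨k, rfl⟩; exact hcon k)
  have hLIoo : L ∈ Ioo u v := ⟨lt_of_lt_of_le hy.1 hyL, lt_of_le_of_lt hLc hc⟩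
  have hLH : L < H L := hgt L hLIoo
  obtain ⟨z, hz1, hz2⟩ := exists_between hLH
  have hzIoo : z ∈ Ioo u v := ⟨lt_trans hLIoo.1 hz1, lt_trans hz2 (hmap hLIoo).2⟩
  obtain ⟨x, hxIoo, hxz⟩ := hsurj hzIoo
  have hxL : x < L := by
    have : H x < H L := by rw [hxz]; exact hz2
    exact (hmono.lt_iff_lt hxIoo hLIoo).mp this
  obtain ⟨w, hwR, hxw⟩ := exists_lt_of_lt_csSup hRne hxL
  obtain ⟨k, rfl⟩ := hwR
  have hkIoo : H^[k] y ∈ Ioo u v := (hmap.iterate k) hy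
  have : H x < H (H^[k] y) := hmono hxIoo hkIoo hxw
  rw [hxz, ← Function.iterate_succ_apply' H k y] at this
  have hle : H^[k+1] y ≤ L := le_csSup hRbdd ⟨k+1, rfl⟩
  exact absurd (lt_of_lt_of_le this hle) (not_lt.mpr (le_of_lt hz1))

def Dns (S : Set ℝ) : Prop := ∀ x y : ℝ, x < y → ∃ a, a ∈ S ∧ x < a ∧ a < y

lemma ext_iso {A B : Set ℝ} (hU : A ∪ B = univ) (hD : Disjoint A B) (hA : Dns A) (hB : Dns B)
    {u v : ℝ} (huv : u < v) (e : ↥(A ∩ Ioo u v) ≃o ↥(B ∩ Ioo u v)) :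
    ∃ g : ℝ → ℝ, StrictMonoOn g (Ioo u v) ∧ MapsTo g (Ioo u v) (Ioo u v) ∧
      SurjOn g (Ioo u v) (Ioo u v) ∧ (∀ x ∈ Ioo u v, x ∈ A → g x ∈ B) ∧
      (∀ x ∈ Ioo u v, x ∈ B → g x ∈ A) ∧
      (∀ (a : ℝ) (ha : a ∈ A ∩ Ioo u v), g a = ↑(e ⟨a, ha⟩)) := by
  classical
  set S : ℝ → Set ℝ := fun x => {y | ∃ p : ↥(A ∩ Ioo u v), (p : ℝ) < x ∧ y = (e p : ℝ)} with hSdef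
  set g : ℝ → ℝ := fun x => sSup (S x) with hgdef
  have heB : ∀ p : ↥(A ∩ Ioo u v), (e p : ℝ) ∈ B ∩ Ioo u v := fun p => (e p).2
  have hSbdd : ∀ x, BddAbove (S x) := by
    intro x
    exact ⟨v, by rintro y ⟨p, hp, rfl⟩; exact le_of_lt (heB p).2.2⟩
  have hSne : ∀ x ∈ Ioo u v, (S x).Nonempty := by
    intro x hx
    obtain ⟨a, haA, hua, hax⟩ := hA u x hx.1
    exact ⟨(e ⟨a, ⟨haA, hua, lt_trans hax hx.2⟩⟩ : ℝ), ⟨⟨a, ⟨haA, hua, lt_trans hax hx.2⟩⟩, hax, rfl⟩⟩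
  -- monotonicity of e in coercion form
  have hemono : ∀ (p q : ↥(A ∩ Ioo u v)), (p : ℝ) < (q : ℝ) → (e p : ℝ) < (e q : ℝ) := by
    intro p q hpq
    have : p < q := Subtype.coe_lt_coe.mp hpq
    exact Subtype.coe_lt_coe.mpr (e.lt_iff_lt.mpr this)
  have hge : ∀ (x : ℝ) (p : ↥(A ∩ Ioo u v)), (p : ℝ) < x → (e p : ℝ) ≤ g x := by
    intro x p hpx
    exact le_csSup (hSbdd x) ⟨p, hpx, rfl⟩
  have hle : ∀ x ∈ Ioo u v, ∀ (q : ↥(A ∩ Ioo u v)), x ≤ (q : ℝ) → g x ≤ (e q : ℝ) := by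
    intro x hx q hxq
    refine csSup_le (hSne x hx) ?_
    rintro y ⟨p, hpx, rfl⟩
    exact le_of_lt (hemono p q (lt_of_lt_of_le hpx hxq))
  have hlow : ∀ x ∈ Ioo u v, u < g x := by
    intro x hx
    obtain ⟨y, ⟨p, hpx, rfl⟩⟩ := hSne x hx
    exact lt_of_lt_of_le (heB p).2.1 (hge x p hpx)
  have hhigh : ∀ x ∈ Ioo u v, g x < v := by
    intro x hx
    obtain ⟨a, haA, hxa, hav⟩ := hA x v hx.2
    have ha : a ∈ A ∩ Ioo u v := ⟨haA, lt_trans hx.1 hxa, hav⟩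
    exact lt_of_le_of_lt (hle x hx ⟨a, ha⟩ (le_of_lt hxa)) (heB ⟨a, ha⟩).2.2
  have hmap : MapsTo g (Ioo u v) (Ioo u v) := fun x hx => ⟨hlow x hx, hhigh x hx⟩
  have hmono : StrictMonoOn g (Ioo u v) := by
    intro x hx y hy hxy
    obtain ⟨a1, ha1A, hxa1, ha1y⟩ := hA x y hxy
    obtain ⟨a2, ha2A, ha12, ha2y⟩ := hA a1 y ha1y
    have h1 : a1 ∈ A ∩ Ioo u v := ⟨ha1A, lt_trans hx.1 hxa1, lt_trans ha1y hy.2⟩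
    have h2 : a2 ∈ A ∩ Ioo u v := ⟨ha2A, lt_trans h1.2.1 ha12, lt_trans ha2y hy.2⟩
    calc g x ≤ (e ⟨a1, h1⟩ : ℝ) := hle x hx ⟨a1, h1⟩ (le_of_lt hxa1)
      _ < (e ⟨a2, h2⟩ : ℝ) := hemono _ _ ha12
      _ ≤ g y := hge y ⟨a2, h2⟩ ha2y
  have hagree : ∀ (a : ℝ) (ha : a ∈ A ∩ Ioo u v), g a = ↑(e ⟨a, ha⟩) := by
    intro a ha
    have haIoo : a ∈ Ioo u v := ha.2
    have h1 : g a ≤ (e ⟨a, ha⟩ : ℝ) := hle a haIoo ⟨a, ha⟩ (le_refl a)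
    rcases lt_or_eq_of_le h1 with hlt | hEq
    · exfalso
      obtain ⟨b, hbB, hgb, hbe⟩ := hB (g a) (e ⟨a, ha⟩ : ℝ) hlt
      have hbIoo : b ∈ Ioo u v := ⟨lt_trans (hlow a haIoo) hgb, lt_trans hbe (heB ⟨a, ha⟩).2.2⟩
      set q : ↥(A ∩ Ioo u v) := e.symm ⟨b, ⟨hbB, hbIoo⟩⟩ with hq
      have heq : (e q : ℝ) = b := by rw [hq, e.apply_symm_apply]
      have hqa : (q : ℝ) < a := by
        by_contra hc
        push_neg at hc
        rcases lt_or_eq_of_le hc with h | h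
        · have := hemono ⟨a, ha⟩ q h
          rw [heq] at this
          exact absurd hbe (not_lt.mpr (le_of_lt this))
        · have : (e ⟨a, ha⟩ : ℝ) = b := by
            rw [← heq]
            congr 1
            exact congrArg e (Subtype.ext h)
          rw [this] at hbe; exact lt_irrefl b hbe
      have := hge a q hqa
      rw [heq] at this
      exact absurd hgb (not_lt.mpr this)
    · exact hEq
  have hsurj : SurjOn g (Ioo u v) (Ioo u v) := by
    intro z hz
    set P : Set ℝ := {a : ℝ | ∃ ha : a ∈ A ∩ Ioo u v, (e ⟨a, ha⟩ : ℝ) < z} with hPdef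
    have hPne : P.Nonempty := by
      obtain ⟨b, hbB, hub, hbz⟩ := hB u z hz.1
      have hbIoo : b ∈ Ioo u v := ⟨hub, lt_trans hbz hz.2⟩
      set q : ↥(A ∩ Ioo u v) := e.symm ⟨b, ⟨hbB, hbIoo⟩⟩ with hq
      refine ⟨(q : ℝ), q.2, ?_⟩
      have : (⟨(q : ℝ), q.2⟩ : ↥(A ∩ Ioo u v)) = q := rfl
      rw [this, hq, e.apply_symm_apply]
      exact hbz
    have hPbdd : BddAbove P := ⟨v, by rintro a ⟨ha, _⟩; exact le_of_lt ha.2.2⟩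
    set x := sSup P with hx
    obtain ⟨b'', hb''B, hzb'', hb''v⟩ := hB z v hz.2
    have hb''Ioo : b'' ∈ Ioo u v := ⟨lt_trans hz.1 hzb'', hb''v⟩
    set q'' : ↥(A ∩ Ioo u v) := e.symm ⟨b'', ⟨hb''B, hb''Ioo⟩⟩ with hq''
    have heq'' : (e q'' : ℝ) = b'' := by rw [hq'', e.apply_symm_apply]
    have hPle : ∀ a ∈ P, a < (q'' : ℝ) := by
      rintro a ⟨ha, hea⟩
      by_contra hc
      push_neg at hc
      rcases lt_or_eq_of_le hc with h | h
      · have := hemono q'' ⟨a, ha⟩ h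
        rw [heq''] at this
        exact absurd (lt_trans hea hzb'') (not_lt.mpr (le_of_lt this))
      · have : (e ⟨a, ha⟩ : ℝ) = b'' := by
          rw [← heq'']
          exact congrArg (fun t => ((e t : ↥(B ∩ Ioo u v)) : ℝ)) (Subtype.ext h.symm)
        rw [this] at hea
        exact absurd hzb'' (not_lt.mpr (le_of_lt hea))
    have hxIoo : x ∈ Ioo u v := by
      constructor
      · obtain ⟨a0, ha0⟩ := hPne
        exact lt_of_lt_of_le ha0.1.2.1 (le_csSup hPbdd ha0)
      · exact lt_of_le_of_lt (csSup_le hPne (fun a ha => le_of_lt (hPle a ha))) q''.2.2.2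
    refine ⟨x, hxIoo, ?_⟩
    have hgle : g x ≤ z := by
      refine csSup_le (hSne x hxIoo) ?_
      rintro y ⟨p, hpx, rfl⟩
      obtain ⟨a, haP, hpa⟩ := exists_lt_of_lt_csSup hPne hpx
      obtain ⟨ha, hea⟩ := haP
      exact le_of_lt (lt_trans (hemono p ⟨a, ha⟩ hpa) hea)
    rcases lt_or_eq_of_le hgle with hlt | hEq
    · exfalso
      obtain ⟨b, hbB, hgxb, hbz⟩ := hB (g x) z hlt
      have hbIoo : b ∈ Ioo u v := ⟨lt_trans (hlow x hxIoo) hgxb, lt_trans hbz hz.2⟩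
      set q : ↥(A ∩ Ioo u v) := e.symm ⟨b, ⟨hbB, hbIoo⟩⟩ with hq
      have heqq : (e q : ℝ) = b := by rw [hq, e.apply_symm_apply]
      have hqP : (q : ℝ) ∈ P := by
        refine ⟨q.2, ?_⟩
        have : (⟨(q : ℝ), q.2⟩ : ↥(A ∩ Ioo u v)) = q := rfl
        rw [this, heqq]
        exact hbz
      have hqx : (q : ℝ) ≤ x := le_csSup hPbdd hqP
      rcases lt_or_eq_of_le hqx with h | h
      · have := hge x q h
        rw [heqq] at this
        exact absurd hgxb (not_lt.mpr this)
      · have : g x = b := by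
          have h2 := hagree (q : ℝ) q.2
          rw [← h] at *
          rw [h2]
          have : (⟨(q : ℝ), q.2⟩ : ↥(A ∩ Ioo u v)) = q := rfl
          rw [this, heqq]
        rw [this] at hgxb
        exact lt_irrefl b hgxb
    · exact hEq
  have hcolA : ∀ x ∈ Ioo u v, x ∈ A → g x ∈ B := by
    intro x hx hxA
    rw [hagree x ⟨hxA, hx⟩]
    exact (heB ⟨x, ⟨hxA, hx⟩⟩).1
  have hcolB : ∀ x ∈ Ioo u v, x ∈ B → g x ∈ A := by
    intro x hx hxB
    have hgIoo : g x ∈ Ioo u v := hmap hx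
    have hmem : g x ∈ A ∪ B := by rw [hU]; exact mem_univ _
    rcases hmem with h | h
    · exact h
    · exfalso
      set q : ↥(A ∩ Ioo u v) := e.symm ⟨g x, ⟨h, hgIoo⟩⟩ with hq
      have heqq : (e q : ℝ) = g x := by rw [hq, e.apply_symm_apply]
      have hgq : g (q : ℝ) = g x := by
        rw [hagree (q : ℝ) q.2]
        have : (⟨(q : ℝ), q.2⟩ : ↥(A ∩ Ioo u v)) = q := rfl
        rw [this, heqq]
      have hqIoo : (q : ℝ) ∈ Ioo u v := q.2.2
      have : (q : ℝ) = x := hmono.injOn hqIoo hx hgq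
      have hxA : x ∈ A := this ▸ q.2.1
      exact Set.disjoint_left.mp hD hxA hxB
  exact ⟨g, hmono, hmap, hsurj, hcolA, hcolB, hagree⟩

lemma dichotomy {A B : Set ℝ} (hU : A ∪ B = univ) (hD : Disjoint A B)
    {u v : ℝ} {g : ℝ → ℝ}
    (hmono : StrictMonoOn g (Ioo u v)) (hmap : MapsTo g (Ioo u v) (Ioo u v))
    (hsurj : SurjOn g (Ioo u v) (Ioo u v))
    (hcolA : ∀ x ∈ Ioo u v, x ∈ A → g x ∈ B)
    (hcolB : ∀ x ∈ Ioo u v, x ∈ B → g x ∈ A) :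
    (∀ x ∈ Ioo u v, g x < x) ∨ (∀ x ∈ Ioo u v, x < g x) := by
  have hnofix : ∀ x ∈ Ioo u v, g x ≠ x := by
    intro x hx hEq
    have hmem : x ∈ A ∪ B := by rw [hU]; exact mem_univ _
    rcases hmem with h | h
    · have := hcolA x hx h
      rw [hEq] at this
      exact Set.disjoint_left.mp hD h this
    · have := hcolB x hx h
      rw [hEq] at this
      exact Set.disjoint_left.mp hD this h
  by_contra hcon
  push_neg at hcon
  obtain ⟨⟨M, hM, hM2⟩, ⟨m, hm, hm2⟩⟩ := hcon
  have hMgt : M < g M := lt_of_le_of_ne hM2 (Ne.symm (hnofix M hM))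
  have hmlt : g m < m := lt_of_le_of_ne hm2 (hnofix m hm)
  have hid_mono : StrictMonoOn (fun t : ℝ => t) (Ioo u v) := fun a _ b _ h => h
  have hid_map : MapsTo (fun t : ℝ => t) (Ioo u v) (Ioo u v) := fun a ha => ha
  have hid_surj : SurjOn (fun t : ℝ => t) (Ioo u v) (Ioo u v) := fun z hz => ⟨z, hz, rfl⟩
  rcases lt_trichotomy m M with h | h | h
  · -- m < M : φ := g, ψ := id
    obtain ⟨w, hw, hweq⟩ := cross_lemma hm hM h hmono hmap hsurj hid_mono
      (fun x hx => hx.1) hmlt hMgt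
    exact hnofix w hw hweq
  · rw [h] at hmlt; exact absurd hMgt (not_lt.mpr (le_of_lt hmlt))
  · -- M < m : φ := id, ψ := g
    obtain ⟨w, hw, hweq⟩ := cross_lemma hM hm h hid_mono hid_map hid_surj hmono
      (fun x hx => (hmap hx).1) hMgt hmlt
    exact hnofix w hw hweq.symm

lemma swapup {A B : Set ℝ} (hU : A ∪ B = univ) (hD : Disjoint A B) (hA : Dns A) (hB : Dns B)
    {u v : ℝ} (huv : u < v)
    (hiso : Nonempty (↥(A ∩ Ioo u v) ≃o ↥(B ∩ Ioo u v))) :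
    ∃ G : ℝ → ℝ, StrictMonoOn G (Ioo u v) ∧ MapsTo G (Ioo u v) (Ioo u v) ∧
      SurjOn G (Ioo u v) (Ioo u v) ∧ (∀ x ∈ Ioo u v, x ∈ A → G x ∈ B) ∧
      (∀ x ∈ Ioo u v, x ∈ B → G x ∈ A) ∧ (∀ x ∈ Ioo u v, x < G x) := by
  obtain ⟨e⟩ := hiso
  obtain ⟨g, hmono, hmap, hsurj, hcolA, hcolB, hagree⟩ := ext_iso hU hD hA hB huv e
  rcases dichotomy hU hD hmono hmap hsurj hcolA hcolB with hdown | hup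
  · -- g < id everywhere; use the extension of e.symm
    have hU' : B ∪ A = univ := by rw [union_comm]; exact hU
    obtain ⟨g', hmono', hmap', hsurj', hcolB', hcolA', hagree'⟩ :=
      ext_iso hU' hD.symm hB hA huv e.symm
    rcases dichotomy hU' hD.symm hmono' hmap' hsurj' hcolB' hcolA' with hdown' | hup'
    · exfalso
      obtain ⟨a, haA, hua, hav⟩ := hA u v huv
      have ha : a ∈ A ∩ Ioo u v := ⟨haA, hua, hav⟩
      set b : ℝ := (e ⟨a, ha⟩ : ℝ) with hb
      have hbmem : b ∈ B ∩ Ioo u v := (e ⟨a, ha⟩).2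
      have hba : b < a := by
        have := hdown a ⟨hua, hav⟩
        rw [hagree a ha] at this
        exact this
      have hg'b : g' b = a := by
        rw [hagree' b hbmem]
        have h1 : (⟨b, hbmem⟩ : ↥(B ∩ Ioo u v)) = e ⟨a, ha⟩ := Subtype.ext rfl
        rw [h1, e.symm_apply_apply]
      have := hdown' b hbmem.2
      rw [hg'b] at this
      exact absurd hba (not_lt.mpr (le_of_lt this))
    · exact ⟨g', hmono', hmap', hsurj', hcolA', hcolB', hup'⟩
  · exact ⟨g, hmono, hmap, hsurj, hcolA, hcolB, hup⟩

lemma keybound {A B : Set ℝ} (hU : A ∪ B = univ) (hD : Disjoint A B) (hA : Dns A) (hB : Dns B)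
    {F : ℝ → ℝ}
    (hFmono : StrictMonoOn F (Ioo 0 1))
    (hFcolA : ∀ x ∈ Ioo (0:ℝ) 1, x ∈ A → F x ∈ B)
    (hFcolB : ∀ x ∈ Ioo (0:ℝ) 1, x ∈ B → F x ∈ A)
    (hFgt : ∀ x ∈ Ioo (0:ℝ) 1, x < F x)
    {u v : ℝ} (hu : u ∈ Ioo (0:ℝ) 1) (hv : v ∈ Ioo (0:ℝ) 1) (huv : u < v)
    (hiso : Nonempty (↥(A ∩ Ioo u v) ≃o ↥(B ∩ Ioo u v))) :
    ∀ y ∈ Ioo u v, v ≤ F y := by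
  have hsub : Ioo u v ⊆ Ioo 0 1 := fun x hx => ⟨lt_trans hu.1 hx.1, lt_trans hx.2 hv.2⟩
  obtain ⟨G, hGmono, hGmap, hGsurj, hGcolA, hGcolB, hGgt⟩ := swapup hU hD hA hB huv hiso
  set H : ℝ → ℝ := G ∘ G with hHdef
  have hHmono : StrictMonoOn H (Ioo u v) := by
    intro a ha b hb hab
    exact hGmono (hGmap ha) (hGmap hb) (hGmono ha hb hab)
  have hHmap : MapsTo H (Ioo u v) (Ioo u v) := fun x hx => hGmap (hGmap hx)
  have hHsurj : SurjOn H (Ioo u v) (Ioo u v) := by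
    intro z hz
    obtain ⟨y, hy, hyz⟩ := hGsurj hz
    obtain ⟨x, hx, hxy⟩ := hGsurj hy
    exact ⟨x, hx, by simp only [hHdef, Function.comp_apply, hxy, hyz]⟩
  have hHgt : ∀ x ∈ Ioo u v, x < H x := by
    intro x hx
    exact lt_trans (hGgt x hx) (hGgt _ (hGmap hx))
  have hHcolA : ∀ x ∈ Ioo u v, x ∈ A → H x ∈ A := by
    intro x hx hxA
    exact hGcolB _ (hGmap hx) (hGcolA x hx hxA)
  have hHcolB : ∀ x ∈ Ioo u v, x ∈ B → H x ∈ B := by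
    intro x hx hxB
    exact hGcolA _ (hGmap hx) (hGcolB x hx hxB)
  have hiterA : ∀ k, ∀ x ∈ Ioo u v, x ∈ A → H^[k] x ∈ A := fun k => pred_iterate hHmap hHcolA k
  have hiterB : ∀ k, ∀ x ∈ Ioo u v, x ∈ B → H^[k] x ∈ B := fun k => pred_iterate hHmap hHcolB k
  -- no coincidence of H^[k] and F
  have hnocoin : ∀ k, ∀ w ∈ Ioo u v, H^[k] w ≠ F w := by
    intro k w hw hEq
    have hw01 : w ∈ Ioo (0:ℝ) 1 := hsub hw
    have hmem : w ∈ A ∪ B := by rw [hU]; exact mem_univ _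
    rcases hmem with h | h
    · have h1 : H^[k] w ∈ A := hiterA k w hw h
      have h2 : F w ∈ B := hFcolA w hw01 h
      rw [hEq] at h1
      exact Set.disjoint_left.mp hD h1 h2
    · have h1 : H^[k] w ∈ B := hiterB k w hw h
      have h2 : F w ∈ A := hFcolB w hw01 h
      rw [hEq] at h1
      exact Set.disjoint_left.mp hD h2 h1
  intro y hy
  have hbelow : ∀ k, H^[k] y < F y := by
    intro k
    by_contra hc
    push_neg at hc
    rcases lt_or_eq_of_le hc with hlt | hEq
    · -- F y < H^[k] y : crossing
      have hFu : u < F u := hFgt u hu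
      have htmem : u < min (F u) v := lt_min hFu huv
      set t : ℝ := (u + min (F u) v) / 2 with ht
      have htIoo : t ∈ Ioo u v := by
        constructor
        · rw [ht]; linarith
        · rw [ht]
          have : min (F u) v ≤ v := min_le_right _ _
          linarith
      have htFu : t < F u := by
        rw [ht]
        have : min (F u) v ≤ F u := min_le_left _ _
        linarith
      obtain ⟨w₁, hw₁, hw₁t⟩ := surjOn_iterate hGsurj 0 (htIoo) |> fun _ => surjOn_iterate hHsurj k htIoo
      have hsign1 : H^[k] w₁ < F w₁ := by
        rw [hw₁t]
        exact lt_trans htFu (hFmono hu (hsub hw₁) hw₁.1)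
      have hw₁y : w₁ < y := by
        have h3 : H^[k] w₁ < H^[k] y := by
          rw [hw₁t]
          exact lt_trans (lt_trans htFu (hFmono hu (hsub hy) hy.1)) hlt
        exact ((strictMonoOn_iterate hHmono hHmap k).lt_iff_lt hw₁ hy).mp h3
      obtain ⟨w, hw, hweq⟩ := cross_lemma hw₁ hy hw₁y
        (strictMonoOn_iterate hHmono hHmap k) (hHmap.iterate k) (surjOn_iterate hHsurj k)
        (hFmono.mono hsub)
        (fun x hx => lt_trans hx.1 (hFgt x (hsub hx)))
        hsign1 hlt
      exact hnocoin k w hw hweq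
    · exact hnocoin k y hy hEq.symm
  by_contra hc
  push_neg at hc
  obtain ⟨k, hk⟩ := orbit_lemma hHmono hHmap hHsurj hHgt y hy (F y) hc
  exact absurd (hbelow k) (not_lt.mpr (le_of_lt hk))

theorem main_thm
    (A B : Set ℝ) (hUnion : A ∪ B = univ) (hDisj : Disjoint A B) :
    ∃ I : Set ℝ, (∃ a b : ℝ, I = Ioo a b) ∧
      ¬ Nonempty ((A ∩ I : Set ℝ) ≃o (B ∩ I : Set ℝ)) := by
  by_cases hA : Dns A
  · by_cases hB : Dns B
    · -- both dense : derive a contradiction from assuming all intervals have isos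
      by_contra hcon
      push_neg at hcon
      have hiso : ∀ u v : ℝ, u < v →
          Nonempty ((A ∩ Ioo u v : Set ℝ) ≃o (B ∩ Ioo u v : Set ℝ)) := by
        intro u v _
        exact hcon (Ioo u v) ⟨u, v, rfl⟩
      have h01 : (0:ℝ) < 1 := one_pos
      obtain ⟨F, hFmono, hFmap, hFsurj, hFcolA, hFcolB, hFgt⟩ :=
        swapup hUnion hDisj hA hB h01 (hiso 0 1 h01)
      set u₀ : ℝ := 1/4 with hu₀def
      have hu₀ : u₀ ∈ Ioo (0:ℝ) 1 := by constructor <;> norm_num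
      have hFu₀ : F u₀ ∈ Ioo (0:ℝ) 1 := hFmap hu₀
      have hu₀Fu₀ : u₀ < F u₀ := hFgt u₀ hu₀
      set y₀ : ℝ := (u₀ + min (F u₀) (1/2)) / 2 with hy₀def
      have hmingt : u₀ < min (F u₀) (1/2) := lt_min hu₀Fu₀ (by norm_num)
      have hy₀gt : u₀ < y₀ := by rw [hy₀def]; linarith
      have hy₀lt : y₀ < min (F u₀) (1/2) := by rw [hy₀def]; linarith
      have hy₀half : y₀ < 1/2 := lt_of_lt_of_le hy₀lt (min_le_right _ _)
      have hy₀01 : y₀ ∈ Ioo (0:ℝ) 1 := ⟨lt_trans hu₀.1 hy₀gt, by linarith⟩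
      set v₀ : ℝ := max (F u₀) (1/2) with hv₀def
      have hv₀1 : v₀ < 1 := max_lt hFu₀.2 (by norm_num)
      have key : ∀ v', v₀ < v' → v' < 1 → v' ≤ F y₀ := by
        intro v' h1 h2
        have hu₀v' : u₀ < v' := by
          have : u₀ < v₀ := lt_of_lt_of_le (by rw [hu₀def]; norm_num : u₀ < (1:ℝ)/2) (le_max_right _ _)
          exact lt_trans this h1
        have hv' : v' ∈ Ioo (0:ℝ) 1 := ⟨lt_trans hu₀.1 hu₀v', h2⟩
        have hy₀mem : y₀ ∈ Ioo u₀ v' := by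
          refine ⟨hy₀gt, ?_⟩
          have : y₀ < v₀ := lt_of_lt_of_le hy₀half (le_max_right _ _)
          exact lt_trans this h1
        exact keybound hUnion hDisj hA hB hFmono hFcolA hFcolB hFgt hu₀ hv' hu₀v'
          (hiso u₀ v' hu₀v') y₀ hy₀mem
      have hFy₀ : F y₀ < 1 := (hFmap hy₀01).2
      set c : ℝ := max v₀ (F y₀) with hcdef
      have hc1 : c < 1 := max_lt hv₀1 hFy₀
      have hvc : v₀ ≤ c := le_max_left _ _
      have h1 : v₀ < (c+1)/2 := by linarith
      have h2 : (c+1)/2 < 1 := by linarith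
      have h3 := key ((c+1)/2) h1 h2
      have h4 : F y₀ ≤ c := le_max_right _ _
      linarith
    · -- B is not dense
      rw [Dns] at hB
      push_neg at hB
      obtain ⟨x, y, hxy, hemp⟩ := hB
      refine ⟨Ioo x y, ⟨x, y, rfl⟩, ?_⟩
      rintro ⟨e⟩
      obtain ⟨a, haA, hxa, hay⟩ := hA x y hxy
      have hb := (e ⟨a, ⟨haA, hxa, hay⟩⟩).2
      exact absurd hb.2.2 (not_lt.mpr (hemp _ hb.1 hb.2.1))
  · -- A is not dense
    rw [Dns] at hA
    push_neg at hA
    obtain ⟨x, y, hxy, hemp⟩ := hA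
    refine ⟨Ioo x y, ⟨x, y, rfl⟩, ?_⟩
    rintro ⟨e⟩
    have hm : (x+y)/2 ∈ Ioo x y := ⟨by linarith, by linarith⟩
    have hmB : (x+y)/2 ∈ B := by
      have : (x+y)/2 ∈ A ∪ B := by rw [hUnion]; exact mem_univ _
      rcases this with h | h
      · exact absurd hm.2 (not_lt.mpr (hemp _ h hm.1))
      · exact h
    have ha := (e.symm ⟨(x+y)/2, ⟨hmB, hm⟩⟩).2
    exact absurd ha.2.2 (not_lt.mpr (hemp _ ha.1 ha.2.1))


/-- If `ℝ = A ∪ B` is a partition of `ℝ` into two disjoint sets, then there is an open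
interval `I` such that the suborder `A ∩ I` is not order-isomorphic to `B ∩ I`. -/
theorem no_partition_of_reals_into_everywhere_isomorphic_sets
    (A B : Set ℝ) (hUnion : A ∪ B = univ) (hDisj : Disjoint A B) :
    ∃ I : Set ℝ, IsOpenIntervalR I ∧
      ¬ Nonempty ((A ∩ I : Set ℝ) ≃o (B ∩ I : Set ℝ)) := by
  obtain ⟨I, ⟨a, b, hI⟩, h⟩ := main_thm A B hUnion hDisj
  exact ⟨I, Or.inl ⟨a, b, hI⟩, h⟩
end

section
/- There exists a partition of the irrationals ℝ \ ℚ = A ∪ B into two disjoint sets such that for every open interval I of ℝ, A ∩ I is order-isomorphic to B ∩ I. -/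
open Set

namespace IrrPart

lemma two_zpow_ne (k : ℤ) : ((2:ℝ) ^ k) ≠ 0 := zpow_ne_zero k (by norm_num)

lemma zpow_cancel (k : ℤ) : (2:ℝ) ^ (-k) * 2 ^ k = 1 := by
  rw [← zpow_add₀ (by norm_num : (2:ℝ) ≠ 0)]; simp

lemma zpow_mul_zpow (l k : ℤ) : (2:ℝ) ^ l * 2 ^ k = 2 ^ (l + k) := by
  rw [← zpow_add₀ (by norm_num : (2:ℝ) ≠ 0)]

lemma rat_zpow_cast (k : ℤ) : (((2:ℚ) ^ k : ℚ) : ℝ) = (2:ℝ) ^ k := by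
  push_cast; ring

/-- Orbit relation: `y = 2^k * x + q`. -/
def orbRel (x y : ℝ) : Prop := ∃ (k : ℤ) (q : ℚ), y = 2 ^ k * x + (q : ℝ)

lemma orbRel_refl (x : ℝ) : orbRel x x := ⟨0, 0, by norm_num⟩

lemma orbRel_symm {x y : ℝ} (h : orbRel x y) : orbRel y x := by
  obtain ⟨k, q, rfl⟩ := h
  refine ⟨-k, -((2:ℚ) ^ (-k) * q), ?_⟩
  push_cast
  rw [mul_add, ← mul_assoc, zpow_cancel]
  ring

lemma orbRel_trans {x y z : ℝ} (h : orbRel x y) (h' : orbRel y z) : orbRel x z := by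
  obtain ⟨k, q, rfl⟩ := h
  obtain ⟨l, r, rfl⟩ := h'
  refine ⟨l + k, (2:ℚ) ^ l * q + r, ?_⟩
  push_cast
  rw [mul_add, ← mul_assoc, zpow_mul_zpow]
  ring

lemma irr_affine (k : ℤ) (q : ℚ) {x : ℝ} (hx : Irrational x) :
    Irrational ((2:ℝ) ^ k * x + (q : ℝ)) := by
  have h1 : Irrational (((2:ℚ) ^ k : ℚ) * x) :=
    hx.ratCast_mul (zpow_ne_zero k (by norm_num))
  rw [rat_zpow_cast] at h1
  exact h1.add_ratCast q

lemma orbRel_irr {x y : ℝ} (h : orbRel x y) (hx : Irrational x) : Irrational y := by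
  obtain ⟨k, q, rfl⟩ := h; exact irr_affine k q hx

def orbSetoid : Setoid ℝ := ⟨orbRel, ⟨orbRel_refl, orbRel_symm, orbRel_trans⟩⟩

noncomputable def rep (x : ℝ) : ℝ := Quotient.out (Quotient.mk orbSetoid x)

lemma rep_rel (x : ℝ) : orbRel (rep x) x := Quotient.mk_out (s := orbSetoid) x

lemma rep_eq_of_rel {x y : ℝ} (h : orbRel x y) : rep x = rep y := by
  unfold rep
  rw [Quotient.sound (s := orbSetoid) h]

lemma rep_irr {x : ℝ} (hx : Irrational x) : Irrational (rep x) :=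
  orbRel_irr (orbRel_symm (rep_rel x)) hx

/-- uniqueness of the exponent over an irrational base -/
lemma exp_unique {x : ℝ} (hx : Irrational x) {k k' : ℤ} {q q' : ℚ}
    (h : (2:ℝ) ^ k * x + (q : ℝ) = 2 ^ k' * x + (q' : ℝ)) : k = k' := by
  by_contra hkk
  have hner : ((2:ℝ) ^ k - 2 ^ k') ≠ 0 := by
    refine sub_ne_zero.2 (fun he => hkk ?_)
    exact zpow_right_injective₀ (by norm_num) (by norm_num) he
  apply hx
  refine ⟨(q' - q) / ((2:ℚ) ^ k - 2 ^ k'), ?_⟩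
  have hcast : (((q' - q) / ((2:ℚ) ^ k - 2 ^ k') : ℚ) : ℝ)
      = ((q' : ℝ) - q) / ((2:ℝ) ^ k - 2 ^ k') := by
    push_cast
    ring
  rw [hcast, div_eq_iff hner]
  linarith

open Classical in
noncomputable def kOf (x y : ℝ) : ℤ := if h : orbRel x y then h.choose else 0

lemma kOf_spec {x y : ℝ} (h : orbRel x y) : ∃ q : ℚ, y = 2 ^ (kOf x y) * x + (q : ℝ) := by
  unfold kOf
  rw [dif_pos h]
  exact h.choose_spec

lemma kOf_eq {x y : ℝ} (hx : Irrational x) (k : ℤ) (q : ℚ)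
    (hy : y = 2 ^ k * x + (q : ℝ)) : kOf x y = k := by
  have h : orbRel x y := ⟨k, q, hy⟩
  obtain ⟨q₀, hq₀⟩ := kOf_spec h
  exact exp_unique hx (by rw [← hq₀, hy])

noncomputable def col (x : ℝ) : ℤ := kOf (rep x) x

lemma col_flip {x : ℝ} (hx : Irrational x) (k : ℤ) (q : ℚ) :
    col (2 ^ k * x + (q : ℝ)) = col x + k := by
  have hrel : orbRel x (2 ^ k * x + (q : ℝ)) := ⟨k, q, rfl⟩
  have hrep : rep (2 ^ k * x + (q : ℝ)) = rep x := (rep_eq_of_rel hrel).symm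
  obtain ⟨q₀, hq₀⟩ := kOf_spec (rep_rel x)
  have hrepirr : Irrational (rep x) := rep_irr hx
  have hform : 2 ^ k * x + (q : ℝ)
      = 2 ^ (col x + k) * rep x + (((2:ℚ) ^ k * q₀ + q : ℚ) : ℝ) := by
    conv_lhs => rw [hq₀]
    push_cast
    rw [mul_add, ← mul_assoc, zpow_mul_zpow, show col x = kOf (rep x) x from rfl]
    ring_nf
  unfold col
  rw [hrep]
  exact kOf_eq hrepirr _ _ hform

/-- the two sets -/
def A : Set ℝ := {x | Irrational x ∧ Even (col x)}
def B : Set ℝ := {x | Irrational x ∧ ¬ Even (col x)}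

lemma parity_flip {n : ℤ} {k : ℤ} (hk : Odd k) : Even (n + k) ↔ ¬ Even n := by
  rw [Int.even_add]
  have : ¬ Even k := (Int.not_even_iff_odd).2 hk
  tauto

end IrrPart
namespace IrrPart
open Set

/-- 3-piece swap map of the interval `[u,v)`. -/
noncomputable def pm (u v x : ℝ) : ℝ :=
  if x < u + (v - u) / 2 then u / 2 + x / 2
  else if x < u + 5 * (v - u) / 6 then 2 * x - u - 3 * (v - u) / 4
  else v / 2 + x / 2

/-- inverse of `pm u v`. -/
noncomputable def pinv (u v y : ℝ) : ℝ :=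
  if y < u + (v - u) / 4 then 2 * y - u
  else if y < u + 11 * (v - u) / 12 then y / 2 + (u + 3 * (v - u) / 4) / 2
  else 2 * y - v

lemma pm_mem {u v x : ℝ} (huv : u < v) (h1 : u ≤ x) (h2 : x < v) :
    u ≤ pm u v x ∧ pm u v x < v := by
  unfold pm; split_ifs <;> constructor <;> linarith

lemma pm_mono {u v : ℝ} (huv : u < v) {x y : ℝ}
    (hx1 : u ≤ x) (hx2 : x < v) (hy1 : u ≤ y) (hy2 : y < v) (hxy : x < y) :
    pm u v x < pm u v y := by
  unfold pm; split_ifs <;> linarith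

lemma pinv_mem {u v y : ℝ} (huv : u < v) (h1 : u ≤ y) (h2 : y < v) :
    u ≤ pinv u v y ∧ pinv u v y < v := by
  unfold pinv; split_ifs <;> constructor <;> linarith

lemma pm_pinv {u v y : ℝ} (huv : u < v) (h1 : u ≤ y) (h2 : y < v) :
    pm u v (pinv u v y) = y := by
  unfold pinv pm
  split_ifs <;> linarith

/-- `pm` over a rational interval is an odd-slope rational-affine map, pointwise. -/
lemma pm_form (u v : ℚ) (x : ℝ) :
    ∃ (k : ℤ) (q : ℚ), Odd k ∧ pm (u:ℝ) (v:ℝ) x = 2 ^ k * x + (q : ℝ) := by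
  unfold pm
  split_ifs with h1 h2
  · exact ⟨-1, u / 2, ⟨-1, by ring⟩, by push_cast; rw [zpow_neg_one]; ring⟩
  · exact ⟨1, -u - 3 * (v - u) / 4, ⟨0, by ring⟩, by push_cast; rw [zpow_one]; ring⟩
  · exact ⟨-1, v / 2, ⟨-1, by ring⟩, by push_cast; rw [zpow_neg_one]; ring⟩

lemma pinv_form (u v : ℚ) (y : ℝ) :
    ∃ (k : ℤ) (q : ℚ), Odd k ∧ pinv (u:ℝ) (v:ℝ) y = 2 ^ k * y + (q : ℝ) := by
  unfold pinv
  split_ifs with h1 h2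
  · exact ⟨1, -u, ⟨0, by ring⟩, by push_cast; rw [zpow_one]; ring⟩
  · exact ⟨-1, (u + 3 * (v - u) / 4) / 2, ⟨-1, by ring⟩, by push_cast; rw [zpow_neg_one]; ring⟩
  · exact ⟨1, -v, ⟨0, by ring⟩, by push_cast; rw [zpow_one]; ring⟩

end IrrPart
namespace IrrPart
open Set

section Seq

open Classical in
/-- glued swap map along a ℤ-indexed rational partition -/
noncomputable def G (t : ℤ → ℚ) (x : ℝ) : ℝ :=
  if h : ∃ n : ℤ, ((t n : ℝ) ≤ x ∧ x < (t (n + 1) : ℝ)) then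
    pm ((t h.choose : ℝ)) ((t (h.choose + 1) : ℝ)) x
  else x

lemma idx_unique {t : ℤ → ℚ} (hm : StrictMono fun n => ((t n : ℝ))) {x : ℝ} {n m : ℤ}
    (hn : (t n : ℝ) ≤ x ∧ x < (t (n + 1) : ℝ))
    (hmm : (t m : ℝ) ≤ x ∧ x < (t (m + 1) : ℝ)) : n = m := by
  by_contra hne
  rcases lt_or_gt_of_ne hne with h | h
  · have : (n + 1 : ℤ) ≤ m := by omega
    have := hm.monotone (show (n+1:ℤ) ≤ m from this)
    linarith [hn.2, hmm.1]
  · have : (m + 1 : ℤ) ≤ n := by omega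
    have := hm.monotone (show (m+1:ℤ) ≤ n from this)
    linarith [hn.1, hmm.2]

lemma G_eq {t : ℤ → ℚ} (hm : StrictMono fun n => ((t n : ℝ))) {x : ℝ} {n : ℤ}
    (hn : (t n : ℝ) ≤ x ∧ x < (t (n + 1) : ℝ)) :
    G t x = pm ((t n : ℝ)) ((t (n + 1) : ℝ)) x := by
  have hex : ∃ n : ℤ, ((t n : ℝ) ≤ x ∧ x < (t (n + 1) : ℝ)) := ⟨n, hn⟩
  unfold G
  rw [dif_pos hex]
  have := idx_unique hm hex.choose_spec hn
  rw [this]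

lemma tlt {t : ℤ → ℚ} (hm : StrictMono fun n => ((t n : ℝ))) (n : ℤ) : (t n : ℝ) < (t (n + 1) : ℝ) := hm (by omega)

/-- main lemma: a ℤ-indexed partition of `I` by rationals yields the iso. -/
lemma iso_of_seq (t : ℤ → ℚ) (hm : StrictMono fun n => ((t n : ℝ))) (I : Set ℝ)
    (hcov : ∀ x : ℝ, x ∈ I ↔ ∃ n : ℤ, ((t n : ℝ) ≤ x ∧ x < (t (n + 1) : ℝ))) :
    Nonempty ((A ∩ I : Set ℝ) ≃o (B ∩ I : Set ℝ)) := by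
  -- G maps I to I
  have hGI : ∀ x ∈ I, G t x ∈ I := by
    intro x hx
    obtain ⟨n, hn⟩ := (hcov x).1 hx
    rw [G_eq hm hn]
    have := pm_mem (tlt hm n) hn.1 hn.2
    exact (hcov _).2 ⟨n, this.1, this.2⟩
  -- strict mono on I
  have hGmono : StrictMonoOn (G t) I := by
    intro x hx y hy hxy
    obtain ⟨n, hn⟩ := (hcov x).1 hx
    obtain ⟨m, hmm⟩ := (hcov y).1 hy
    rw [G_eq hm hn, G_eq hm hmm]
    rcases eq_or_ne n m with rfl | hne
    · exact pm_mono (tlt hm n) hn.1 hn.2 hmm.1 hmm.2 hxy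
    · have hnm : n < m := by
        by_contra hge
        have : m + 1 ≤ n := by omega
        have := hm.monotone this
        linarith [hn.1, hmm.2]
      have h1 : pm ((t n : ℝ)) ((t (n+1) : ℝ)) x < (t (n+1) : ℝ) :=
        (pm_mem (tlt hm n) hn.1 hn.2).2
      have h2 : ((t (n+1) : ℝ)) ≤ (t m : ℝ) := hm.monotone (by omega)
      have h3 : ((t m : ℝ)) ≤ pm ((t m : ℝ)) ((t (m+1) : ℝ)) y :=
        (pm_mem (tlt hm m) hmm.1 hmm.2).1
      linarith
  -- image of A ∩ I is B ∩ I
  have himg : G t '' (A ∩ I) = B ∩ I := by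
    apply Set.Subset.antisymm
    · rintro _ ⟨x, ⟨⟨hxirr, hxeven⟩, hxI⟩, rfl⟩
      obtain ⟨n, hn⟩ := (hcov x).1 hxI
      rw [G_eq hm hn]
      obtain ⟨k, q, hk, hform⟩ := pm_form (t n) (t (n+1)) x
      rw [hform]
      refine ⟨⟨irr_affine k q hxirr, ?_⟩, ?_⟩
      · rw [col_flip hxirr k q]
        rw [parity_flip hk]
        exact fun hc => hc hxeven
      · rw [← hform, ← G_eq hm hn]
        exact hGI x hxI
    · rintro y ⟨⟨hyirr, hyodd⟩, hyI⟩
      obtain ⟨n, hn⟩ := (hcov y).1 hyI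
      set x := pinv ((t n : ℝ)) ((t (n+1) : ℝ)) y with hxdef
      have hxmem := pinv_mem (tlt hm n) hn.1 hn.2
      have hxI : x ∈ I := (hcov x).2 ⟨n, hxmem.1, hxmem.2⟩
      obtain ⟨k, q, hk, hform⟩ := pinv_form (t n) (t (n+1)) y
      have hxirr : Irrational x := by rw [hxdef, hform]; exact irr_affine k q hyirr
      have hxeven : Even (col x) := by
        rw [hxdef, hform, col_flip hyirr k q, parity_flip hk]
        exact hyodd
      refine ⟨x, ⟨⟨hxirr, hxeven⟩, hxI⟩, ?_⟩
      rw [G_eq hm ⟨hxmem.1, hxmem.2⟩]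
      exact pm_pinv (tlt hm n) hn.1 hn.2
  have hsub : (A ∩ I : Set ℝ) ⊆ I := inter_subset_right
  have hiso := (hGmono.mono hsub).orderIso (G t) _
  exact ⟨hiso.trans (OrderIso.setCongr _ _ himg)⟩

end Seq
end IrrPart
namespace IrrPart
open Set

/-! ### glued ℤ-indexed sequences -/

noncomputable def glueSeq (u d : ℕ → ℚ) : ℤ → ℚ :=
  fun n => if 0 ≤ n then u n.toNat else d (-n).toNat

lemma glueSeq_nonneg (u d : ℕ → ℚ) {n : ℤ} (h : 0 ≤ n) : glueSeq u d n = u n.toNat := by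
  simp [glueSeq, h]

lemma glueSeq_neg (u d : ℕ → ℚ) {n : ℤ} (h : n < 0) : glueSeq u d n = d (-n).toNat := by
  simp [glueSeq, not_le.2 h, not_le_of_gt h]

lemma glue_mono (u d : ℕ → ℚ) (h0 : d 0 = u 0)
    (hu : ∀ k, (u k : ℝ) < u (k + 1)) (hd : ∀ k, (d (k + 1) : ℝ) < d k) :
    StrictMono fun n => ((glueSeq u d n : ℝ)) := by
  apply strictMono_int_of_lt_succ
  intro n
  rcases le_or_gt 0 n with hn | hn
  · rw [glueSeq_nonneg u d hn, glueSeq_nonneg u d (by omega)]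
    have : (n + 1).toNat = n.toNat + 1 := by omega
    rw [this]
    exact hu n.toNat
  · rcases eq_or_lt_of_le (show n ≤ -1 by omega) with he | hl
    · subst he
      rw [glueSeq_neg u d (by omega), glueSeq_nonneg u d (by omega)]
      simpa [h0] using hd 0
    · rw [glueSeq_neg u d hn, glueSeq_neg u d (by omega)]
      have h1 : (-n).toNat = ((-(n+1)).toNat) + 1 := by omega
      rw [h1]
      exact hd _

lemma glue_cover (u d : ℕ → ℚ) (h0 : d 0 = u 0) (I : Set ℝ)
    (hc : ∀ x : ℝ, x ∈ I ↔
      ((∃ k : ℕ, (u k : ℝ) ≤ x ∧ x < u (k + 1)) ∨ (∃ k : ℕ, (d (k + 1) : ℝ) ≤ x ∧ x < d k))) :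
    ∀ x : ℝ, x ∈ I ↔ ∃ n : ℤ, ((glueSeq u d n : ℝ) ≤ x ∧ x < (glueSeq u d (n + 1) : ℝ)) := by
  intro x
  rw [hc x]
  constructor
  · rintro (⟨k, hk1, hk2⟩ | ⟨k, hk1, hk2⟩)
    · refine ⟨(k : ℤ), ?_, ?_⟩
      · rw [glueSeq_nonneg u d (by positivity)]; simpa using hk1
      · rw [glueSeq_nonneg u d (by positivity)]
        have : ((k:ℤ) + 1).toNat = k + 1 := by omega
        rw [this]; exact hk2
    · refine ⟨-(k + 1 : ℤ), ?_, ?_⟩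
      · rw [glueSeq_neg u d (by omega)]
        have : (-(-(k+1:ℤ))).toNat = k + 1 := by omega
        rw [this]; exact hk1
      · rcases Nat.eq_zero_or_pos k with rfl | hk
        · have hidx : (-(((0:ℕ):ℤ) + 1) + 1) = 0 := by norm_num
          rw [hidx, glueSeq_nonneg u d le_rfl]
          simpa [← h0] using hk2
        · rw [glueSeq_neg u d (by omega)]
          have : (-(-(k+1:ℤ)+1)).toNat = k := by omega
          rw [this]; exact hk2
  · rintro ⟨n, hn1, hn2⟩
    rcases le_or_gt 0 n with hn | hn
    · left
      refine ⟨n.toNat, ?_, ?_⟩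
      · rw [glueSeq_nonneg u d hn] at hn1; exact hn1
      · rw [glueSeq_nonneg u d (by omega), show (n+1).toNat = n.toNat + 1 by omega] at hn2
        exact hn2
    · right
      refine ⟨(-(n+1)).toNat, ?_, ?_⟩
      · rw [glueSeq_neg u d hn] at hn1
        rw [show (-(n+1)).toNat + 1 = (-n).toNat by omega]
        exact hn1
      · rcases eq_or_lt_of_le (show n ≤ -1 by omega) with he | hl
        · subst he
          rw [show ((-1:ℤ)+1) = 0 by ring, glueSeq_nonneg u d le_rfl] at hn2
          have hidx : ((-(-1 + 1):ℤ)).toNat = 0 := by omega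
          rw [hidx]
          simpa [h0] using hn2
        · rw [glueSeq_neg u d (by omega)] at hn2
          exact hn2

/-! ### the four kinds of monotone rational sequences -/

open Classical in
noncomputable def upb (b : ℝ) (c : ℚ) : ℕ → ℚ
  | 0 => c
  | k+1 => if h : ((upb b c k : ℚ) : ℝ) < b then
      (exists_rat_btwn (show max ((upb b c k : ℚ) : ℝ) (b - 1/((k:ℝ)+1)) < b from
        max_lt h (sub_lt_self b (by positivity)))).choose
    else upb b c k + 1

lemma upb_lt {b : ℝ} {c : ℚ} (hc : (c:ℝ) < b) : ∀ k, (upb b c k : ℝ) < b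
  | 0 => hc
  | (k+1) => by
      rw [upb, dif_pos (upb_lt hc k)]
      generalize_proofs hpf
      exact hpf.choose_spec.2

lemma upb_succ {b : ℝ} {c : ℚ} (hc : (c:ℝ) < b) (k : ℕ) :
    (upb b c k : ℝ) < upb b c (k+1) := by
  rw [upb, dif_pos (upb_lt hc k)]
  generalize_proofs hpf
  exact lt_of_le_of_lt (le_max_left _ _) hpf.choose_spec.1

lemma upb_close {b : ℝ} {c : ℚ} (hc : (c:ℝ) < b) (k : ℕ) :
    b - 1/((k:ℝ)+1) < upb b c (k+1) := by
  rw [upb, dif_pos (upb_lt hc k)]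
  generalize_proofs hpf
  exact lt_of_le_of_lt (le_max_right _ _) hpf.choose_spec.1

lemma upb_ge {b : ℝ} {c : ℚ} (hc : (c:ℝ) < b) : ∀ k, (c:ℝ) ≤ upb b c k
  | 0 => le_refl _
  | (k+1) => le_trans (upb_ge hc k) (le_of_lt (upb_succ hc k))

lemma upb_cover {b : ℝ} {c : ℚ} (hc : (c:ℝ) < b) {x : ℝ} (hx1 : (c:ℝ) ≤ x) (hx2 : x < b) :
    ∃ k : ℕ, (upb b c k : ℝ) ≤ x ∧ x < upb b c (k+1) := by
  by_contra hcon
  push_neg at hcon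
  have hall : ∀ k, (upb b c k : ℝ) ≤ x := by
    intro k
    induction k with
    | zero => exact hx1
    | succ k ih => exact hcon k ih
  obtain ⟨K, hK⟩ := exists_nat_one_div_lt (show (0:ℝ) < b - x by linarith)
  have h1 := upb_close hc K
  have h2 := hall (K+1)
  push_cast at h1 hK
  linarith

open Classical in
noncomputable def dnb (a : ℝ) (c : ℚ) : ℕ → ℚ
  | 0 => c
  | k+1 => if h : a < ((dnb a c k : ℚ) : ℝ) then
      (exists_rat_btwn (show a < min ((dnb a c k : ℚ) : ℝ) (a + 1/((k:ℝ)+1)) from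
        lt_min h (lt_add_of_pos_right a (by positivity)))).choose
    else dnb a c k - 1

lemma dnb_gt {a : ℝ} {c : ℚ} (hc : a < (c:ℝ)) : ∀ k, a < (dnb a c k : ℝ)
  | 0 => hc
  | (k+1) => by
      rw [dnb, dif_pos (dnb_gt hc k)]
      generalize_proofs hpf
      exact hpf.choose_spec.1

lemma dnb_succ {a : ℝ} {c : ℚ} (hc : a < (c:ℝ)) (k : ℕ) :
    (dnb a c (k+1) : ℝ) < dnb a c k := by
  rw [dnb, dif_pos (dnb_gt hc k)]
  generalize_proofs hpf
  exact lt_of_lt_of_le hpf.choose_spec.2 (min_le_left _ _)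

lemma dnb_close {a : ℝ} {c : ℚ} (hc : a < (c:ℝ)) (k : ℕ) :
    (dnb a c (k+1) : ℝ) < a + 1/((k:ℝ)+1) := by
  rw [dnb, dif_pos (dnb_gt hc k)]
  generalize_proofs hpf
  exact lt_of_lt_of_le hpf.choose_spec.2 (min_le_right _ _)

lemma dnb_le {a : ℝ} {c : ℚ} (hc : a < (c:ℝ)) : ∀ k, (dnb a c k : ℝ) ≤ c
  | 0 => le_refl _
  | (k+1) => le_trans (le_of_lt (dnb_succ hc k)) (dnb_le hc k)

lemma dnb_cover {a : ℝ} {c : ℚ} (hc : a < (c:ℝ)) {x : ℝ} (hx1 : a < x) (hx2 : x < (c:ℝ)) :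
    ∃ k : ℕ, (dnb a c (k+1) : ℝ) ≤ x ∧ x < dnb a c k := by
  by_contra hcon
  push_neg at hcon
  have hall : ∀ k, x < (dnb a c k : ℝ) := by
    intro k
    induction k with
    | zero => exact hx2
    | succ k ih =>
        rcases lt_or_ge x (dnb a c (k+1) : ℝ) with h | h
        · exact h
        · exact absurd ih (not_lt.2 (hcon k (by linarith)))
  obtain ⟨K, hK⟩ := exists_nat_one_div_lt (show (0:ℝ) < x - a by linarith)
  have h1 := dnb_close hc K
  have h2 := hall (K+1)
  push_cast at h1 hK
  linarith

end IrrPart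
namespace IrrPart
open Set

lemma upi_cover (c : ℚ) {x : ℝ} (hx : (c:ℝ) ≤ x) :
    ∃ k : ℕ, ((c + k : ℚ) : ℝ) ≤ x ∧ x < ((c + (k+1) : ℚ) : ℝ) := by
  have h0 : 0 ≤ ⌊x - (c:ℝ)⌋ := Int.floor_nonneg.2 (by linarith)
  have hk : ((⌊x - (c:ℝ)⌋.toNat : ℕ) : ℝ) = ((⌊x - (c:ℝ)⌋ : ℤ) : ℝ) := by
    exact_mod_cast congrArg (fun z : ℤ => (z : ℝ)) (Int.toNat_of_nonneg h0)
  refine ⟨⌊x - (c:ℝ)⌋.toNat, ?_, ?_⟩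
  · push_cast
    rw [hk]
    have := Int.floor_le (x - (c:ℝ))
    linarith
  · push_cast
    rw [hk]
    have := Int.lt_floor_add_one (x - (c:ℝ))
    linarith

lemma dni_cover (c : ℚ) {x : ℝ} (hx : x < (c:ℝ)) :
    ∃ k : ℕ, ((c - (k+1) : ℚ) : ℝ) ≤ x ∧ x < ((c - k : ℚ) : ℝ) := by
  have hpos : (0:ℝ) < (c:ℝ) - x := by linarith
  have h1 : (1:ℤ) ≤ ⌈(c:ℝ) - x⌉ := Int.ceil_pos.2 hpos
  have hk : (((⌈(c:ℝ) - x⌉ - 1).toNat : ℕ) : ℝ) = ((⌈(c:ℝ) - x⌉ - 1 : ℤ) : ℝ) := by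
    exact_mod_cast congrArg (fun z : ℤ => (z : ℝ))
      (Int.toNat_of_nonneg (by omega : 0 ≤ ⌈(c:ℝ) - x⌉ - 1))
  refine ⟨(⌈(c:ℝ) - x⌉ - 1).toNat, ?_, ?_⟩
  · push_cast
    rw [hk]
    have := Int.le_ceil ((c:ℝ) - x)
    push_cast
    linarith
  · push_cast
    rw [hk]
    have := Int.ceil_lt_add_one ((c:ℝ) - x)
    push_cast
    linarith

lemma iso_Ioo {a b : ℝ} (hab : a < b) :
    Nonempty ((A ∩ Ioo a b : Set ℝ) ≃o (B ∩ Ioo a b : Set ℝ)) := by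
  obtain ⟨c, hc1, hc2⟩ := exists_rat_btwn hab
  refine iso_of_seq (glueSeq (upb b c) (dnb a c))
    (glue_mono _ _ rfl (upb_succ hc2) (dnb_succ hc1)) _
    (glue_cover (upb b c) (dnb a c) rfl _ ?_)
  intro x
  constructor
  · rintro ⟨hax, hxb⟩
    rcases le_or_gt (c:ℝ) x with h | h
    · exact Or.inl (upb_cover hc2 h hxb)
    · exact Or.inr (dnb_cover hc1 hax h)
  · rintro (⟨k, h1, h2⟩ | ⟨k, h1, h2⟩)
    · constructor
      · calc a < (c:ℝ) := hc1
          _ ≤ upb b c k := upb_ge hc2 k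
          _ ≤ x := h1
      · exact lt_of_lt_of_le h2 (le_of_lt (upb_lt hc2 (k+1)))
    · constructor
      · exact lt_of_lt_of_le (dnb_gt hc1 (k+1)) h1
      · calc x < (dnb a c k : ℝ) := h2
          _ ≤ (c:ℝ) := dnb_le hc1 k
          _ < b := hc2

lemma iso_Ioi (a : ℝ) :
    Nonempty ((A ∩ Ioi a : Set ℝ) ≃o (B ∩ Ioi a : Set ℝ)) := by
  obtain ⟨c, hc⟩ := exists_rat_gt a
  refine iso_of_seq (glueSeq (fun k => c + k) (dnb a c))
    (glue_mono _ _ (by simp [dnb]) (fun k => by push_cast; linarith) (dnb_succ hc)) _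
    (glue_cover (fun k => c + k) (dnb a c) (by simp [dnb]) _ ?_)
  intro x
  constructor
  · intro hax
    rcases le_or_gt (c:ℝ) x with h | h
    · obtain ⟨k, h1, h2⟩ := upi_cover c h
      exact Or.inl ⟨k, by push_cast at h1 ⊢; linarith, by push_cast at h2 ⊢; linarith⟩
    · exact Or.inr (dnb_cover hc hax h)
  · rintro (⟨k, h1, h2⟩ | ⟨k, h1, h2⟩)
    · have : (c:ℝ) ≤ ((c + (k:ℚ) : ℚ) : ℝ) := by push_cast; linarith [Nat.cast_nonneg (α := ℝ) k]
      have hck : ((c:ℚ) + (k:ℚ) : ℚ) = c + k := rfl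
      calc a < (c:ℝ) := hc
        _ ≤ _ := this
        _ ≤ x := by exact_mod_cast h1
    · exact lt_of_lt_of_le (dnb_gt hc (k+1)) h1

lemma iso_Iio (b : ℝ) :
    Nonempty ((A ∩ Iio b : Set ℝ) ≃o (B ∩ Iio b : Set ℝ)) := by
  obtain ⟨c, hc⟩ := exists_rat_lt b
  refine iso_of_seq (glueSeq (upb b c) (fun k => c - k))
    (glue_mono _ _ (by simp [upb]) (upb_succ hc) (fun k => by push_cast; linarith)) _
    (glue_cover (upb b c) (fun k => c - k) (by simp [upb]) _ ?_)
  intro x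
  constructor
  · intro hxb
    rcases le_or_gt (c:ℝ) x with h | h
    · exact Or.inl (upb_cover hc h hxb)
    · obtain ⟨k, h1, h2⟩ := dni_cover c h
      exact Or.inr ⟨k, by push_cast at h1 ⊢; linarith, by push_cast at h2 ⊢; linarith⟩
  · rintro (⟨k, h1, h2⟩ | ⟨k, h1, h2⟩)
    · exact lt_of_lt_of_le h2 (le_of_lt (upb_lt hc (k+1)))
    · calc x < ((c - (k:ℚ) : ℚ) : ℝ) := h2
        _ ≤ (c:ℝ) := by push_cast; linarith [Nat.cast_nonneg (α := ℝ) k]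
        _ < b := hc

lemma iso_univ :
    Nonempty ((A ∩ univ : Set ℝ) ≃o (B ∩ univ : Set ℝ)) := by
  refine iso_of_seq (glueSeq (fun k => (k:ℚ)) (fun k => -(k:ℚ)))
    (glue_mono _ _ (by norm_num) (fun k => by push_cast; linarith)
      (fun k => by push_cast; linarith)) _
    (glue_cover (fun k => (k:ℚ)) (fun k => -(k:ℚ)) (by norm_num) _ ?_)
  intro x
  constructor
  · intro _
    rcases le_or_gt (0:ℝ) x with h | h
    · obtain ⟨k, h1, h2⟩ := upi_cover 0 (by exact_mod_cast h)
      exact Or.inl ⟨k, by push_cast at h1 ⊢; linarith, by push_cast at h2 ⊢; linarith⟩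
    · obtain ⟨k, h1, h2⟩ := dni_cover 0 (by exact_mod_cast h)
      exact Or.inr ⟨k, by push_cast at h1 ⊢; linarith, by push_cast at h2 ⊢; linarith⟩
  · intro _
    trivial

end IrrPart
open Set

/-- There is a partition of the irrationals `ℝ \ ℚ = A ∪ B` into two disjoint sets such
that `A ∩ I` is order-isomorphic to `B ∩ I` for every open interval `I`. -/
theorem irrationals_partition_into_everywhere_isomorphic_sets :
    ∃ A B : Set ℝ, A ∪ B = {x : ℝ | Irrational x} ∧ Disjoint A B ∧
      ∀ I : Set ℝ, IsOpenIntervalR I →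
        Nonempty ((A ∩ I : Set ℝ) ≃o (B ∩ I : Set ℝ)) := by
  refine ⟨IrrPart.A, IrrPart.B, ?_, ?_, ?_⟩
  · ext x
    simp only [IrrPart.A, IrrPart.B, Set.mem_union, Set.mem_setOf_eq]
    tauto
  · rw [Set.disjoint_left]
    rintro x ⟨hi, he⟩ ⟨hi', ho⟩
    exact ho he
  · rintro I (⟨a, b, rfl⟩ | ⟨a, rfl⟩ | ⟨b, rfl⟩ | rfl)
    · rcases lt_or_ge a b with hab | hab
      · exact IrrPart.iso_Ioo hab
      · have hempty : Ioo a b = (∅ : Set ℝ) := Ioo_eq_empty (not_lt.2 hab)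
        rw [hempty]
        exact ⟨OrderIso.setCongr _ _ (by simp)⟩
    · exact IrrPart.iso_Ioi a
    · exact IrrPart.iso_Iio b
    · exact IrrPart.iso_univ
end

section
/- The lexicographically ordered set ℤ^ω of all integer sequences indexed by ℕ is order-isomorphic to the set of irrational numbers with the usual order. -/
open Function

namespace LexIrr

/-- encode a finite integer list as an element of `ℕ → WithTop ℤ`, padding with `⊤`. -/
def enc (s : List ℤ) : ℕ → WithTop ℤ := fun n => if h : n < s.length then (s[n] : WithTop ℤ) else ⊤

lemma enc_lt {s : List ℤ} {n : ℕ} (h : n < s.length) : enc s n = (s[n] : WithTop ℤ) := dif_pos h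
lemma enc_ge {s : List ℤ} {n : ℕ} (h : s.length ≤ n) : enc s n = ⊤ := dif_neg (by omega)

lemma enc_append (s : List ℤ) (k : ℤ) (n : ℕ) :
    enc (s ++ [k]) n = if n < s.length then enc s n else if n = s.length then (k : WithTop ℤ) else ⊤ := by
  rcases lt_trichotomy n s.length with h | h | h
  · rw [if_pos h, enc_lt (by simp; omega), enc_lt h]
    congr 1
    exact List.getElem_append_left h
  · subst h
    rw [if_neg (by omega), if_pos rfl, enc_lt (by simp)]
    congr 1
    simp
  · rw [if_neg (by omega), if_neg (by omega), enc_ge (by simp; omega)]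

lemma enc_inj : Function.Injective enc := by
  intro s t h
  have hlen : s.length = t.length := by
    by_contra hne
    rcases Nat.lt_or_ge s.length t.length with hl | hl
    · have := congrFun h s.length
      rw [enc_ge le_rfl, enc_lt hl] at this
      exact (WithTop.coe_ne_top this.symm)
    · have hl' : t.length < s.length := by omega
      have := congrFun h t.length
      rw [enc_ge le_rfl, enc_lt hl'] at this
      exact (WithTop.coe_ne_top this)
  refine List.ext_getElem hlen ?_
  intro n h1 h2
  have := congrFun h n
  rw [enc_lt h1, enc_lt h2] at this
  exact_mod_cast this

/-- the type of gaps: nonempty finite integer sequences -/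
structure G where
  val : List ℤ
  ne : val ≠ []

def gl (s : G) : Lex (ℕ → WithTop ℤ) := toLex (enc s.1)

lemma gl_inj : Function.Injective gl := by
  rintro ⟨s, hs⟩ ⟨t, ht⟩ h
  have := enc_inj (toLex.injective.eq_iff.mp h)
  simp_all

noncomputable instance : LinearOrder G := LinearOrder.lift' gl gl_inj

lemma gl_lt_iff {s t : G} : s < t ↔ gl s < gl t := Iff.rfl
lemma gl_le_iff {s t : G} : s ≤ t ↔ gl s ≤ gl t := Iff.rfl

instance : Countable G := Function.Injective.countable (f := G.val) (fun a b h => by cases a; cases b; simp_all)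
instance : Nonempty G := ⟨⟨[0], by simp⟩⟩

/-- the first-difference characterization of the lex order -/
lemma lex_lt {x y : ℕ → WithTop ℤ} :
    toLex x < toLex y ↔ ∃ i, (∀ j, j < i → x j = y j) ∧ x i < y i := Iff.rfl

def el (u : ℕ → ℤ) : Lex (ℕ → WithTop ℤ) := toLex (fun n => (u n : WithTop ℤ))

end LexIrr

namespace LexIrr

lemma enc_take (t : List ℤ) (m j : ℕ) :
    enc (t.take m) j = if j < m then enc t j else ⊤ := by
  rcases Nat.lt_or_ge j m with h | h
  · rw [if_pos h]
    rcases Nat.lt_or_ge j t.length with h2 | h2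
    · rw [enc_lt (by simp; omega), enc_lt h2]
      congr 1
      simp [List.getElem_take]
    · rw [enc_ge (by simp; omega), enc_ge h2]
  · rw [if_neg (by omega), enc_ge (by simp; omega)]

lemma length_pos (s : G) : 0 < s.1.length := List.length_pos_iff.mpr s.ne

lemma G_lt_iff {a b : G} :
    a < b ↔ ∃ i, (∀ j, j < i → enc a.1 j = enc b.1 j) ∧ enc a.1 i < enc b.1 i :=
  gl_lt_iff.trans lex_lt

lemma mk_lt_mk {a b : List ℤ} {ha : a ≠ []} {hb : b ≠ []} :
    (⟨a, ha⟩ : G) < ⟨b, hb⟩ ↔ ∃ i, (∀ j, j < i → enc a j = enc b j) ∧ enc a i < enc b i :=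
  G_lt_iff

instance : NoMaxOrder G := by
  constructor
  intro s
  refine ⟨⟨[s.1[0]'(length_pos s) + 1], by simp⟩, G_lt_iff.mpr ⟨0, fun j hj => absurd hj (by omega), ?_⟩⟩
  rw [enc_lt (length_pos s), enc_lt (by simp)]
  exact_mod_cast lt_add_one _

instance : NoMinOrder G := by
  constructor
  intro s
  refine ⟨⟨[s.1[0]'(length_pos s) - 1], by simp⟩, G_lt_iff.mpr ⟨0, fun j hj => absurd hj (by omega), ?_⟩⟩
  rw [enc_lt (by simp), enc_lt (length_pos s)]
  exact_mod_cast sub_one_lt _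

instance : DenselyOrdered G := by
  constructor
  rintro ⟨s, hs⟩ ⟨t, ht⟩ hst
  rw [mk_lt_mk] at hst
  obtain ⟨i, hagree, hlt⟩ := hst
  rcases Nat.lt_or_ge i t.length with hA | hB
  · -- case A : i < |t|
    set m : ℤ := if h2 : i + 1 < t.length then t[i+1] - 1 else 0 with hm
    have hlen : (t.take (i+1)).length = i + 1 := by simp; omega
    have hr : t.take (i+1) ++ [m] ≠ [] := by simp
    have henc : ∀ j, enc (t.take (i+1) ++ [m]) j =
        if j < i + 1 then enc t j else if j = i + 1 then (m : WithTop ℤ) else ⊤ := by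
      intro j
      rcases Nat.lt_or_ge j (i+1) with h1 | h1
      · rw [if_pos h1, enc_lt (by simp [hlen]; omega), List.getElem_append_left (by omega),
          List.getElem_take, enc_lt (by omega)]
      · rw [if_neg (by omega)]
        rcases Nat.eq_or_lt_of_le h1 with h2 | h2
        · rw [if_pos h2.symm, enc_lt (by simp [hlen]; omega)]
          congr 1
          rw [List.getElem_append_right (by omega)]
          simp [hlen, ← h2]
        · rw [if_neg (by omega), enc_ge (by simp [hlen]; omega)]
    refine ⟨⟨t.take (i+1) ++ [m], hr⟩, mk_lt_mk.mpr ⟨i, fun j hj => ?_, ?_⟩,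
        mk_lt_mk.mpr ⟨i + 1, fun j hj => ?_, ?_⟩⟩
    · rw [henc, if_pos (by omega), hagree j hj]
    · rw [henc, if_pos (by omega)]
      exact hlt
    · rw [henc, if_pos hj]
    · rw [henc, if_neg (by omega), if_pos rfl]
      by_cases h2 : i + 1 < t.length
      · rw [enc_lt h2, hm, dif_pos h2]
        exact_mod_cast sub_one_lt _
      · rw [enc_ge (by omega)]
        exact WithTop.coe_lt_top _
  · -- case B : t is a proper prefix of s
    have his : i < s.length := by
      by_contra h
      rw [enc_ge (by omega), enc_ge hB] at hlt
      exact lt_irrefl _ hlt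
    have hit : i = t.length := by
      by_contra h
      have h1 : t.length < i := by omega
      have h2 := hagree _ h1
      rw [enc_ge le_rfl] at h2
      have h3 : s.length ≤ t.length := by
        by_contra h4
        rw [enc_lt (by omega)] at h2
        exact WithTop.coe_ne_top h2
      omega
    have hr : t ++ [s[i] + 1] ≠ [] := by simp
    have henc : ∀ j, enc (t ++ [s[i] + 1]) j =
        if j < t.length then enc t j else if j = t.length then ((s[i] + 1 : ℤ) : WithTop ℤ) else ⊤ := by
      intro j
      rcases Nat.lt_or_ge j t.length with h1 | h1
      · rw [if_pos h1, enc_lt (by simp; omega), List.getElem_append_left (by omega), enc_lt h1]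
      · rw [if_neg (by omega)]
        rcases Nat.eq_or_lt_of_le h1 with h2 | h2
        · rw [if_pos h2.symm, enc_lt (by simp; omega)]
          congr 1
          rw [List.getElem_append_right (by omega)]
          simp [← h2]
        · rw [if_neg (by omega), enc_ge (by simp; omega)]
    refine ⟨⟨t ++ [s[i] + 1], hr⟩, mk_lt_mk.mpr ⟨i, fun j hj => ?_, ?_⟩,
        mk_lt_mk.mpr ⟨i, fun j hj => ?_, ?_⟩⟩
    · rw [henc, if_pos (by omega), hagree j hj]
    · rw [henc, if_neg (by omega), if_pos hit, enc_lt his]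
      exact_mod_cast lt_add_one _
    · rw [henc, if_pos (by omega)]
    · rw [henc, if_neg (by omega), if_pos hit, enc_ge (by omega)]
      exact WithTop.coe_lt_top _

end LexIrr

namespace LexIrr

lemma lexZ_lt {u v : Lex (ℕ → ℤ)} :
    u < v ↔ ∃ i, (∀ j, j < i → ofLex u j = ofLex v j) ∧ ofLex u i < ofLex v i := Iff.rfl

lemma lt_el_iff {t : G} {u : ℕ → ℤ} :
    gl t < el u ↔ ∃ i, (∀ j, j < i → enc t.val j = (u j : WithTop ℤ)) ∧ enc t.val i < (u i : WithTop ℤ) :=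
  Iff.rfl

lemma el_lt_iff {t : G} {u : ℕ → ℤ} :
    el u < gl t ↔ ∃ i, (∀ j, j < i → (u j : WithTop ℤ) = enc t.val j) ∧ (u i : WithTop ℤ) < enc t.val i :=
  Iff.rfl

lemma gl_ne_el (t : G) (u : ℕ → ℤ) : gl t ≠ el u := by
  intro h
  have h2 := congrFun (toLex.injective h) t.val.length
  rw [enc_ge le_rfl] at h2
  exact WithTop.coe_ne_top h2.symm

/-- prefix lists of an integer sequence -/
def pu (u : ℕ → ℤ) (n : ℕ) : List ℤ := (List.range n).map u

lemma pu_length (u : ℕ → ℤ) (n : ℕ) : (pu u n).length = n := by simp [pu]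

lemma enc_pu (u : ℕ → ℤ) (n j : ℕ) :
    enc (pu u n) j = if j < n then (u j : WithTop ℤ) else ⊤ := by
  rcases Nat.lt_or_ge j n with h | h
  · rw [if_pos h, enc_lt (by rw [pu_length]; exact h)]
    congr 1
    simp [pu]
  · rw [if_neg (by omega), enc_ge (by rw [pu_length]; omega)]

lemma pu_succ (u : ℕ → ℤ) (n : ℕ) : pu u (n+1) = pu u n ++ [u n] := by
  simp [pu, List.range_succ]

/-- the gap given by the first `n+1` values of `u` -/
def puG (u : ℕ → ℤ) (n : ℕ) : G :=
  ⟨pu u (n+1), by intro h; have := congrArg List.length h; simp [pu_length] at this⟩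

lemma puG_val (u : ℕ → ℤ) (n : ℕ) : (puG u n).val = pu u (n+1) := rfl

/-- appending one element to a list, as a gap -/
def mkA (p : List ℤ) (k : ℤ) : G := ⟨p ++ [k], by simp⟩

lemma mkA_val (p : List ℤ) (k : ℤ) : (mkA p k).val = p ++ [k] := rfl

lemma enc_mkA (p : List ℤ) (k : ℤ) (j : ℕ) :
    enc (p ++ [k]) j = if j < p.length then enc p j else if j = p.length then (k : WithTop ℤ) else ⊤ := by
  rcases Nat.lt_or_ge j p.length with h1 | h1
  · rw [if_pos h1, enc_lt (by simp; omega), List.getElem_append_left (by omega), enc_lt h1]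
  · rw [if_neg (by omega)]
    rcases Nat.eq_or_lt_of_le h1 with h2 | h2
    · rw [if_pos h2.symm, enc_lt (by simp; omega)]
      congr 1
      rw [List.getElem_append_right (by omega)]
      simp [← h2]
    · rw [if_neg (by omega), enc_ge (by simp; omega)]

lemma mkA_mono (p : List ℤ) {k k' : ℤ} (h : k < k') : mkA p k < mkA p k' := by
  refine G_lt_iff.mpr ⟨p.length, fun j hj => ?_, ?_⟩
  · rw [mkA_val, mkA_val, enc_mkA, enc_mkA, if_pos hj, if_pos hj]
  · rw [mkA_val, mkA_val, enc_mkA, enc_mkA, if_neg (lt_irrefl _), if_neg (lt_irrefl _),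
      if_pos rfl, if_pos rfl]
    exact_mod_cast h

/-- cofinality: any gap below `s` is below `s ++ [k]` for some `k`. -/
lemma exists_append_gt {t s : G} (h : t < s) : ∃ k : ℤ, t < mkA s.val k := by
  obtain ⟨i, hagree, hlt⟩ := G_lt_iff.mp h
  rcases Nat.lt_or_ge i s.val.length with h1 | h1
  · refine ⟨0, G_lt_iff.mpr ⟨i, fun j hj => ?_, ?_⟩⟩
    · rw [mkA_val, enc_mkA, if_pos (by omega), hagree j hj]
    · rw [mkA_val, enc_mkA, if_pos h1]
      exact hlt
  · -- i >= |s| : then i = |s| and t extends s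
    have hi : i = s.val.length := by
      by_contra hne
      have h2 := hagree s.val.length (by omega)
      rw [enc_ge le_rfl] at h2
      have hlen : t.val.length ≤ s.val.length := by
        by_contra h4
        rw [enc_lt (by omega)] at h2
        exact WithTop.coe_ne_top h2
      rw [enc_ge (by omega)] at hlt
      exact not_top_lt hlt
    rw [enc_ge h1] at hlt
    obtain ⟨c, hc⟩ := WithTop.ne_top_iff_exists.mp hlt.ne_top
    refine ⟨c + 1, G_lt_iff.mpr ⟨i, fun j hj => ?_, ?_⟩⟩
    · rw [mkA_val, enc_mkA, if_pos (by omega), hagree j hj]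
    · rw [mkA_val, enc_mkA, if_neg (by omega), if_pos hi, ← hc]
      exact_mod_cast lt_add_one c

/-- if `t` is below every `(p++[k]) ++ [m]`, then it is below the decrement `p ++ [k-1]`. -/
lemma le_dec_of_forall_lt {p : List ℤ} {k : ℤ} {t : G}
    (h : ∀ m : ℤ, t < mkA (p ++ [k]) m) : t ≤ mkA p (k - 1) := by
  by_contra hcon
  rw [not_le] at hcon
  obtain ⟨i, hagree, hlt⟩ := G_lt_iff.mp hcon
  rw [mkA_val] at hlt hagree
  have hitop : enc (p ++ [k-1]) i ≠ ⊤ := hlt.ne_top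
  have hip : i ≤ p.length := by
    by_contra h2
    rw [enc_mkA, if_neg (by omega), if_neg (by omega)] at hitop
    exact hitop rfl
  rcases Nat.lt_or_ge i p.length with h1 | h1
  · refine lt_asymm (h 0) (G_lt_iff.mpr ⟨i, fun j hj => ?_, ?_⟩)
    · rw [mkA_val, enc_mkA, if_pos (by simp; omega), enc_mkA, if_pos (by omega),
        ← hagree j hj, enc_mkA, if_pos (by omega)]
    · rw [mkA_val, enc_mkA, if_pos (by simp; omega), enc_mkA, if_pos h1]
      rw [enc_mkA, if_pos h1] at hlt
      exact hlt
  · have hi : i = p.length := by omega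
    rw [enc_mkA, if_neg (by omega), if_pos hi] at hlt
    have hagree' : ∀ j, j < i → enc p j = enc t.val j := fun j hj => by
      rw [← hagree j hj, enc_mkA, if_pos (by omega)]
    rcases eq_or_ne (enc t.val i) ⊤ with htop | hne
    · refine lt_asymm (h 0) (G_lt_iff.mpr ⟨i, fun j hj => ?_, ?_⟩)
      · rw [mkA_val, enc_mkA, if_pos (by simp; omega), enc_mkA, if_pos (by omega), hagree' j hj]
      · rw [mkA_val, enc_mkA, if_pos (by simp; omega), enc_mkA, if_neg (by omega), if_pos hi, htop]
        exact WithTop.coe_lt_top k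
    · obtain ⟨c, hc⟩ := WithTop.ne_top_iff_exists.mp hne
      have hkc : k - 1 < c := by
        rw [← hc] at hlt
        exact_mod_cast hlt
      rcases lt_or_eq_of_le (by omega : k ≤ c) with hkc2 | hkc2
      · refine lt_asymm (h 0) (G_lt_iff.mpr ⟨i, fun j hj => ?_, ?_⟩)
        · rw [mkA_val, enc_mkA, if_pos (by simp; omega), enc_mkA, if_pos (by omega), hagree' j hj]
        · rw [mkA_val, enc_mkA, if_pos (by simp; omega), enc_mkA, if_neg (by omega), if_pos hi, ← hc]
          exact_mod_cast hkc2
      · rcases eq_or_ne (enc t.val (i+1)) ⊤ with htop2 | hne2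
        · refine lt_asymm (h 0) (G_lt_iff.mpr ⟨i+1, fun j hj => ?_, ?_⟩)
          · rcases Nat.lt_or_ge j i with hji | hji
            · rw [mkA_val, enc_mkA, if_pos (by simp; omega), enc_mkA, if_pos (by omega), hagree' j hji]
            · have hji' : j = i := by omega
              subst hji'
              rw [mkA_val, enc_mkA, if_pos (by simp; omega), enc_mkA, if_neg (by omega), if_pos hi, ← hc, hkc2]
          · rw [mkA_val, enc_mkA, if_neg (by simp; omega), if_pos (by simp; omega), htop2]
            exact WithTop.coe_lt_top 0
        · obtain ⟨d, hd⟩ := WithTop.ne_top_iff_exists.mp hne2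
          refine lt_asymm (h (d-1)) (G_lt_iff.mpr ⟨i+1, fun j hj => ?_, ?_⟩)
          · rcases Nat.lt_or_ge j i with hji | hji
            · rw [mkA_val, enc_mkA, if_pos (by simp; omega), enc_mkA, if_pos (by omega), hagree' j hji]
            · have hji' : j = i := by omega
              subst hji'
              rw [mkA_val, enc_mkA, if_pos (by simp; omega), enc_mkA, if_neg (by omega), if_pos hi, ← hc, hkc2]
          · rw [mkA_val, enc_mkA, if_neg (by simp; omega), if_pos (by simp; omega), ← hd]
            exact_mod_cast sub_one_lt d

end LexIrr

namespace LexIrr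

variable (ψ : G ≃o ℚ)

noncomputable def Ψ (s : G) : ℝ := ((ψ s : ℚ) : ℝ)

lemma Ψ_lt_iff {s t : G} : Ψ ψ s < Ψ ψ t ↔ s < t := by
  unfold Ψ
  rw [Rat.cast_lt]
  exact ψ.lt_iff_lt

lemma Ψ_le_iff {s t : G} : Ψ ψ s ≤ Ψ ψ t ↔ s ≤ t := by
  unfold Ψ
  rw [Rat.cast_le]
  exact ψ.le_iff_le

lemma Ψ_surj (q : ℚ) : ∃ s, Ψ ψ s = (q : ℝ) := ⟨ψ.symm q, by simp [Ψ]⟩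

def Sset (u : ℕ → ℤ) : Set ℝ := (fun s => Ψ ψ s) '' {s : G | gl s < el u}

lemma lt_puG_of_lt_el {t : G} {u : ℕ → ℤ} (h : gl t < el u) (m : ℕ) : t < puG u m := by
  obtain ⟨i, hagree, hlt⟩ := lt_el_iff.mp h
  rcases Nat.lt_or_ge i (m+1) with h1 | h1
  · refine G_lt_iff.mpr ⟨i, fun j hj => ?_, ?_⟩
    · rw [puG_val, enc_pu, if_pos (by omega), hagree j hj]
    · rw [puG_val, enc_pu, if_pos (by omega)]
      exact hlt
  · refine G_lt_iff.mpr ⟨m+1, fun j hj => ?_, ?_⟩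
    · rw [puG_val, enc_pu, if_pos (by omega), hagree j (by omega)]
    · rw [puG_val, enc_pu, if_neg (by omega)]
      rcases Nat.eq_or_lt_of_le h1 with h2 | h2
      · rw [lt_top_iff_ne_top, h2]
        exact hlt.ne_top
      · rw [lt_top_iff_ne_top, hagree (m+1) h2]
        exact WithTop.coe_ne_top

lemma lt_el_low (u : ℕ → ℤ) : gl ⟨[u 0 - 1], by simp⟩ < el u := by
  refine lt_el_iff.mpr ⟨0, fun j hj => absurd hj (by omega), ?_⟩
  rw [enc_lt (by simp)]
  show ((u 0 - 1 : ℤ) : WithTop ℤ) < _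
  exact_mod_cast sub_one_lt _

lemma Sset_nonempty (u : ℕ → ℤ) : (Sset ψ u).Nonempty :=
  ⟨_, ⟨⟨[u 0 - 1], by simp⟩, lt_el_low u, rfl⟩⟩

lemma Sset_bdd (u : ℕ → ℤ) : BddAbove (Sset ψ u) := by
  refine ⟨Ψ ψ (puG u 0), ?_⟩
  rintro y ⟨s, hs, rfl⟩
  exact (Ψ_le_iff ψ).mpr (lt_puG_of_lt_el hs 0).le

noncomputable def f (u : Lex (ℕ → ℤ)) : ℝ := sSup (Sset ψ (ofLex u))

lemma puG_anti (u : ℕ → ℤ) (n : ℕ) : puG u (n+1) < puG u n := by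
  refine G_lt_iff.mpr ⟨n+1, fun j hj => ?_, ?_⟩
  · rw [puG_val, puG_val, enc_pu, enc_pu, if_pos (by omega), if_pos (by omega)]
  · rw [puG_val, puG_val, enc_pu, enc_pu, if_pos (by omega), if_neg (by omega)]
    exact WithTop.coe_lt_top _

lemma f_strictMono : StrictMono (f ψ) := by
  intro u v huv
  obtain ⟨n, hagree, hlt⟩ := lexZ_lt.mp huv
  have key1 : f ψ u ≤ Ψ ψ (puG (ofLex u) (n+1)) := by
    refine csSup_le (Sset_nonempty ψ _) ?_
    rintro y ⟨s, hs, rfl⟩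
    exact (Ψ_le_iff ψ).mpr (lt_puG_of_lt_el hs (n+1)).le
  have key2 : Ψ ψ (puG (ofLex u) (n+1)) < Ψ ψ (puG (ofLex u) n) :=
    (Ψ_lt_iff ψ).mpr (puG_anti _ n)
  have key3 : Ψ ψ (puG (ofLex u) n) ≤ f ψ v := by
    refine le_csSup (Sset_bdd ψ _) ⟨puG (ofLex u) n, ?_, rfl⟩
    refine lt_el_iff.mpr ⟨n, fun j hj => ?_, ?_⟩
    · rw [puG_val, enc_pu, if_pos (by omega), hagree j hj]
    · rw [puG_val, enc_pu, if_pos (by omega)]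
      exact_mod_cast hlt
  linarith

lemma f_irrational (u : Lex (ℕ → ℤ)) : Irrational (f ψ u) := by
  rintro ⟨q, hq⟩
  obtain ⟨t, ht⟩ := Ψ_surj ψ q
  rcases lt_or_gt_of_ne (gl_ne_el t (ofLex u)) with hlt | hgt
  · obtain ⟨i, hagree, hlti⟩ := lt_el_iff.mp hlt
    set r : G := mkA (pu (ofLex u) (i+1)) (ofLex u (i+1) - 1) with hr
    have hr1 : gl r < el (ofLex u) := by
      refine lt_el_iff.mpr ⟨i+1, fun j hj => ?_, ?_⟩
      · rw [hr, mkA_val, enc_mkA, if_pos (by rw [pu_length]; omega), enc_pu, if_pos (by omega)]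
      · rw [hr, mkA_val, enc_mkA, if_neg (by rw [pu_length]; omega), if_pos (pu_length _ _).symm]
        exact_mod_cast sub_one_lt _
    have hr2 : t < r := by
      refine G_lt_iff.mpr ⟨i, fun j hj => ?_, ?_⟩
      · rw [hr, mkA_val, enc_mkA, if_pos (by rw [pu_length]; omega), enc_pu, if_pos (by omega),
          hagree j hj]
      · rw [hr, mkA_val, enc_mkA, if_pos (by rw [pu_length]; omega), enc_pu, if_pos (by omega)]
        exact hlti
    have k1 : Ψ ψ r ≤ f ψ u := le_csSup (Sset_bdd ψ _) ⟨r, hr1, rfl⟩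
    have k2 : Ψ ψ t < Ψ ψ r := (Ψ_lt_iff ψ).mpr hr2
    rw [ht] at k2
    rw [← hq] at k1
    linarith
  · obtain ⟨i, hagree, hlti⟩ := el_lt_iff.mp hgt
    have h1 : f ψ u ≤ Ψ ψ (puG (ofLex u) i) := by
      refine csSup_le (Sset_nonempty ψ _) ?_
      rintro y ⟨s, hs, rfl⟩
      exact (Ψ_le_iff ψ).mpr (lt_puG_of_lt_el hs i).le
    have h2 : puG (ofLex u) i < t := by
      refine G_lt_iff.mpr ⟨i, fun j hj => ?_, ?_⟩
      · rw [puG_val, enc_pu, if_pos (by omega), hagree j hj]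
      · rw [puG_val, enc_pu, if_pos (by omega)]
        exact hlti
    have k2 : Ψ ψ (puG (ofLex u) i) < Ψ ψ t := (Ψ_lt_iff ψ).mpr h2
    rw [ht] at k2
    rw [← hq] at h1
    linarith

end LexIrr

namespace LexIrr

lemma G_ext {a b : G} (h : a.val = b.val) : a = b := by
  cases a; cases b; simpa using h

lemma enc_dg (u : ℕ → ℤ) (n : ℕ) (c : ℤ) (j : ℕ) :
    enc (pu u n ++ [c]) j = if j < n then (u j : WithTop ℤ) else if j = n then (c : WithTop ℤ) else ⊤ := by
  simp only [enc_mkA, pu_length, enc_pu]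
  split_ifs <;> first | rfl | omega

variable (ψ : G ≃o ℚ)

lemma sup_append (s : G) {y : ℝ} (h : y < Ψ ψ s) : ∃ k : ℤ, y < Ψ ψ (mkA s.val k) := by
  obtain ⟨q, hq1, hq2⟩ := exists_rat_btwn h
  obtain ⟨t, ht⟩ := Ψ_surj ψ q
  have hts : t < s := (Ψ_lt_iff ψ).mp (by rw [ht]; exact hq2)
  obtain ⟨k, hk⟩ := exists_append_gt hts
  refine ⟨k, lt_trans (by rw [ht]; exact hq1) ((Ψ_lt_iff ψ).mpr hk)⟩

lemma inf_append (p : List ℤ) (k : ℤ) {y : ℝ} (h : Ψ ψ (mkA p (k-1)) < y) :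
    ∃ m : ℤ, Ψ ψ (mkA (p ++ [k]) m) < y := by
  obtain ⟨q, hq1, hq2⟩ := exists_rat_btwn h
  obtain ⟨t, ht⟩ := Ψ_surj ψ q
  by_cases hc : ∃ m : ℤ, mkA (p ++ [k]) m ≤ t
  · obtain ⟨m, hm⟩ := hc
    refine ⟨m, lt_of_le_of_lt (le_trans ((Ψ_le_iff ψ).mpr hm) (le_of_eq ht)) hq2⟩
  · push_neg at hc
    have h2 : Ψ ψ t ≤ Ψ ψ (mkA p (k-1)) :=
      (Ψ_le_iff ψ).mpr (le_dec_of_forall_lt hc)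
    rw [ht] at h2
    linarith

lemma exists_single_gt (y : ℝ) : ∃ k : ℤ, y < Ψ ψ (mkA [] k) := by
  obtain ⟨q, hq⟩ := exists_rat_gt y
  obtain ⟨t, ht⟩ := Ψ_surj ψ q
  refine ⟨t.val[0]'(length_pos t) + 1, lt_trans (by rw [ht]; exact hq) ((Ψ_lt_iff ψ).mpr ?_)⟩
  refine G_lt_iff.mpr ⟨0, fun j hj => absurd hj (by omega), ?_⟩
  rw [mkA_val, enc_lt (length_pos t), enc_lt (by simp)]
  show _ < ((t.val[0]'(length_pos t) + 1 : ℤ) : WithTop ℤ)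
  exact_mod_cast lt_add_one _

lemma exists_single_lt (y : ℝ) : ∃ k : ℤ, Ψ ψ (mkA [] k) < y := by
  obtain ⟨q, hq⟩ := exists_rat_lt y
  obtain ⟨t, ht⟩ := Ψ_surj ψ q
  refine ⟨t.val[0]'(length_pos t) - 1, lt_trans ((Ψ_lt_iff ψ).mpr ?_) (by rw [ht]; exact hq)⟩
  refine G_lt_iff.mpr ⟨0, fun j hj => absurd hj (by omega), ?_⟩
  rw [mkA_val, enc_lt (by simp), enc_lt (length_pos t)]
  show ((t.val[0]'(length_pos t) - 1 : ℤ) : WithTop ℤ) < _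
  exact_mod_cast sub_one_lt _

lemma exists_min (p : List ℤ) {x : ℝ} (hx : Irrational x)
    (h1 : ∃ m : ℤ, x < Ψ ψ (mkA p m)) (h2 : ∃ m : ℤ, Ψ ψ (mkA p m) < x) :
    ∃ k : ℤ, x < Ψ ψ (mkA p k) ∧ Ψ ψ (mkA p (k-1)) < x := by
  classical
  obtain ⟨m₀, hm₀⟩ := h2
  have hbdd : ∃ b : ℤ, ∀ z : ℤ, (x < Ψ ψ (mkA p z)) → b ≤ z := by
    refine ⟨m₀ + 1, fun z hz => ?_⟩
    by_contra hcon
    have hzm : z ≤ m₀ := by omega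
    rcases eq_or_lt_of_le hzm with h | h
    · subst h; linarith
    · have := (Ψ_lt_iff ψ).mpr (mkA_mono p h)
      linarith
  obtain ⟨k, hk, hleast⟩ := Int.exists_least_of_bdd hbdd h1
  refine ⟨k, hk, ?_⟩
  have hle : Ψ ψ (mkA p (k-1)) ≤ x := by
    by_contra hcon
    have := hleast _ (not_le.mp hcon)
    omega
  refine lt_of_le_of_ne hle (fun heq => hx ⟨ψ (mkA p (k-1)), heq⟩)

noncomputable def nxt (x : ℝ) (p : List ℤ) : ℤ :=
  @dite _ (∃ k : ℤ, x < Ψ ψ (mkA p k) ∧ Ψ ψ (mkA p (k-1)) < x) (Classical.dec _)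
    (fun h => h.choose) (fun _ => 0)

lemma nxt_spec (x : ℝ) (p : List ℤ)
    (hex : ∃ k : ℤ, x < Ψ ψ (mkA p k) ∧ Ψ ψ (mkA p (k-1)) < x) :
    x < Ψ ψ (mkA p (nxt ψ x p)) ∧ Ψ ψ (mkA p (nxt ψ x p - 1)) < x := by
  rw [nxt, dif_pos hex]
  exact hex.choose_spec

noncomputable def stList (x : ℝ) : ℕ → List ℤ
  | 0 => []
  | n+1 => stList x n ++ [nxt ψ x (stList x n)]

noncomputable def sq (x : ℝ) (n : ℕ) : ℤ := nxt ψ x (stList ψ x n)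

lemma sq_inv {x : ℝ} (hx : Irrational x) (n : ℕ) :
    x < Ψ ψ (mkA (stList ψ x n) (sq ψ x n)) ∧ Ψ ψ (mkA (stList ψ x n) (sq ψ x n - 1)) < x := by
  induction n with
  | zero =>
      have hex := exists_min ψ [] hx (exists_single_gt ψ x) (exists_single_lt ψ x)
      exact nxt_spec ψ x [] hex
  | succ n ih =>
      have h1 : ∃ m : ℤ, x < Ψ ψ (mkA (stList ψ x (n+1)) m) := by
        obtain ⟨k, hk⟩ := sup_append ψ (mkA (stList ψ x n) (sq ψ x n)) ih.1
        exact ⟨k, hk⟩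
      have h2 : ∃ m : ℤ, Ψ ψ (mkA (stList ψ x (n+1)) m) < x := by
        obtain ⟨m, hm⟩ := inf_append ψ (stList ψ x n) (sq ψ x n) ih.2
        exact ⟨m, hm⟩
      exact nxt_spec ψ x _ (exists_min ψ _ hx h1 h2)

lemma stList_eq_pu (x : ℝ) (n : ℕ) : stList ψ x n = pu (sq ψ x) n := by
  induction n with
  | zero => rfl
  | succ n ih =>
      rw [pu_succ]
      show stList ψ x n ++ [sq ψ x n] = _
      rw [ih]

lemma f_surj_aux {x : ℝ} (hx : Irrational x) : f ψ (toLex (sq ψ x)) = x := by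
  set U : ℕ → ℤ := sq ψ x with hU
  have hinv : ∀ n, x < Ψ ψ (mkA (pu U n) (U n)) ∧ Ψ ψ (mkA (pu U n) (U n - 1)) < x := by
    intro n
    have := sq_inv ψ hx n
    rwa [stList_eq_pu ψ x n] at this
  have hfu : f ψ (toLex U) = sSup (Sset ψ U) := rfl
  -- upper bound : every element of Sset is < x
  have hupper : ∀ t : G, gl t < el U → Ψ ψ t < x := by
    intro t ht
    obtain ⟨i, hagree, hlt⟩ := lt_el_iff.mp ht
    have hle : t ≤ mkA (pu U i) (U i - 1) := by
      by_contra hcon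
      obtain ⟨i', hag', hlt'⟩ := G_lt_iff.mp (not_le.mp hcon)
      rw [mkA_val] at hag' hlt'
      rcases lt_trichotomy i' i with h | h | h
      · rw [enc_dg, if_pos (by omega), hagree i' h] at hlt'
        exact lt_irrefl _ hlt'
      · subst h
        rw [enc_dg, if_neg (by omega), if_pos rfl] at hlt'
        obtain ⟨c, hc⟩ := WithTop.ne_top_iff_exists.mp hlt.ne_top
        rw [← hc] at hlt hlt'
        have h1 : U i' - 1 < c := by exact_mod_cast hlt'
        have h2 : c < U i' := by exact_mod_cast hlt
        omega
      · rw [enc_dg, if_neg (by omega), if_neg (by omega)] at hlt'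
        exact not_top_lt hlt'
    calc Ψ ψ t ≤ Ψ ψ (mkA (pu U i) (U i - 1)) := (Ψ_le_iff ψ).mpr hle
    _ < x := (hinv i).2
  have hle : f ψ (toLex U) ≤ x := by
    rw [hfu]
    refine csSup_le (Sset_nonempty ψ U) ?_
    rintro y ⟨s, hs, rfl⟩
    exact (hupper s hs).le
  have hge : x ≤ f ψ (toLex U) := by
    by_contra hcon
    obtain ⟨q, hq1, hq2⟩ := exists_rat_btwn (not_le.mp hcon)
    obtain ⟨t, ht⟩ := Ψ_surj ψ q
    -- the two families of gaps squeeze t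
    have hmem : ∀ n, Ψ ψ (mkA (pu U n) (U n - 1)) ≤ f ψ (toLex U) := by
      intro n
      refine le_csSup (Sset_bdd ψ U) ⟨mkA (pu U n) (U n - 1), ?_, rfl⟩
      refine lt_el_iff.mpr ⟨n, fun j hj => ?_, ?_⟩
      · rw [mkA_val, enc_dg, if_pos hj]
        rfl
      · rw [mkA_val, enc_dg, if_neg (by omega), if_pos rfl]
        show _ < ((U n : ℤ) : WithTop ℤ)
        exact_mod_cast sub_one_lt _
    have hlow : ∀ n, mkA (pu U n) (U n - 1) < t := by
      intro n
      refine (Ψ_lt_iff ψ).mp ?_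
      rw [ht]
      exact lt_of_le_of_lt (hmem n) hq1
    have hhigh : ∀ n, t < mkA (pu U n) (U n) := by
      intro n
      refine (Ψ_lt_iff ψ).mp ?_
      rw [ht]
      exact lt_trans hq2 (hinv n).1
    have key : ∀ n, ∀ j, j < n → enc t.val j = (U j : WithTop ℤ) := by
      intro n
      induction n with
      | zero => exact fun j hj => absurd hj (by omega)
      | succ n ih =>
          intro j hj
          rcases Nat.lt_or_ge j n with h | h
          · exact ih j h
          · have hjn : j = n := by omega
            subst hjn
            -- from hlow : enc t.val j > ↑(U j - 1)
            have hA : ((U j - 1 : ℤ) : WithTop ℤ) < enc t.val j := by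
              obtain ⟨i', hag', hlt'⟩ := G_lt_iff.mp (hlow j)
              rw [mkA_val] at hag' hlt'
              rcases lt_trichotomy i' j with h2 | h2 | h2
              · rw [enc_dg, if_pos (by omega)] at hlt'
                rw [ih i' h2] at hlt'
                exact absurd hlt' (lt_irrefl _)
              · subst h2
                rw [enc_dg, if_neg (by omega), if_pos rfl] at hlt'
                exact hlt'
              · exfalso
                rw [enc_dg, if_neg (by omega), if_neg (by omega)] at hlt'
                exact not_top_lt hlt'
            -- from hhigh
            obtain ⟨i', hag', hlt'⟩ := G_lt_iff.mp (hhigh j)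
            rw [mkA_val] at hag' hlt'
            rcases lt_trichotomy i' j with h2 | h2 | h2
            · rw [enc_dg, if_pos (by omega)] at hlt'
              rw [ih i' h2] at hlt'
              exact absurd hlt' (lt_irrefl _)
            · subst h2
              rw [enc_dg, if_neg (by omega), if_pos rfl] at hlt'
              exfalso
              obtain ⟨c, hc⟩ := WithTop.ne_top_iff_exists.mp hlt'.ne_top
              rw [← hc] at hA hlt'
              have h1 : U i' - 1 < c := by exact_mod_cast hA
              have h2 : c < U i' := by exact_mod_cast hlt'
              omega
            · have h3 := hag' j h2
              rw [enc_dg, if_neg (by omega), if_pos rfl] at h3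
              exact h3
    have hfin := key (t.val.length + 1) t.val.length (by omega)
    rw [enc_ge le_rfl] at hfin
    exact WithTop.coe_ne_top hfin.symm
  linarith

end LexIrr

/-- The lexicographically ordered set `ℤ^ω` of integer sequences is order-isomorphic to
the irrationals with the usual order. -/
theorem lex_int_sequences_orderIso_irrationals :
    Nonempty (Lex (ℕ → ℤ) ≃o {x : ℝ // Irrational x}) := by
  obtain ⟨ψ⟩ := Order.iso_of_countable_dense (α := LexIrr.G) (β := ℚ)
  refine ⟨StrictMono.orderIsoOfSurjective
    (fun u => ⟨LexIrr.f ψ u, LexIrr.f_irrational ψ u⟩) ?_ ?_⟩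
  · intro u v h
    exact Subtype.mk_lt_mk.mpr (LexIrr.f_strictMono ψ h)
  · rintro ⟨x, hx⟩
    exact ⟨toLex (LexIrr.sq ψ x), Subtype.ext (LexIrr.f_surj_aux ψ hx)⟩
end

section
/- In the lexicographically ordered ℤ^ω, every bounded increasing sequence either converges to a point of ℤ^ω or its coordinatewise behavior determines a finite sequence gap; formally, the linear order R = ℤ^ω ∪ ℤ^{<ω} (with the order where u < v iff they first differ at an index where u is smaller, or v is a finite sequence properly extended by u) is a complete dense linear order without endpoints in which both ℤ^ω and ℤ^{<ω} are dense. -/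
/-- Nonempty finite integer sequences. -/
def FinSeq : Type := {l : List ℤ // l ≠ []}

/-- The underlying set of `R = ℤ^ω ∪ ℤ^{<ω}`. -/
def RType : Type := (ℕ → ℤ) ⊕ FinSeq

/-- The `i`-th coordinate of an element of `R` (is `none` when a finite sequence has
run out). -/
def coordR (x : RType) (i : ℕ) : Option ℤ :=
  match x with
  | Sum.inl u => some (u i)
  | Sum.inr l => l.1[i]?

/-- The order on `R`: for distinct `u, v`, `u < v` iff at the least index where they
differ either both are defined and `u` is smaller there, or `v` is a finite sequence that
`u` properly extends. -/
def RLt (u v : RType) : Prop :=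
  ∃ i : ℕ, (∀ j < i, coordR u j = coordR v j) ∧
    ((∃ a b : ℤ, coordR u i = some a ∧ coordR v i = some b ∧ a < b) ∨
      (coordR v i = none ∧ coordR u i ≠ none))

namespace RAux


lemma coordR_injective {x y : RType} (h : ∀ i, coordR x i = coordR y i) : x = y := by
  cases x with
  | inl u =>
    cases y with
    | inl v =>
      have : u = v := funext fun i => by
        have := h i; simpa [coordR] using this
      rw [this]
    | inr l =>
      exfalso
      have := h l.1.length
      simp [coordR, List.getElem?_eq_none (le_refl l.1.length)] at this
  | inr l =>
    cases y with
    | inl v =>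
      exfalso
      have := h l.1.length
      simp [coordR, List.getElem?_eq_none (le_refl l.1.length)] at this
    | inr m =>
      have : l.1 = m.1 := List.ext_getElem? fun i => h i
      cases l; cases m; simp_all; rfl

noncomputable def embR (x : RType) : Lex (ℕ → WithTop ℤ) :=
  toLex fun i => (coordR x i).elim ⊤ (fun a => (a : WithTop ℤ))

lemma elim_inj : Function.Injective (fun o : Option ℤ => o.elim ⊤ (fun a => (a : WithTop ℤ))) := by
  rintro (_|a) (_|b) h
  · rfl
  · exact ((WithTop.coe_ne_top (α := ℤ)) h.symm).elim
  · exact ((WithTop.coe_ne_top (α := ℤ)) h).elim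
  · simpa [WithTop.coe_eq_coe] using h

lemma embR_injective : Function.Injective embR := by
  intro x y h
  refine coordR_injective fun i => elim_inj ?_
  exact congrFun (congrArg ofLex h) i

noncomputable def RLO : LinearOrder RType := LinearOrder.lift' embR embR_injective

lemma elim_lt_iff (o p : Option ℤ) :
    (o.elim ⊤ (fun a => (a : WithTop ℤ)) < p.elim ⊤ (fun a => (a : WithTop ℤ))) ↔
      ((∃ a b : ℤ, o = some a ∧ p = some b ∧ a < b) ∨ (p = none ∧ o ≠ none)) := by
  rcases o with _|a <;> rcases p with _|b <;>
    simp [WithTop.coe_lt_coe, WithTop.coe_lt_top]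

lemma RLO_lt_iff (u v : RType) : RLO.lt u v ↔ RLt u v := by
  show embR u < embR v ↔ _
  show Pi.Lex (· < ·) (fun {_} => (· < ·)) (ofLex (embR u)) (ofLex (embR v)) ↔ _
  unfold Pi.Lex
  refine exists_congr fun i => and_congr ?_ ?_
  · exact forall₂_congr fun j _ => ⟨fun h => elim_inj h, fun h => show (coordR u j).elim _ _ = (coordR v j).elim _ _ by rw [h]⟩
  · exact elim_lt_iff _ _

lemma RLO_le_iff (u v : RType) : RLO.le u v ↔ (u = v ∨ RLt u v) := by
  letI := RLO
  show u ≤ v ↔ _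
  rw [le_iff_lt_or_eq]
  rw [show (u < v) = RLO.lt u v from rfl, RLO_lt_iff]
  tauto



lemma coordR_zero (x : RType) : ∃ a, coordR x 0 = some a := by
  cases x with
  | inl u => exact ⟨u 0, rfl⟩
  | inr l =>
    have h0 : 0 < l.1.length := List.length_pos_iff.mpr l.2
    exact ⟨l.1[0], by simp [coordR, List.getElem?_eq_getElem h0]⟩

lemma coordR_none_mono {x : RType} {i j : ℕ} (h : coordR x i = none) (hij : i ≤ j) :
    coordR x j = none := by
  cases x with
  | inl u => simp [coordR] at h
  | inr l =>
    simp only [coordR, List.getElem?_eq_none_iff] at h ⊢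
    omega

lemma coordR_some_of_le {x : RType} {i j : ℕ} (h : coordR x i ≠ none) (hij : j ≤ i) :
    coordR x j ≠ none := fun hn => h (coordR_none_mono hn hij)

/-- default value of a coordinate -/
def pv (x : RType) (j : ℕ) : ℤ := (coordR x j).getD 0

lemma coordR_eq_pv {x : RType} {j : ℕ} (h : coordR x j ≠ none) :
    coordR x j = some (pv x j) := by
  rcases Option.ne_none_iff_exists'.mp h with ⟨a, ha⟩
  simp [pv, ha]

lemma noMin (x : RType) : ∃ y, RLt y x := by
  obtain ⟨a, ha⟩ := coordR_zero x
  refine ⟨Sum.inl fun _ => a - 1, 0, fun j hj => absurd hj (Nat.not_lt_zero j), Or.inl ⟨a - 1, a, rfl, ha, by omega⟩⟩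

lemma noMax (x : RType) : ∃ y, RLt x y := by
  obtain ⟨a, ha⟩ := coordR_zero x
  refine ⟨Sum.inl fun _ => a + 1, 0, fun j hj => absurd hj (Nat.not_lt_zero j), Or.inl ⟨a, a + 1, ha, rfl, by omega⟩⟩

lemma dense_inl {a b : RType} (h : RLt a b) :
    ∃ u : ℕ → ℤ, RLt a (Sum.inl u) ∧ RLt (Sum.inl u) b := by
  obtain ⟨i, hpre, hcase⟩ := h
  rcases hcase with ⟨x, y, hx, hy, hxy⟩ | ⟨hbn, han⟩
  · -- both defined at i, x < y
    have hbj : ∀ j ≤ i, coordR b j = some (pv b j) := fun j hj =>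
      coordR_eq_pv (coordR_some_of_le (by rw [hy]; exact Option.some_ne_none y) hj)
    refine ⟨fun j => if j ≤ i then pv b j else pv b j - 1, ⟨i, ?_, ?_⟩, ⟨i + 1, ?_, ?_⟩⟩
    · intro j hj
      rw [hpre j hj, hbj j hj.le]
      simp [coordR, hj.le]
    · refine Or.inl ⟨x, pv b i, hx, ?_, ?_⟩
      · simp [coordR]
      · have h2 : y = pv b i := Option.some.inj (hy.symm.trans (hbj i le_rfl))
        omega
    · intro j hj
      have hj' : j ≤ i := Nat.lt_succ_iff.mp hj
      rw [hbj j hj']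
      simp [coordR, hj']
    · rcases Option.eq_none_or_eq_some (coordR b (i + 1)) with hn | ⟨z, hz⟩
      · exact Or.inr ⟨hn, by simp [coordR]⟩
      · refine Or.inl ⟨pv b (i + 1) - 1, z, ?_, hz, ?_⟩
        · simp [coordR]
        · have h2 : z = pv b (i+1) := Option.some.inj
            (hz.symm.trans (coordR_eq_pv (by simp [hz])))
          omega
  · -- b runs out at i, a defined
    have haj : ∀ j ≤ i, coordR a j = some (pv a j) := fun j hj =>
      coordR_eq_pv (coordR_some_of_le han hj)
    refine ⟨fun j => if j < i then pv a j else if j = i then pv a i + 1 else 0,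
      ⟨i, ?_, ?_⟩, ⟨i, ?_, ?_⟩⟩
    · intro j hj
      rw [haj j hj.le]; simp [coordR, hj]
    · refine Or.inl ⟨pv a i, pv a i + 1, haj i le_rfl, ?_, by omega⟩
      simp [coordR]
    · intro j hj
      rw [← hpre j hj, haj j hj.le]; simp [coordR, hj]
    · exact Or.inr ⟨hbn, by simp [coordR]⟩

lemma RLt_trans {a b c : RType} (h1 : RLt a b) (h2 : RLt b c) : RLt a c := by
  letI := RLO
  rw [← RLO_lt_iff] at h1 h2 ⊢
  exact lt_trans (show a < b from h1) (show b < c from h2)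

lemma getl (u : ℕ → ℤ) (i j : ℕ) (hj : j < i + 1) :
    ((List.range (i+1)).map u)[j]? = some (u j) := by
  rw [List.getElem?_map, List.getElem?_range hj]; rfl

lemma getl_none (u : ℕ → ℤ) (i j : ℕ) (hj : i + 1 ≤ j) :
    ((List.range (i+1)).map u)[j]? = none := by
  rw [List.getElem?_eq_none]; simpa

lemma dense_inr {a b : RType} (h : RLt a b) :
    ∃ l : FinSeq, RLt a (Sum.inr l) ∧ RLt (Sum.inr l) b := by
  obtain ⟨u, hau, hub⟩ := dense_inl h
  obtain ⟨i, hpre, hcase⟩ := hub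
  have hlen : ((List.range (i+1)).map u).length = i + 1 := by simp
  have hne : (List.range (i+1)).map u ≠ [] := by
    intro hh; rw [← List.length_eq_zero_iff] at hh; omega
  refine ⟨⟨(List.range (i+1)).map u, hne⟩, ?_, ?_⟩
  · -- a < u < l
    have hul : RLt (Sum.inl u) (Sum.inr ⟨_, hne⟩) := by
      refine ⟨i + 1, fun j hj => ?_, Or.inr ⟨?_, by simp [coordR]⟩⟩
      · exact (getl u i j hj).symm
      · show coordR (Sum.inr ⟨_, hne⟩) (i+1) = none
        exact getl_none u i (i+1) le_rfl
    exact RLt_trans hau hul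
  · refine ⟨i, fun j hj => ?_, ?_⟩
    · rw [← hpre j hj]
      exact getl u i j (by omega)
    · have hli : coordR (Sum.inr ⟨_, hne⟩) i = some (u i) := by
        simp [coordR, List.getElem?_map, List.getElem?_range (by omega : i < i + 1)]
      rcases hcase with ⟨x, y, hx, hy, hxy⟩ | ⟨hbn, _⟩
      · have hux : u i = x := by simpa [coordR] using hx
        exact Or.inl ⟨u i, y, hli, hy, by rw [hux]; exact hxy⟩
      · exact Or.inr ⟨hbn, by rw [hli]; simp⟩

variable (S : Set RType)


def agrees (p : List ℤ) (x : RType) : Prop := ∀ j < p.length, coordR x j = p[j]?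

def Sk (p : List ℤ) : Set RType := {x ∈ S | agrees p x}

lemma mem_Sk {p x} : x ∈ Sk S p ↔ x ∈ S ∧ agrees p x := Iff.rfl

def coordSet (p : List ℤ) : Set ℤ := {a | ∃ x ∈ Sk S p, coordR x p.length = some a}

open scoped Classical in
noncomputable def chooseNext (p : List ℤ) : Option ℤ :=
  if h : (∀ x ∈ Sk S p, coordR x p.length ≠ none) ∧ (∃ a, a ∈ coordSet S p) ∧
      (∃ b, ∀ a ∈ coordSet S p, a ≤ b) then
    some (Classical.choose (Int.exists_greatest_of_bdd (by
      obtain ⟨b, hb⟩ := h.2.2; exact ⟨b, fun z hz => hb z hz⟩) h.2.1))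
  else none

lemma chooseNext_some {p m} (h : chooseNext S p = some m) :
    (∀ x ∈ Sk S p, coordR x p.length ≠ none) ∧ m ∈ coordSet S p ∧
      ∀ a ∈ coordSet S p, a ≤ m := by
  classical
  unfold chooseNext at h
  split_ifs at h with hc
  have hm := Option.some.inj h
  have spec := Classical.choose_spec (Int.exists_greatest_of_bdd (by
    obtain ⟨b, hb⟩ := hc.2.2; exact ⟨b, fun z hz => hb z hz⟩) hc.2.1)
  rw [hm] at spec
  exact ⟨hc.1, spec.1, spec.2⟩

lemma chooseNext_none {p} (h : chooseNext S p = none) :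
    ¬((∀ x ∈ Sk S p, coordR x p.length ≠ none) ∧ (∃ a, a ∈ coordSet S p) ∧
      (∃ b, ∀ a ∈ coordSet S p, a ≤ b)) := by
  classical
  intro hc
  unfold chooseNext at h
  rw [dif_pos hc] at h
  simp at h

noncomputable def seqp : ℕ → List ℤ
  | 0 => []
  | k+1 => match chooseNext S (seqp k) with
    | some m => seqp k ++ [m]
    | none => seqp k

lemma seqp_zero : seqp S 0 = [] := rfl

lemma seqp_succ_some {k m} (h : chooseNext S (seqp S k) = some m) :
    seqp S (k+1) = seqp S k ++ [m] := by
  show (match chooseNext S (seqp S k) with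
    | some m => seqp S k ++ [m]
    | none => seqp S k) = _
  rw [h]

lemma seqp_succ_none {k} (h : chooseNext S (seqp S k) = none) :
    seqp S (k+1) = seqp S k := by
  show (match chooseNext S (seqp S k) with
    | some m => seqp S k ++ [m]
    | none => seqp S k) = _
  rw [h]

lemma agrees_append {p : List ℤ} {m : ℤ} {x : RType} (hx : agrees p x)
    (hm : coordR x p.length = some m) : agrees (p ++ [m]) x := by
  intro j hj
  rw [List.length_append, List.length_singleton] at hj
  rcases Nat.lt_succ_iff_lt_or_eq.mp hj with hj' | rfl
  · rw [List.getElem?_append_left hj']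
    exact hx j hj'
  · rw [List.getElem?_concat_length]
    exact hm

lemma Sk_nonempty (hS : S.Nonempty) : ∀ k, (Sk S (seqp S k)).Nonempty := by
  intro k
  induction k with
  | zero => exact hS.imp fun x hx => ⟨hx, fun j hj => by simp [seqp_zero] at hj⟩
  | succ k ih =>
    rcases hcn : chooseNext S (seqp S k) with _ | m
    · rw [seqp_succ_none S hcn]; exact ih
    · obtain ⟨_, ⟨x, hxSk, hxm⟩, _⟩ := chooseNext_some S hcn
      rw [seqp_succ_some S hcn]
      exact ⟨x, hxSk.1, agrees_append hxSk.2 hxm⟩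

lemma seqp_prefix {k k' : ℕ} (h : k ≤ k') : seqp S k <+: seqp S k' := by
  induction k', (h : k ≤ k') using Nat.le_induction with
  | base => exact List.prefix_refl _
  | succ n hn ih =>
    refine ih.trans ?_
    rcases hcn : chooseNext S (seqp S n) with _ | m
    · rw [seqp_succ_none S hcn]
    · rw [seqp_succ_some S hcn]; exact List.prefix_append _ _

lemma seqp_getElem?_stable {k k' j : ℕ} (h : k ≤ k') (hj : j < (seqp S k).length) :
    (seqp S k')[j]? = (seqp S k)[j]? := by
  obtain ⟨t, ht⟩ := seqp_prefix S h
  rw [← ht, List.getElem?_append_left hj]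

def below (y : RType) (p : List ℤ) : Prop :=
  ∃ j < p.length, (∀ j' < j, coordR y j' = p[j']?) ∧
    ∃ a b, coordR y j = some a ∧ p[j]? = some b ∧ a < b

lemma below_mono {y : RType} {p q : List ℤ} (hpq : p <+: q) (h : below y p) : below y q := by
  obtain ⟨j, hj, pre, a, b, ha, hb, hab⟩ := h
  obtain ⟨t, rfl⟩ := hpq
  refine ⟨j, by simp; omega, fun j' hj' => ?_, a, b, ha, ?_, hab⟩
  · rw [List.getElem?_append_left (by omega)]; exact pre j' hj'
  · rw [List.getElem?_append_left hj]; exact hb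

lemma mem_or_below (y : RType) (hy : y ∈ S) (k : ℕ) :
    y ∈ Sk S (seqp S k) ∨ below y (seqp S k) := by
  induction k with
  | zero => exact Or.inl ⟨hy, fun j hj => by simp [seqp_zero] at hj⟩
  | succ k ih =>
    rcases hcn : chooseNext S (seqp S k) with _ | m
    · rw [seqp_succ_none S hcn]; exact ih
    · rw [seqp_succ_some S hcn]
      rcases ih with hmem | hbel
      · obtain ⟨hns, _, hmax⟩ := chooseNext_some S hcn
        have hysome := hns y hmem
        obtain ⟨a, ha⟩ := Option.ne_none_iff_exists'.mp hysome
        have haS : a ∈ coordSet S (seqp S k) := ⟨y, hmem, ha⟩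
        rcases eq_or_lt_of_le (hmax a haS) with rfl | hlt
        · exact Or.inl ⟨hy, agrees_append hmem.2 ha⟩
        · refine Or.inr ⟨(seqp S k).length, by simp, fun j' hj' => ?_, a, m, ha, ?_, hlt⟩
          · rw [List.getElem?_append_left hj']; exact hmem.2 j' hj'
          · exact List.getElem?_concat_length
      · exact Or.inr (below_mono (List.prefix_append _ _) hbel)

lemma coordSet_nil_bdd (ub : RType) (hub : ∀ x ∈ S, x = ub ∨ RLt x ub) :
    ∀ a ∈ coordSet S [], a ≤ pv ub 0 := by
  rintro a ⟨x, hxSk, hxa⟩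
  simp only [List.length_nil] at hxa
  obtain ⟨b0, hb0⟩ := coordR_zero ub
  have hpv : pv ub 0 = b0 := by simp [pv, hb0]
  rcases hub x hxSk.1 with rfl | hlt
  · rw [hb0] at hxa
    have := Option.some.inj hxa
    omega
  · obtain ⟨i, pre, cs⟩ := hlt
    rcases Nat.eq_zero_or_pos i with rfl | hi
    · rcases cs with ⟨a', b', ha', hb', h'⟩ | ⟨hn, _⟩
      · have h1 := Option.some.inj (hxa.symm.trans ha')
        have h2 := Option.some.inj (hb0.symm.trans hb')
        omega
      · rw [hn] at hb0; cases hb0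
    · have h1 := Option.some.inj (hxa.symm.trans ((pre 0 hi).trans hb0))
      omega

lemma chooseNext_nil_ne_none (hS : S.Nonempty) (ub : RType)
    (hub : ∀ x ∈ S, x = ub ∨ RLt x ub) : chooseNext S [] ≠ none := by
  intro h
  refine chooseNext_none S h ⟨?_, ?_, ⟨pv ub 0, coordSet_nil_bdd S ub hub⟩⟩
  · intro x hx hn
    obtain ⟨a, ha⟩ := coordR_zero x
    rw [show ([] : List ℤ).length = 0 from rfl, ha] at hn
    cases hn
  · obtain ⟨x, hx⟩ := hS
    obtain ⟨a, ha⟩ := coordR_zero x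
    exact ⟨a, x, ⟨hx, fun j hj => by simp at hj⟩, ha⟩

theorem exists_lub_aux (hS : S.Nonempty) (ub : RType)
    (hub : ∀ x ∈ S, x = ub ∨ RLt x ub) :
    ∃ L : RType, (∀ y ∈ S, y = L ∨ RLt y L) ∧ (∀ c, RLt c L → ∃ x ∈ S, RLt c x) := by
  by_cases hB : ∃ k, chooseNext S (seqp S k) = none
  case neg =>
    push_neg at hB
    have lenA : ∀ k, (seqp S k).length = k := by
      intro k; induction k with
      | zero => rfl
      | succ k ih =>
        obtain ⟨m, hm⟩ := Option.ne_none_iff_exists'.mp (hB k)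
        rw [seqp_succ_some S hm, List.length_append, List.length_singleton, ih]
    set u : ℕ → ℤ := fun j => ((seqp S (j+1))[j]?).getD 0 with hu
    have uj_eq : ∀ j, (seqp S (j+1))[j]? = some (u j) := by
      intro j
      obtain ⟨m, hm⟩ := Option.ne_none_iff_exists'.mp (hB j)
      have h1 : (seqp S (j+1))[j]? = some m := by
        rw [seqp_succ_some S hm]
        have h2 := List.getElem?_concat_length (l := seqp S j) (a := m)
        rw [lenA j] at h2
        exact h2
      rw [h1, hu]
      simp [h1]
    have pcoordA : ∀ k j, j < k → (seqp S k)[j]? = some (u j) := by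
      intro k j hj
      rw [seqp_getElem?_stable S (show j+1 ≤ k from hj) (by rw [lenA]; omega), uj_eq]
    refine ⟨Sum.inl u, ?_, ?_⟩
    · intro y hy
      by_cases hbel : ∃ k, below y (seqp S k)
      · obtain ⟨k, j, hj, pre, a, b, ha, hb, hab⟩ := hbel
        rw [lenA] at hj
        refine Or.inr ⟨j, fun j' hj' => ?_, Or.inl ⟨a, u j, ha, rfl, ?_⟩⟩
        · rw [pre j' hj', pcoordA k j' (hj'.trans hj)]
          rfl
        · have := Option.some.inj ((pcoordA k j hj).symm.trans hb)
          omega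
      · push_neg at hbel
        have hmem : ∀ k, y ∈ Sk S (seqp S k) := fun k =>
          (mem_or_below S y hy k).resolve_right (hbel k)
        refine Or.inl (coordR_injective fun j => ?_)
        have hyj := (hmem (j+1)).2 j (by rw [lenA]; omega)
        rw [hyj, uj_eq j]
        rfl
    · intro c hc
      obtain ⟨i, pre, cs⟩ := hc
      rcases cs with ⟨a, b, ha, hb, hab⟩ | ⟨hn, _⟩
      · obtain ⟨x, hxSk⟩ := Sk_nonempty S hS (i+1)
        have hxc : ∀ j, j ≤ i → coordR x j = some (u j) := fun j hj => by
          rw [hxSk.2 j (by rw [lenA]; omega), pcoordA (i+1) j (by omega)]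
        refine ⟨x, hxSk.1, i, fun j hj => ?_, Or.inl ⟨a, u i, ha, hxc i le_rfl, ?_⟩⟩
        · rw [pre j hj, show coordR (Sum.inl u) j = some (u j) from rfl, hxc j (le_of_lt hj)]
        · have : u i = b := Option.some.inj hb
          omega
      · exact absurd hn (by simp [coordR])
  case pos =>
    classical
    set k := Nat.find hB with hkdef
    have hcn : chooseNext S (seqp S k) = none := Nat.find_spec hB
    have hmin : ∀ j, j < k → chooseNext S (seqp S j) ≠ none := fun j hj => Nat.find_min hB hj
    have lenB : ∀ j, j ≤ k → (seqp S j).length = j := by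
      intro j hj
      induction j with
      | zero => rfl
      | succ n ih =>
        obtain ⟨m, hm⟩ := Option.ne_none_iff_exists'.mp (hmin n (by omega))
        rw [seqp_succ_some S hm, List.length_append, List.length_singleton, ih (by omega)]
    have hk0 : k ≠ 0 := by
      intro h0
      exact chooseNext_nil_ne_none S hS ub hub (by rw [← seqp_zero S]; rw [h0] at hcn; exact hcn)
    set p := seqp S k with hp
    have hplen : p.length = k := lenB k le_rfl
    have hpne : p ≠ [] := by
      intro h
      rw [h] at hplen
      exact hk0 (by simpa using hplen.symm)
    set L : RType := Sum.inr ⟨p, hpne⟩ with hL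
    have coordL : ∀ j, coordR L j = p[j]? := fun j => rfl
    have coordL_none : ∀ j, k ≤ j → coordR L j = none := fun j hj => by
      rw [coordL]
      exact List.getElem?_eq_none (by rw [hplen]; exact hj)
    have x_eq_L : ∀ x ∈ Sk S p, coordR x k = none → x = L := by
      intro x hxSk hxn
      refine coordR_injective fun j => ?_
      rcases lt_or_ge j k with hj | hj
      · rw [hxSk.2 j (by rw [hplen]; exact hj), coordL]
      · rw [coordR_none_mono hxn hj, coordL_none j hj]
    have mem_le : ∀ y ∈ Sk S p, y = L ∨ RLt y L := by
      intro y hySk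
      rcases Option.eq_none_or_eq_some (coordR y k) with hyn | ⟨a, hya⟩
      · exact Or.inl (x_eq_L y hySk hyn)
      · refine Or.inr ⟨k, fun j hj => ?_, Or.inr ⟨coordL_none k le_rfl, by rw [hya]; simp⟩⟩
        rw [hySk.2 j (by rw [hplen]; exact hj), coordL]
    refine ⟨L, ?_, ?_⟩
    · intro y hy
      rcases mem_or_below S y hy k with hmem | hbel
      · exact mem_le y hmem
      · obtain ⟨j, hj, pre, a, b, ha, hb, hab⟩ := hbel
        exact Or.inr ⟨j, fun j' hj' => by rw [pre j' hj', coordL],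
          Or.inl ⟨a, b, ha, by rw [coordL]; exact hb, hab⟩⟩
    · intro c hc
      obtain ⟨i, pre, cs⟩ := hc
      rcases cs with ⟨a, b, ha, hb, hab⟩ | ⟨hn, hs⟩
      · rw [coordL] at hb
        have hik : i < k := by
          by_contra hik
          rw [List.getElem?_eq_none (by rw [hplen]; omega)] at hb
          cases hb
        obtain ⟨x, hxSk⟩ := Sk_nonempty S hS (i+1)
        have hxc : ∀ j, j ≤ i → coordR x j = p[j]? := by
          intro j hj
          rw [hxSk.2 j (by rw [lenB (i+1) (by omega)]; omega)]
          exact (seqp_getElem?_stable S (show i+1 ≤ k from hik)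
            (by rw [lenB (i+1) (by omega)]; omega)).symm
        refine ⟨x, hxSk.1, i, fun j hj => ?_,
          Or.inl ⟨a, b, ha, by rw [hxc i le_rfl]; exact hb, hab⟩⟩
        rw [pre j hj, coordL, ← hxc j (le_of_lt hj)]
      · rw [coordL] at hn
        have hki : k ≤ i := by
          have := List.getElem?_eq_none_iff.mp hn
          omega
        have hik : i = k := by
          rcases eq_or_lt_of_le hki with h | h
          · omega
          · exfalso
            have h1 : coordR c k = none := by rw [pre k h, coordL_none k le_rfl]
            exact hs (coordR_none_mono h1 (le_of_lt h))
        subst hik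
        have hct := coordR_eq_pv hs
        have hnotall := chooseNext_none S hcn
        by_cases hall : ∀ x ∈ Sk S p, coordR x p.length ≠ none
        · obtain ⟨y, hySk⟩ := Sk_nonempty S hS k
          obtain ⟨ay, hay⟩ := Option.ne_none_iff_exists'.mp (hall y hySk)
          have hnonc : ∃ a, a ∈ coordSet S p := ⟨ay, y, hySk, hay⟩
          have hnbdd : ¬ ∃ b, ∀ a ∈ coordSet S p, a ≤ b := fun hbdd =>
            hnotall ⟨hall, hnonc, hbdd⟩
          push_neg at hnbdd
          obtain ⟨a, haS, hta⟩ := hnbdd (pv c k)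
          obtain ⟨x, hxSk, hxa⟩ := haS
          rw [hplen] at hxa
          refine ⟨x, hxSk.1, k, fun j hj => ?_, Or.inl ⟨pv c k, a, hct, hxa, hta⟩⟩
          rw [pre j hj, coordL, hxSk.2 j (by rw [hplen]; exact hj)]
        · push_neg at hall
          obtain ⟨x, hxSk, hxn⟩ := hall
          rw [hplen] at hxn
          have hxL := x_eq_L x hxSk hxn
          refine ⟨x, hxSk.1, ?_⟩
          rw [hxL]
          exact ⟨k, pre, Or.inr ⟨by rw [coordL]; exact hn, hs⟩⟩


end RAux

/-- `R = ℤ^ω ∪ ℤ^{<ω}` with the order above is a complete dense linear order without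
endpoints in which both `ℤ^ω` and `ℤ^{<ω}` are dense. -/
theorem R_is_complete_dense_with_both_parts_dense :
    ∃ inst : LinearOrder RType,
      (∀ u v : RType, inst.lt u v ↔ RLt u v) ∧
      (@DenselyOrdered RType inst.toLT) ∧
      (@NoMinOrder RType inst.toLT) ∧
      (@NoMaxOrder RType inst.toLT) ∧
      (∀ S : Set RType, S.Nonempty → (∃ ub, ∀ x ∈ S, inst.le x ub) →
        ∃ lub, @IsLUB RType inst.toLE S lub) ∧
      (∀ a b : RType, inst.lt a b → ∃ u : ℕ → ℤ,
        inst.lt a (Sum.inl u) ∧ inst.lt (Sum.inl u) b) ∧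
      (∀ a b : RType, inst.lt a b → ∃ l : FinSeq,
        inst.lt a (Sum.inr l) ∧ inst.lt (Sum.inr l) b) := by
  classical
  letI := RAux.RLO
  refine ⟨RAux.RLO, RAux.RLO_lt_iff, ?_, ?_, ?_, ?_, ?_, ?_⟩
  · -- densely ordered
    refine ⟨fun a b h => ?_⟩
    obtain ⟨u, h1, h2⟩ := RAux.dense_inl ((RAux.RLO_lt_iff a b).mp h)
    exact ⟨Sum.inl u, (RAux.RLO_lt_iff _ _).mpr h1, (RAux.RLO_lt_iff _ _).mpr h2⟩
  · refine ⟨fun a => ?_⟩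
    obtain ⟨y, hy⟩ := RAux.noMin a
    exact ⟨y, (RAux.RLO_lt_iff _ _).mpr hy⟩
  · refine ⟨fun a => ?_⟩
    obtain ⟨y, hy⟩ := RAux.noMax a
    exact ⟨y, (RAux.RLO_lt_iff _ _).mpr hy⟩
  · -- completeness
    rintro S hS ⟨ub, hub⟩
    have hub' : ∀ x ∈ S, x = ub ∨ RLt x ub := fun x hx =>
      (RAux.RLO_le_iff x ub).mp (hub x hx)
    obtain ⟨L, hub2, hlst⟩ := RAux.exists_lub_aux S hS ub hub'
    refine ⟨L, fun y hy => (RAux.RLO_le_iff y L).mpr (hub2 y hy), fun b hb => ?_⟩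
    by_contra hnb
    have hbl : b < L := not_le.mp hnb
    obtain ⟨x, hxS, hcx⟩ := hlst b ((RAux.RLO_lt_iff b L).mp hbl)
    have h1 : x ≤ b := hb hxS
    have h2 : b < x := (RAux.RLO_lt_iff b x).mpr hcx
    exact absurd h1 (not_le.mpr h2)
  · intro a b h
    obtain ⟨u, h1, h2⟩ := RAux.dense_inl ((RAux.RLO_lt_iff a b).mp h)
    exact ⟨u, (RAux.RLO_lt_iff _ _).mpr h1, (RAux.RLO_lt_iff _ _).mpr h2⟩
  · intro a b h
    obtain ⟨l, h1, h2⟩ := RAux.dense_inr ((RAux.RLO_lt_iff a b).mp h)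
    exact ⟨l, (RAux.RLO_lt_iff _ _).mpr h1, (RAux.RLO_lt_iff _ _).mpr h2⟩
end

section
/- (Lindenbaum's theorem) If L and M are linear orders such that L is order-isomorphic to an initial segment of M and M is order-isomorphic to a final segment of L, then L is order-isomorphic to M. -/
/-- Lindenbaum's theorem: if `L` is order-isomorphic to an initial segment of `M` and `M`
is order-isomorphic to a final segment of `L`, then `L` and `M` are order-isomorphic. -/
theorem lindenbaum {L M : Type*} [LinearOrder L] [LinearOrder M]
    (f : L ↪o M) (g : M ↪o L)
    (hf : ∀ (x : L) (y : M), y ≤ f x → y ∈ Set.range f)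
    (hg : ∀ (x : M) (y : L), g x ≤ y → y ∈ Set.range g) :
    Nonempty (L ≃o M) := by
  classical
  set Φ : Set L → Set L := fun S => (g '' (f '' S)ᶜ)ᶜ with hΦ
  have Φmono : Monotone Φ := by
    intro S T h
    exact Set.compl_subset_compl.2 (Set.image_mono
      (Set.compl_subset_compl.2 (Set.image_mono h)))
  -- initial segment predicate
  have initΦ : ∀ S : Set L, (∀ a ∈ S, ∀ b, b ≤ a → b ∈ S) →
      (∀ a ∈ Φ S, ∀ b, b ≤ a → b ∈ Φ S) := by
    intro S hS a ha b hb
    by_contra hbn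
    apply ha
    simp only [hΦ, Set.mem_compl_iff, not_not] at hbn ⊢
    obtain ⟨y, hy, rfl⟩ := hbn
    obtain ⟨z, rfl⟩ := hg y a hb
    refine ⟨z, ?_, rfl⟩
    intro hz
    obtain ⟨x, hx, rfl⟩ := hz
    apply hy
    obtain ⟨w, rfl⟩ := hf x y (g.le_iff_le.1 hb)
    exact ⟨w, hS x hx w (f.le_iff_le.1 (g.le_iff_le.1 hb)), rfl⟩
  set F : Set (Set L) := {S | (∀ a ∈ S, ∀ b, b ≤ a → b ∈ S) ∧ Φ S ⊆ S} with hF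
  set A : Set L := ⋂₀ F with hA
  have hAle : ∀ S ∈ F, A ⊆ S := fun S hS => Set.sInter_subset_of_mem hS
  have hAinit : ∀ a ∈ A, ∀ b, b ≤ a → b ∈ A := by
    intro a ha b hb
    rw [hA, Set.mem_sInter] at ha ⊢
    intro S hS
    exact hS.1 a (ha S hS) b hb
  have hΦAA : Φ A ⊆ A := by
    rw [hA]
    intro x hx
    rw [Set.mem_sInter]
    intro S hS
    exact hS.2 (Φmono (hAle S hS) hx)
  have hAΦ : A ⊆ Φ A := hAle (Φ A) ⟨initΦ A hAinit, Φmono hΦAA⟩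
  have hfix : A = Φ A := le_antisymm hAΦ hΦAA
  -- so Aᶜ = g '' (f '' A)ᶜ
  have hcompl : Aᶜ = g '' (f '' A)ᶜ := by
    nth_rewrite 1 [hfix]
    simp [hΦ]
  -- f '' A is an initial segment of M
  have hfAinit : ∀ m ∈ f '' A, ∀ n : M, n ≤ m → n ∈ f '' A := by
    rintro m ⟨x, hx, rfl⟩ n hn
    obtain ⟨w, rfl⟩ := hf x n hn
    exact ⟨w, hAinit x hx w (f.le_iff_le.1 hn), rfl⟩
  -- choose preimages under g for elements outside A
  have hpre : ∀ x : L, x ∉ A → ∃ y : M, y ∉ f '' A ∧ g y = x := by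
    intro x hx
    have : x ∈ g '' (f '' A)ᶜ := by rw [← hcompl]; exact hx
    obtain ⟨y, hy, rfl⟩ := this
    exact ⟨y, hy, rfl⟩
  let e : L → M := fun x => if h : x ∈ A then f x else (hpre x h).choose
  have heA : ∀ x (h : x ∈ A), e x = f x := fun x h => dif_pos h
  have heB : ∀ x (h : x ∉ A), (hpre x h).choose ∉ f '' A ∧ g ((hpre x h).choose) = x :=
    fun x h => (hpre x h).choose_spec
  have heBdef : ∀ x (h : x ∉ A), e x = (hpre x h).choose := fun x h => dif_neg h
  have hmono : StrictMono e := by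
    intro x y hxy
    by_cases hx : x ∈ A
    · by_cases hy : y ∈ A
      · rw [heA x hx, heA y hy]; exact f.lt_iff_lt.2 hxy
      · rw [heA x hx, heBdef y hy]
        have h1 := (heB y hy).1
        have h2 : f x ∈ f '' A := ⟨x, hx, rfl⟩
        rcases lt_or_ge (f x) ((hpre y hy).choose) with h | h
        · exact h
        · exact absurd (hfAinit (f x) h2 _ h) h1
    · have hy : y ∉ A := fun hy => hx (hAinit y hy x hxy.le)
      rw [heBdef x hx, heBdef y hy]
      have h1 : g ((hpre x hx).choose) = x := (heB x hx).2
      have h2 : g ((hpre y hy).choose) = y := (heB y hy).2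
      apply g.lt_iff_lt.1
      rw [h1, h2]; exact hxy
  have hsurj : Function.Surjective e := by
    intro m
    by_cases hm : m ∈ f '' A
    · obtain ⟨x, hx, rfl⟩ := hm
      exact ⟨x, heA x hx⟩
    · have hgm : g m ∉ A := by
        rw [← Set.mem_compl_iff, hcompl]
        exact ⟨m, hm, rfl⟩
      refine ⟨g m, ?_⟩
      rw [heBdef _ hgm]
      have := (heB (g m) hgm).2
      exact g.injective this
  exact ⟨StrictMono.orderIsoOfSurjective e hmono hsurj⟩
end

section
/- Refined Lindenbaum: Suppose X and Y are linear orders with distinguished subsets X₀ ⊆ X and Y₀ ⊆ Y. Suppose f : X → Y is an order-embedding onto an initial segment of Y with f[X₀] = Y₀ ∩ f[X], and g : Y → X is an order-embedding onto a final segment of X with g[Y₀] = X₀ ∩ g[Y]. Then there is an order-isomorphism h : X → Y with h[X₀] = Y₀. -/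
/-- Refined Lindenbaum theorem: if `f : X → Y` is an order-embedding onto an initial
segment of `Y` with `f[X₀] = Y₀ ∩ f[X]`, and `g : Y → X` is an order-embedding onto a
final segment of `X` with `g[Y₀] = X₀ ∩ g[Y]`, then there is an order-isomorphism
`h : X → Y` with `h[X₀] = Y₀`. -/
theorem refined_lindenbaum {X Y : Type*} [LinearOrder X] [LinearOrder Y]
    (X₀ : Set X) (Y₀ : Set Y) (f : X ↪o Y) (g : Y ↪o X)
    (hfInit : ∀ (x : X) (y : Y), y ≤ f x → y ∈ Set.range f)
    (hgFinal : ∀ (y : Y) (x : X), g y ≤ x → x ∈ Set.range g)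
    (hf₀ : f '' X₀ = Y₀ ∩ Set.range f)
    (hg₀ : g '' Y₀ = X₀ ∩ Set.range g) :
    ∃ h : X ≃o Y, h '' X₀ = Y₀ := by
  classical
  set F : Set X → Set X := fun s => (Set.range g)ᶜ ∪ (fun x => g (f x)) '' s with hFdef
  set C : Set X := ⋃ n, F^[n] ∅ with hCdef
  -- each iterate is a lower set
  have hlow : ∀ n : ℕ, ∀ x ∈ F^[n] (∅ : Set X), ∀ x' ≤ x, x' ∈ F^[n] (∅ : Set X) := by
    intro n
    induction n with
    | zero => intro x hx; exact absurd hx (Set.notMem_empty x)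
    | succ n ih =>
      intro x hx x' hx'
      rw [Function.iterate_succ_apply'] at hx ⊢
      by_cases hr : x' ∈ Set.range g
      · obtain ⟨y', hy'⟩ := hr
        rcases hx with hx | ⟨u, hu, hux⟩
        · exact absurd (hgFinal y' x (hy' ▸ hx')) hx
        · have hux' : g (f u) = x := hux
          have hyfu : y' ≤ f u := by
            have h1 : g y' ≤ g (f u) := by rw [hy', hux']; exact hx'
            exact g.le_iff_le.mp h1
          obtain ⟨u', hu'⟩ := hfInit u y' hyfu
          have hu'le : u' ≤ u := f.le_iff_le.mp (hu' ▸ hyfu)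
          exact Or.inr ⟨u', ih u hu u' hu'le, by show g (f u') = x'; rw [hu', hy']⟩
      · exact Or.inl hr
  have hClow : ∀ x ∈ C, ∀ x' ≤ x, x' ∈ C := by
    intro x hx x' hle
    obtain ⟨n, hn⟩ := Set.mem_iUnion.mp hx
    exact Set.mem_iUnion.mpr ⟨n, hlow n x hn x' hle⟩
  -- complement of range g is in C
  have hcompl : (Set.range g)ᶜ ⊆ C := by
    intro x hx
    refine Set.mem_iUnion.mpr ⟨1, ?_⟩
    simp only [Function.iterate_one]
    exact Or.inl hx
  have hmemr : ∀ x, x ∉ C → ∃ y, g y = x := by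
    intro x hx
    by_contra hne
    exact hx (hcompl (fun hr => hne hr))
  -- C is closed under g ∘ f
  have hgfC : ∀ x ∈ C, g (f x) ∈ C := by
    intro x hx
    obtain ⟨n, hn⟩ := Set.mem_iUnion.mp hx
    refine Set.mem_iUnion.mpr ⟨n + 1, ?_⟩
    rw [Function.iterate_succ_apply']
    exact Or.inr ⟨x, hn, rfl⟩
  -- elements of C in range g decompose
  have hdecomp : ∀ x ∈ C, x ∈ Set.range g → ∃ u ∈ C, x = g (f u) := by
    intro x hx hr
    obtain ⟨n, hn⟩ := Set.mem_iUnion.mp hx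
    match n with
    | 0 => exact absurd hn (Set.notMem_empty x)
    | Nat.succ m =>
      rw [Function.iterate_succ_apply'] at hn
      rcases hn with hn | ⟨u, hu, hux⟩
      · exact absurd hr hn
      · exact ⟨u, Set.mem_iUnion.mpr ⟨m, hu⟩, hux.symm⟩
  -- the cross lemma
  have hcross : ∀ x ∈ C, ∀ x' ∉ C, ∀ y', g y' = x' → f x < y' := by
    intro x hx x' hx' y' hy'
    by_contra hle
    push_neg at hle
    obtain ⟨u, hu⟩ := hfInit x y' hle
    have hule : u ≤ x := f.le_iff_le.mp (hu ▸ hle)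
    have huC : u ∈ C := hClow x hx u hule
    have : x' ∈ C := by rw [← hy', ← hu]; exact hgfC u huC
    exact hx' this
  let gi : ∀ x, x ∉ C → Y := fun x hx => (hmemr x hx).choose
  have hgi : ∀ x (hx : x ∉ C), g (gi x hx) = x := fun x hx => (hmemr x hx).choose_spec
  let h : X → Y := fun x => if hx : x ∈ C then f x else gi x hx
  have hmono : StrictMono h := by
    intro a b hab
    by_cases ha : a ∈ C <;> by_cases hb : b ∈ C
    · show h a < h b
      rw [show h a = f a from dif_pos ha, show h b = f b from dif_pos hb]
      exact f.strictMono hab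
    · show h a < h b
      rw [show h a = f a from dif_pos ha, show h b = gi b hb from dif_neg hb]
      exact hcross a ha b hb _ (hgi b hb)
    · exact absurd (hClow b hb a hab.le) ha
    · show h a < h b
      rw [show h a = gi a ha from dif_neg ha, show h b = gi b hb from dif_neg hb]
      have hlt : g (gi a ha) < g (gi b hb) := by rw [hgi a ha, hgi b hb]; exact hab
      exact g.strictMono.lt_iff_lt.mp hlt
  have hsurj : Function.Surjective h := by
    intro y
    by_cases hy : g y ∈ C
    · obtain ⟨u, hu, hux⟩ := hdecomp (g y) hy ⟨y, rfl⟩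
      have hfu : f u = y := g.injective hux.symm
      exact ⟨u, by rw [show h u = f u from dif_pos hu]; exact hfu⟩
    · refine ⟨g y, ?_⟩
      rw [show h (g y) = gi (g y) hy from dif_neg hy]
      exact g.injective (hgi _ hy)
  refine ⟨StrictMono.orderIsoOfSurjective h hmono hsurj, ?_⟩
  have hcoe : ∀ x, (StrictMono.orderIsoOfSurjective h hmono hsurj) x = h x := fun _ => rfl
  ext y
  constructor
  · rintro ⟨x, hx₀, rfl⟩
    rw [hcoe]
    by_cases hx : x ∈ C
    · rw [show h x = f x from dif_pos hx]
      have : f x ∈ Y₀ ∩ Set.range f := hf₀ ▸ ⟨x, hx₀, rfl⟩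
      exact this.1
    · rw [show h x = gi x hx from dif_neg hx]
      have hxg : x ∈ g '' Y₀ := by
        rw [hg₀]
        exact ⟨hx₀, hmemr x hx |>.choose, hgi x hx⟩
      obtain ⟨y₀, hy₀, hgy₀⟩ := hxg
      have : y₀ = gi x hx := g.injective (by rw [hgy₀, hgi x hx])
      exact this ▸ hy₀
  · intro hy
    obtain ⟨x, hx⟩ := hsurj y
    refine ⟨x, ?_, by rw [hcoe]; exact hx⟩
    by_cases hxC : x ∈ C
    · have hfx : f x = y := by rw [← show h x = f x from dif_pos hxC]; exact hx
      have : f x ∈ f '' X₀ := by rw [hf₀, hfx]; exact ⟨hy, x, hfx⟩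
      obtain ⟨x₀, hx₀, hfx₀⟩ := this
      exact (f.injective hfx₀) ▸ hx₀
    · have hgy : g y = x := by
        have : gi x hxC = y := by rw [← show h x = gi x hxC from dif_neg hxC]; exact hx
        rw [← this, hgi x hxC]
      have : g y ∈ X₀ ∩ Set.range g := hg₀ ▸ ⟨y, hy, rfl⟩
      exact hgy ▸ this.1
end

section
/- If X ⊆ ℤ^ω is closed under tail-equivalence, then X is homogeneous: for every open interval I of ℤ^ω (equivalently, of its Dedekind completion), X is order-isomorphic to X ∩ I. -/
/-- Concatenation of a finite integer sequence with an infinite one. -/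
def appendSeq (r : List ℤ) (w : ℕ → ℤ) : ℕ → ℤ := fun n =>
  if h : n < r.length then r.get ⟨n, h⟩ else w (n - r.length)

/-- Tail-equivalence: `u ~ v` iff `u = r⌢w` and `v = s⌢w` for some finite sequences
`r, s` and infinite sequence `w`. -/
def TailEquiv (u v : ℕ → ℤ) : Prop :=
  ∃ (r s : List ℤ) (w : ℕ → ℤ), u = appendSeq r w ∧ v = appendSeq s w

/-- An open interval of a linear order: a nonempty convex subset with neither a top nor a
bottom point. -/
def IsOpenInterval {α : Type*} [LinearOrder α] (I : Set α) : Prop :=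
  I.Nonempty ∧ (∀ a ∈ I, ∀ b ∈ I, ∀ c, a ≤ c → c ≤ b → c ∈ I) ∧
    (∀ a ∈ I, ∃ b ∈ I, a < b) ∧ (∀ a ∈ I, ∃ b ∈ I, b < a)

namespace Homog

abbrev LZ := Lex (ℕ → ℤ)

/-! ### sequence operations -/

def cons (a : ℤ) (w : ℕ → ℤ) : ℕ → ℤ := fun n => Nat.casesOn n a w

@[simp] lemma cons_zero (a : ℤ) (w : ℕ → ℤ) : cons a w 0 = a := rfl
@[simp] lemma cons_succ (a : ℤ) (w : ℕ → ℤ) (n : ℕ) : cons a w (n + 1) = w n := rfl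

def shf (u : ℕ → ℤ) : ℕ → ℤ := fun n => u (n + 1)

@[simp] lemma shf_cons (a : ℤ) (w : ℕ → ℤ) : shf (cons a w) = w := rfl

lemma cons_shf (u : ℕ → ℤ) : cons (u 0) (shf u) = u := by
  funext n; cases n <;> rfl

def drp (k : ℕ) (u : ℕ → ℤ) : ℕ → ℤ := fun n => u (n + k)

@[simp] lemma drp_zero (u : ℕ → ℤ) : drp 0 u = u := rfl

lemma drp_drp (a b : ℕ) (u : ℕ → ℤ) : drp a (drp b u) = drp (a + b) u := by
  funext n; simp [drp, Nat.add_assoc]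

lemma drp_one (u : ℕ → ℤ) : drp 1 u = shf u := rfl

def front (k : ℕ) (u : ℕ → ℤ) : List ℤ := List.ofFn (fun i : Fin k => u i)

@[simp] lemma front_length (k : ℕ) (u : ℕ → ℤ) : (front k u).length = k := by
  simp [front]

@[simp] lemma appendSeq_nil (w : ℕ → ℤ) : appendSeq [] w = w := by
  funext n; simp [appendSeq]

lemma appendSeq_cons (a : ℤ) (r : List ℤ) (w : ℕ → ℤ) :
    appendSeq (a :: r) w = cons a (appendSeq r w) := by
  funext n
  cases n with
  | zero => simp [appendSeq]
  | succ n =>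
      simp only [appendSeq, cons_succ, List.length_cons]
      by_cases h : n < r.length
      · rw [dif_pos (by omega), dif_pos h]
        rfl
      · rw [dif_neg (by omega), dif_neg h]
        congr 1
        omega

lemma appendSeq_append (r s : List ℤ) (w : ℕ → ℤ) :
    appendSeq (r ++ s) w = appendSeq r (appendSeq s w) := by
  induction r with
  | nil => simp
  | cons a r ih => rw [List.cons_append, appendSeq_cons, appendSeq_cons, ih]

lemma appendSeq_front_drp (k : ℕ) (u : ℕ → ℤ) :
    appendSeq (front k u) (drp k u) = u := by
  funext n
  by_cases h : n < k
  · rw [appendSeq, dif_pos (by simpa using h)]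
    simp [front]
  · rw [appendSeq, dif_neg (by simpa using h)]
    simp only [front_length, drp]
    congr 1
    omega

lemma drp_appendSeq (r : List ℤ) (w : ℕ → ℤ) :
    drp r.length (appendSeq r w) = w := by
  funext n
  rw [drp, appendSeq, dif_neg (by omega)]
  congr 1
  omega

lemma appendSeq_apply_lt (r : List ℤ) (w : ℕ → ℤ) (n : ℕ) (h : n < r.length) :
    appendSeq r w n = r.get ⟨n, h⟩ := dif_pos h

lemma appendSeq_apply_ge (r : List ℤ) (w : ℕ → ℤ) (n : ℕ) (h : r.length ≤ n) :
    appendSeq r w n = w (n - r.length) := dif_neg (by omega)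

lemma front_apply (k : ℕ) (u : ℕ → ℤ) (i : ℕ) (h : i < k) :
    (front k u).get ⟨i, by simpa using h⟩ = u i := by simp [front]

lemma front_congr (k : ℕ) (u v : ℕ → ℤ) (h : ∀ j < k, u j = v j) :
    front k u = front k v := by
  simp only [front]
  congr 1
  funext i
  exact h i i.2

/-! ### TailEquiv basic lemmas -/

lemma te_refl (u : ℕ → ℤ) : TailEquiv u u := ⟨[], [], u, by simp, by simp⟩

lemma te_symm {u v : ℕ → ℤ} (h : TailEquiv u v) : TailEquiv v u := by
  obtain ⟨r, s, w, h1, h2⟩ := h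
  exact ⟨s, r, w, h2, h1⟩

lemma te_aux {s r' : List ℤ} {t t' : ℕ → ℤ} (h : appendSeq s t = appendSeq r' t')
    (hle : s.length ≤ r'.length) :
    t = appendSeq (front (r'.length - s.length) t) t' := by
  have h1 : t = drp s.length (appendSeq s t) := (drp_appendSeq s t).symm
  have h2 : drp (r'.length - s.length) t = t' := by
    rw [h1, drp_drp, show r'.length - s.length + s.length = r'.length by omega, h,
      drp_appendSeq]
  rw [← h2]
  exact (appendSeq_front_drp _ _).symm

lemma te_trans {u v w : ℕ → ℤ} (h1 : TailEquiv u v) (h2 : TailEquiv v w) :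
    TailEquiv u w := by
  obtain ⟨r, s, t, hu, hv⟩ := h1
  obtain ⟨s', r', t', hv', hw⟩ := h2
  have key : appendSeq s t = appendSeq s' t' := by rw [← hv, ← hv']
  rcases le_total s.length s'.length with hle | hle
  · have := te_aux key hle
    exact ⟨r ++ front (s'.length - s.length) t, r', t', by
      rw [appendSeq_append, ← this, hu], hw⟩
  · have := te_aux key.symm hle
    exact ⟨r, r' ++ front (s.length - s'.length) t', t, hu, by
      rw [appendSeq_append, ← this, hw]⟩

lemma te_cons (a : ℤ) (u : ℕ → ℤ) : TailEquiv u (cons a u) :=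
  ⟨[], [a], u, by simp, by rw [appendSeq_cons, appendSeq_nil]⟩

lemma te_shf (u : ℕ → ℤ) : TailEquiv u (shf u) :=
  ⟨[u 0], [], shf u, by rw [appendSeq_cons, appendSeq_nil, cons_shf], by simp⟩

lemma te_appendSeq (r : List ℤ) (u : ℕ → ℤ) : TailEquiv u (appendSeq r u) :=
  ⟨[], r, u, by simp, rfl⟩

lemma neg_appendSeq (r : List ℤ) (w : ℕ → ℤ) :
    -(appendSeq r w) = appendSeq (r.map (fun x => -x)) (-w) := by
  funext n
  by_cases h : n < r.length
  · rw [Pi.neg_apply, appendSeq_apply_lt r w n h,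
      appendSeq_apply_lt _ _ n (by simpa using h)]
    simp
  · rw [Pi.neg_apply, appendSeq_apply_ge r w n (by omega),
      appendSeq_apply_ge _ _ n (by simp; omega)]
    simp

lemma te_neg {u v : ℕ → ℤ} (h : TailEquiv u v) : TailEquiv (-u) (-v) := by
  obtain ⟨r, s, w, h1, h2⟩ := h
  exact ⟨r.map (fun x => -x), s.map (fun x => -x), -w, by rw [h1, neg_appendSeq],
    by rw [h2, neg_appendSeq]⟩

/-! ### lex order lemmas -/

lemma lex_lt_iff (u v : ℕ → ℤ) :
    toLex u < toLex v ↔ ∃ k, (∀ j < k, u j = v j) ∧ u k < v k := Iff.rfl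

lemma lt_of_prefix {u v : ℕ → ℤ} (k : ℕ) (h : ∀ j < k, u j = v j) (hk : u k < v k) :
    toLex u < toLex v := ⟨k, h, hk⟩

lemma head_le_of_le {u v : ℕ → ℤ} (h : toLex u ≤ toLex v) : u 0 ≤ v 0 := by
  by_contra hc
  push_neg at hc
  exact absurd h (not_le.2 (lt_of_prefix 0 (by omega) hc))

lemma cons_lt_cons_iff {a b : ℤ} {u v : ℕ → ℤ} :
    toLex (cons a u) < toLex (cons b v) ↔ a < b ∨ (a = b ∧ toLex u < toLex v) := by
  constructor
  · rintro ⟨k, hj, hk⟩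
    cases k with
    | zero => exact Or.inl hk
    | succ k =>
        right
        refine ⟨hj 0 (Nat.succ_pos k), k, fun i hi => ?_, hk⟩
        exact hj (i + 1) (Nat.succ_lt_succ hi)
  · rintro (h | ⟨rfl, k, hj, hk⟩)
    · exact ⟨0, by omega, h⟩
    · refine ⟨k + 1, fun j hjk => ?_, hk⟩
      cases j with
      | zero => rfl
      | succ j => exact hj j (Nat.lt_of_succ_lt_succ hjk)

lemma lex_lt_iff' (u v : ℕ → ℤ) :
    toLex u < toLex v ↔ u 0 < v 0 ∨ (u 0 = v 0 ∧ toLex (shf u) < toLex (shf v)) := by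
  conv_lhs => rw [← cons_shf u, ← cons_shf v]
  exact cons_lt_cons_iff

lemma append_lt_append (r : List ℤ) {u v : ℕ → ℤ} (h : toLex u < toLex v) :
    toLex (appendSeq r u) < toLex (appendSeq r v) := by
  induction r with
  | nil => simpa
  | cons a r ih =>
      rw [appendSeq_cons, appendSeq_cons]
      exact cons_lt_cons_iff.2 (Or.inr ⟨rfl, ih⟩)


/-! ### Nice maps -/

noncomputable section
open Classical Set

/-- A strictly monotone, tail-preserving map with prescribed range. -/
structure Nice (S : Set LZ) where
  f : LZ → LZ
  mono : StrictMono f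
  rng : Set.range f = S
  te : ∀ u : LZ, TailEquiv (ofLex u) (ofLex (f u))

def Nice.congr {S T : Set LZ} (h : S = T) (G : Nice S) : Nice T :=
  ⟨G.f, G.mono, h ▸ G.rng, G.te⟩

def Nice.idn : Nice (Set.univ : Set LZ) :=
  ⟨id, fun _ _ h => h, Set.range_id, fun _ => te_refl _⟩

def Nice.comp {S T : Set LZ} (G : Nice T) (H : Nice S) : Nice (G.f '' S) where
  f := G.f ∘ H.f
  mono := G.mono.comp H.mono
  rng := by rw [Set.range_comp, H.rng]
  te u := te_trans (H.te u) (G.te (H.f u))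

/-- prepend one value -/
def niceCons (a : ℤ) : Nice {v : LZ | ofLex v 0 = a} where
  f u := toLex (cons a (ofLex u))
  mono u v h := cons_lt_cons_iff.2 (Or.inr ⟨rfl, h⟩)
  rng := by
    ext v
    constructor
    · rintro ⟨u, rfl⟩; rfl
    · intro hv
      refine ⟨toLex (shf (ofLex v)), ?_⟩
      show toLex (cons a (shf (ofLex v))) = v
      rw [← hv]
      exact congrArg toLex (cons_shf _)
  te u := te_cons a _

/-- translate the head by `m` -/
def niceTranslate (m : ℤ) : Nice (Set.univ : Set LZ) where
  f u := toLex (cons (ofLex u 0 + m) (shf (ofLex u)))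
  mono u v h := by
    rcases (lex_lt_iff' (ofLex u) (ofLex v)).1 h with h0 | ⟨h0, hs⟩
    · exact cons_lt_cons_iff.2 (Or.inl (by omega))
    · exact cons_lt_cons_iff.2 (Or.inr ⟨by omega, hs⟩)
  rng := by
    rw [Set.eq_univ_iff_forall]
    intro v
    refine ⟨toLex (cons (ofLex v 0 - m) (shf (ofLex v))), ?_⟩
    show toLex (cons (cons (ofLex v 0 - m) (shf (ofLex v)) 0 + m)
      (shf (cons (ofLex v 0 - m) (shf (ofLex v))))) = v
    rw [cons_zero, shf_cons, sub_add_cancel, cons_shf]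
    rfl
  te u := te_trans (te_shf _) (te_cons _ _)

lemma niceTranslate_f (m : ℤ) (u : LZ) :
    (niceTranslate m).f u = toLex (cons (ofLex u 0 + m) (shf (ofLex u))) := rfl

lemma niceTranslate_cancel (m : ℤ) (v : LZ) :
    (niceTranslate m).f ((niceTranslate (-m)).f v) = v := by
  rw [niceTranslate_f, niceTranslate_f]
  show toLex (cons (cons (ofLex v 0 + -m) (shf (ofLex v)) 0 + m)
    (shf (cons (ofLex v 0 + -m) (shf (ofLex v))))) = v
  rw [cons_zero, shf_cons, neg_add_cancel_right, cons_shf]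
  rfl

lemma niceTranslate_head (m : ℤ) (u : LZ) :
    ofLex ((niceTranslate m).f u) 0 = ofLex u 0 + m := rfl

lemma niceTranslate_cancel' (m : ℤ) (v : LZ) :
    (niceTranslate (-m)).f ((niceTranslate m).f v) = v := by
  have := niceTranslate_cancel (-m) v
  rwa [neg_neg] at this

def zbar : ℕ → ℤ := fun _ => 0

@[simp] lemma zbar_apply (n : ℕ) : zbar n = 0 := rfl

lemma zbar_eq_cons : zbar = cons 0 zbar := by
  funext n; cases n <;> rfl

lemma cons_zero_lt_zbar_iff (u : ℕ → ℤ) :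
    toLex (cons 0 u) < toLex zbar ↔ toLex u < toLex zbar := by
  conv_lhs => rw [zbar_eq_cons]
  rw [cons_lt_cons_iff]
  simp

lemma zbar_lt_cons_zero_iff (u : ℕ → ℤ) :
    toLex zbar < toLex (cons 0 u) ↔ toLex zbar < toLex u := by
  conv_lhs => rw [zbar_eq_cons]
  rw [cons_lt_cons_iff]
  simp

lemma head_nonpos_of_lt_zbar {u : ℕ → ℤ} (h : toLex u < toLex zbar) : u 0 ≤ 0 := by
  have := head_le_of_le (u := u) (v := zbar) h.le
  simpa using this

lemma head_nonneg_of_zbar_lt {u : ℕ → ℤ} (h : toLex zbar < toLex u) : 0 ≤ u 0 := by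
  have := head_le_of_le (u := zbar) (v := u) h.le
  simpa using this

lemma head_nonpos_of_le_zbar {u : ℕ → ℤ} (h : toLex u ≤ toLex zbar) : u 0 ≤ 0 := by
  have := head_le_of_le (u := u) (v := zbar) h
  simpa using this

lemma head_nonneg_of_zbar_le {u : ℕ → ℤ} (h : toLex zbar ≤ toLex u) : 0 ≤ u 0 := by
  have := head_le_of_le (u := zbar) (v := u) h
  simpa using this

/-- The fundamental "Hilbert hotel" map onto `{u | 0 ≤ u 0}`. -/
def niceF0 : Nice {v : LZ | 0 ≤ ofLex v 0} where
  f u := if toLex (ofLex u) < toLex zbar then toLex (cons 0 (ofLex u)) else u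
  mono u v h := by
    dsimp only
    by_cases hu : toLex (ofLex u) < toLex zbar
    · by_cases hv : toLex (ofLex v) < toLex zbar
      · rw [if_pos hu, if_pos hv]
        exact cons_lt_cons_iff.2 (Or.inr ⟨rfl, h⟩)
      · rw [if_pos hu, if_neg hv]
        calc toLex (cons 0 (ofLex u)) < toLex zbar := (cons_zero_lt_zbar_iff _).2 hu
        _ ≤ v := not_lt.1 hv
    · by_cases hv : toLex (ofLex v) < toLex zbar
      · exact absurd (h.trans hv) hu
      · rw [if_neg hu, if_neg hv]; exact h
  rng := by
    ext v
    constructor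
    · rintro ⟨u, rfl⟩
      dsimp only
      by_cases hu : toLex (ofLex u) < toLex zbar
      · rw [if_pos hu]
        show (0:ℤ) ≤ cons 0 (ofLex u) 0
        simp
      · rw [if_neg hu]
        exact head_nonneg_of_zbar_le (not_lt.1 hu)
    · intro hv
      have hv : (0:ℤ) ≤ ofLex v 0 := hv
      by_cases hv' : toLex (ofLex v) < toLex zbar
      · have h0 : ofLex v 0 = 0 := le_antisymm (head_nonpos_of_lt_zbar hv') hv
        refine ⟨toLex (shf (ofLex v)), ?_⟩
        have hsh : toLex (shf (ofLex v)) < toLex zbar := by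
          rw [← cons_zero_lt_zbar_iff]
          rw [show cons 0 (shf (ofLex v)) = ofLex v by rw [← h0]; exact cons_shf _]
          exact hv'
        show (if toLex (shf (ofLex v)) < toLex zbar then
          toLex (cons 0 (shf (ofLex v))) else toLex (shf (ofLex v))) = v
        rw [if_pos hsh]
        exact congrArg toLex (by rw [← h0]; exact cons_shf _)
      · exact ⟨v, if_neg hv'⟩
  te u := by
    show TailEquiv (ofLex u) (ofLex (if toLex (ofLex u) < toLex zbar then toLex (cons 0 (ofLex u)) else u))
    by_cases hu : toLex (ofLex u) < toLex zbar
    · rw [if_pos hu]; exact te_cons 0 _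
    · rw [if_neg hu]; exact te_refl _

/-- Mirror map onto `{u | u 0 ≤ 0}`. -/
def niceE0 : Nice {v : LZ | ofLex v 0 ≤ 0} where
  f u := if toLex zbar < toLex (ofLex u) then toLex (cons 0 (ofLex u)) else u
  mono u v h := by
    dsimp only
    by_cases hv : toLex zbar < toLex (ofLex v)
    · by_cases hu : toLex zbar < toLex (ofLex u)
      · rw [if_pos hu, if_pos hv]
        exact cons_lt_cons_iff.2 (Or.inr ⟨rfl, h⟩)
      · rw [if_neg hu, if_pos hv]
        calc (u : LZ) ≤ toLex zbar := not_lt.1 hu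
        _ < toLex (cons 0 (ofLex v)) := (zbar_lt_cons_zero_iff _).2 hv
    · by_cases hu : toLex zbar < toLex (ofLex u)
      · exact absurd (hu.trans h) hv
      · rw [if_neg hu, if_neg hv]; exact h
  rng := by
    ext v
    constructor
    · rintro ⟨u, rfl⟩
      dsimp only
      by_cases hu : toLex zbar < toLex (ofLex u)
      · rw [if_pos hu]
        show cons 0 (ofLex u) 0 ≤ (0:ℤ)
        simp
      · rw [if_neg hu]
        exact head_nonpos_of_le_zbar (not_lt.1 hu)
    · intro hv
      have hv : ofLex v 0 ≤ (0:ℤ) := hv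
      by_cases hv' : toLex zbar < toLex (ofLex v)
      · have h0 : ofLex v 0 = 0 := le_antisymm hv (head_nonneg_of_zbar_lt hv')
        refine ⟨toLex (shf (ofLex v)), ?_⟩
        have hsh : toLex zbar < toLex (shf (ofLex v)) := by
          rw [← zbar_lt_cons_zero_iff]
          rw [show cons 0 (shf (ofLex v)) = ofLex v by rw [← h0]; exact cons_shf _]
          exact hv'
        show (if toLex zbar < toLex (shf (ofLex v)) then
          toLex (cons 0 (shf (ofLex v))) else toLex (shf (ofLex v))) = v
        rw [if_pos hsh]
        exact congrArg toLex (by rw [← h0]; exact cons_shf _)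
      · exact ⟨v, if_neg hv'⟩
  te u := by
    show TailEquiv (ofLex u) (ofLex (if toLex zbar < toLex (ofLex u) then toLex (cons 0 (ofLex u)) else u))
    by_cases hu : toLex zbar < toLex (ofLex u)
    · rw [if_pos hu]; exact te_cons 0 _
    · rw [if_neg hu]; exact te_refl _

/-- onto `{u | m ≤ u 0}` -/
def niceV (m : ℤ) : Nice {v : LZ | m ≤ ofLex v 0} :=
  ((niceTranslate m).comp niceF0).congr (by
    ext v
    constructor
    · rintro ⟨u, hu, rfl⟩
      have hu : (0:ℤ) ≤ ofLex u 0 := hu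
      show m ≤ ofLex u 0 + m
      omega
    · intro hv
      have hv : m ≤ ofLex v 0 := hv
      refine ⟨(niceTranslate (-m)).f v, ?_, niceTranslate_cancel m v⟩
      show (0:ℤ) ≤ ofLex v 0 + -m
      omega)


/-! ### the partial inverse of E0, on `{u | u 0 ≤ 0}` -/

def einv (u : LZ) : LZ :=
  if toLex zbar < toLex (ofLex u) then toLex (shf (ofLex u)) else u

lemma einv_mono {u v : LZ} (hu : ofLex u 0 ≤ 0) (hv : ofLex v 0 ≤ 0) (h : u < v) :
    einv u < einv v := by
  unfold einv
  by_cases h1 : toLex zbar < toLex (ofLex u)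
  · have h2 : toLex zbar < toLex (ofLex v) := h1.trans h
    rw [if_pos h1, if_pos h2]
    have h0u : ofLex u 0 = 0 := le_antisymm hu (head_nonneg_of_zbar_lt h1)
    have h0v : ofLex v 0 = 0 := le_antisymm hv (head_nonneg_of_zbar_lt h2)
    rcases (lex_lt_iff' (ofLex u) (ofLex v)).1 h with h' | ⟨_, h'⟩
    · omega
    · exact h'
  · rw [if_neg h1]
    by_cases h2 : toLex zbar < toLex (ofLex v)
    · rw [if_pos h2]
      have h0v : ofLex v 0 = 0 := le_antisymm hv (head_nonneg_of_zbar_lt h2)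
      have : toLex zbar < toLex (shf (ofLex v)) := by
        rw [← zbar_lt_cons_zero_iff]
        rw [show cons 0 (shf (ofLex v)) = ofLex v by rw [← h0v]; exact cons_shf _]
        exact h2
      exact lt_of_le_of_lt (not_lt.1 h1) this
    · rw [if_neg h2]; exact h

lemma einv_surj (w : LZ) : ∃ u : LZ, ofLex u 0 ≤ 0 ∧ einv u = w := by
  by_cases hw : toLex zbar < toLex (ofLex w)
  · refine ⟨toLex (cons 0 (ofLex w)), by simp, ?_⟩
    unfold einv
    rw [if_pos (show toLex zbar < toLex (ofLex (toLex (cons 0 (ofLex w)))) from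
      (zbar_lt_cons_zero_iff _).2 hw)]
    rfl
  · refine ⟨w, ?_, if_neg hw⟩
    exact head_nonpos_of_le_zbar (not_lt.1 hw)

lemma einv_te (u : LZ) : TailEquiv (ofLex u) (ofLex (einv u)) := by
  unfold einv
  by_cases h : toLex zbar < toLex (ofLex u)
  · rw [if_pos h]; exact te_shf _
  · rw [if_neg h]; exact te_refl _

/-! ### gap-type up-rays -/

def prefixGe : ℤ → List ℤ → Set LZ
  | a, [] => {u | a ≤ ofLex u 0}
  | a, b :: l =>
      {u | a < ofLex u 0 ∨ (ofLex u 0 = a ∧ toLex (shf (ofLex u)) ∈ prefixGe b l)}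

def gapNice : (l : List ℤ) → (a : ℤ) → Nice (prefixGe a l)
  | [], a => (niceV a).congr rfl
  | b :: l, a =>
    let P := gapNice l b
    { f := fun u => if 1 ≤ ofLex u 0 then (niceTranslate a).f u
        else toLex (cons a (ofLex (P.f (einv u))))
      mono := by
        intro u v h
        dsimp only
        have hle : ofLex u 0 ≤ ofLex v 0 := head_le_of_le h.le
        by_cases hu : 1 ≤ ofLex u 0
        · rw [if_pos hu, if_pos (by omega)]
          exact (niceTranslate a).mono h
        · by_cases hv : 1 ≤ ofLex v 0
          · rw [if_neg hu, if_pos hv]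
            refine lt_of_prefix 0 (by omega) ?_
            show a < ofLex v 0 + a
            omega
          · rw [if_neg hu, if_neg hv]
            refine cons_lt_cons_iff.2 (Or.inr ⟨rfl, ?_⟩)
            exact P.mono (einv_mono (by omega) (by omega) h)
      rng := by
        ext v
        constructor
        · rintro ⟨u, rfl⟩
          dsimp only
          by_cases hu : 1 ≤ ofLex u 0
          · rw [if_pos hu]
            exact Or.inl (by show a < ofLex u 0 + a; omega)
          · rw [if_neg hu]
            refine Or.inr ⟨rfl, ?_⟩
            show toLex (shf (cons a (ofLex (P.f (einv u))))) ∈ prefixGe b l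
            rw [shf_cons]
            have : P.f (einv u) ∈ prefixGe b l := by
              have h2 : P.f (einv u) ∈ Set.range P.f := Set.mem_range_self _
              rwa [P.rng] at h2
            simpa using this
        · rintro (hv | ⟨hv0, hvs⟩)
          · refine ⟨(niceTranslate (-a)).f v, ?_⟩
            dsimp only
            rw [if_pos (by rw [niceTranslate_head]; omega)]
            exact niceTranslate_cancel a v
          · obtain ⟨w, hw⟩ : toLex (shf (ofLex v)) ∈ Set.range P.f := by
              rw [P.rng]; exact hvs
            obtain ⟨u, hu0, hu⟩ := einv_surj w
            refine ⟨u, ?_⟩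
            dsimp only
            rw [if_neg (by omega), hu, hw]
            show toLex (cons a (shf (ofLex v))) = v
            rw [← hv0, cons_shf]
            rfl
      te := by
        intro u
        show TailEquiv (ofLex u) (ofLex (if 1 ≤ ofLex u 0 then (niceTranslate a).f u
          else toLex (cons a (ofLex (P.f (einv u))))))
        by_cases hu : 1 ≤ ofLex u 0
        · rw [if_pos hu]; exact (niceTranslate a).te u
        · rw [if_neg hu]
          refine te_trans (einv_te u) (te_trans (P.te (einv u)) ?_)
          exact te_cons a _ }


/-! ### point-type rays -/

lemma f0_head (s : LZ) : 0 ≤ ofLex (niceF0.f s) 0 := by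
  have h : niceF0.f s ∈ Set.range niceF0.f := Set.mem_range_self _
  rw [niceF0.rng] at h
  exact h

def bmapK (y : ℕ → ℤ) (k : ℕ) (s : LZ) : LZ :=
  toLex (appendSeq (front k y) (ofLex ((niceTranslate (y k + 1)).f (niceF0.f s))))

lemma bmapK_coord (y : ℕ → ℤ) (k : ℕ) (s : LZ) {j : ℕ} (hj : j < k) :
    ofLex (bmapK y k s) j = y j := by
  show appendSeq (front k y) _ j = y j
  rw [appendSeq_apply_lt _ _ j (by simpa using hj)]
  exact front_apply k y j hj

lemma bmapK_head_ge (y : ℕ → ℤ) (k : ℕ) (s : LZ) :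
    y k + 1 ≤ ofLex (bmapK y k s) k := by
  show y k + 1 ≤ appendSeq (front k y) _ k
  rw [appendSeq_apply_ge _ _ k (by simp)]
  simp only [front_length, Nat.sub_self]
  have h1 : 0 ≤ ofLex (niceF0.f s) 0 := f0_head s
  show y k + 1 ≤ ofLex (niceF0.f s) 0 + (y k + 1)
  omega

lemma bmapK_mono_s (y : ℕ → ℤ) (k : ℕ) {s s' : LZ} (h : s < s') :
    bmapK y k s < bmapK y k s' :=
  append_lt_append _ ((niceTranslate (y k + 1)).mono (niceF0.mono h))

lemma bmapK_cross (y : ℕ → ℤ) {k k' : ℕ} (s s' : LZ) (h : k' < k) :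
    bmapK y k s < bmapK y k' s' := by
  refine lt_of_prefix k' (fun j hj => ?_) ?_
  · exact (bmapK_coord y k s (hj.trans h)).trans (bmapK_coord y k' s' hj).symm
  · calc ofLex (bmapK y k s) k' = y k' := bmapK_coord y k s h
    _ < y k' + 1 := by omega
    _ ≤ ofLex (bmapK y k' s') k' := bmapK_head_ge y k' s'

lemma bmapK_gt (y : ℕ → ℤ) (k : ℕ) (s : LZ) : toLex y < bmapK y k s := by
  refine lt_of_prefix k (fun j hj => (bmapK_coord y k s hj).symm) ?_
  show y k < ofLex (bmapK y k s) k
  have := bmapK_head_ge y k s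
  omega

def bmap (y : ℕ → ℤ) (w : LZ) : LZ :=
  bmapK y (-(ofLex w 0) - 1).toNat (toLex (shf (ofLex w)))

lemma bmap_mono (y : ℕ → ℤ) {w w' : LZ} (hw : ofLex w 0 ≤ -1) (hw' : ofLex w' 0 ≤ -1)
    (h : w < w') : bmap y w < bmap y w' := by
  rcases (lex_lt_iff' (ofLex w) (ofLex w')).1 h with h0 | ⟨h0, hs⟩
  · exact bmapK_cross y _ _ (by omega)
  · unfold bmap
    rw [h0]
    exact bmapK_mono_s y _ hs

lemma bmap_gt (y : ℕ → ℤ) (w : LZ) : toLex y < bmap y w := bmapK_gt y _ _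

lemma bmap_te (y : ℕ → ℤ) (w : LZ) : TailEquiv (ofLex w) (ofLex (bmap y w)) := by
  refine te_trans (te_shf _) (te_trans (niceF0.te (toLex (shf (ofLex w))))
    (te_trans ((niceTranslate (y _ + 1)).te _) (te_appendSeq _ _)))

lemma bmap_surj (y : ℕ → ℤ) {v : LZ} (hv : toLex y < v) :
    ∃ w : LZ, ofLex w 0 ≤ -1 ∧ bmap y w = v := by
  obtain ⟨k, hagree, hk⟩ := hv
  set t : LZ := toLex (drp k (ofLex v)) with ht
  have hthead : ofLex t 0 = ofLex v k := by simp [ht, drp]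
  have hk2 : y k < ofLex v k := hk
  have hX : 0 ≤ ofLex ((niceTranslate (-(y k + 1))).f t) 0 := by
    rw [niceTranslate_head]
    omega
  obtain ⟨s, hs⟩ : (niceTranslate (-(y k + 1))).f t ∈ Set.range niceF0.f := by
    rw [niceF0.rng]; exact hX
  refine ⟨toLex (cons (-(k : ℤ) - 1) (ofLex s)), by simp, ?_⟩
  have hk' : (-(cons (-(k : ℤ) - 1) (ofLex s) 0) - 1).toNat = k := by
    simp
  unfold bmap
  show bmapK y (-(ofLex (toLex (cons (-(k : ℤ) - 1) (ofLex s))) 0) - 1).toNat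
    (toLex (shf (cons (-(k : ℤ) - 1) (ofLex s)))) = v
  rw [show (ofLex (toLex (cons (-(k : ℤ) - 1) (ofLex s))) 0) = -(k:ℤ) - 1 from rfl,
    show (-(-(k:ℤ) - 1) - 1).toNat = k by omega, shf_cons]
  show toLex (appendSeq (front k y)
    (ofLex ((niceTranslate (y k + 1)).f (niceF0.f (toLex (ofLex s)))))) = v
  rw [show toLex (ofLex s) = s from rfl, hs, niceTranslate_cancel]
  rw [front_congr k y (ofLex v) hagree]
  show toLex (appendSeq (front k (ofLex v)) (drp k (ofLex v))) = v
  rw [appendSeq_front_drp]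
  rfl

def amap (x : ℕ → ℤ) (u : LZ) : LZ :=
  if x 0 < ofLex u 0 then u
  else toLex (cons (x 0) (ofLex (bmap (shf x) ((niceTranslate (-(x 0) - 1)).f u))))

lemma amap_trans_head (x : ℕ → ℤ) (u : LZ) (h : ¬ x 0 < ofLex u 0) :
    ofLex ((niceTranslate (-(x 0) - 1)).f u) 0 ≤ -1 := by
  rw [niceTranslate_head]
  omega

lemma amap_mono (x : ℕ → ℤ) : StrictMono (amap x) := by
  intro u v h
  have hle : ofLex u 0 ≤ ofLex v 0 := head_le_of_le h.le
  unfold amap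
  by_cases hu : x 0 < ofLex u 0
  · rw [if_pos hu, if_pos (by omega)]
    exact h
  · by_cases hv : x 0 < ofLex v 0
    · rw [if_neg hu, if_pos hv]
      exact lt_of_prefix 0 (by omega) (by simpa using hv)
    · rw [if_neg hu, if_neg hv]
      refine cons_lt_cons_iff.2 (Or.inr ⟨rfl, ?_⟩)
      exact bmap_mono _ (amap_trans_head x u hu) (amap_trans_head x v hv)
        ((niceTranslate _).mono h)

lemma amap_gt (x : ℕ → ℤ) (u : LZ) : toLex x < amap x u := by
  unfold amap
  by_cases hu : x 0 < ofLex u 0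
  · rw [if_pos hu]
    exact lt_of_prefix 0 (by omega) hu
  · rw [if_neg hu]
    have := bmap_gt (shf x) ((niceTranslate (-(x 0) - 1)).f u)
    conv_lhs => rw [show x = cons (x 0) (shf x) from (cons_shf x).symm]
    exact cons_lt_cons_iff.2 (Or.inr ⟨rfl, this⟩)

lemma amap_surj (x : ℕ → ℤ) {v : LZ} (hv : toLex x < v) : ∃ u, amap x u = v := by
  obtain ⟨k, hagree, hk⟩ := hv
  cases k with
  | zero =>
      exact ⟨v, by unfold amap; rw [if_pos (show x 0 < ofLex v 0 from hk)]⟩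
  | succ k =>
      have h0 : x 0 = ofLex v 0 := hagree 0 (Nat.succ_pos k)
      have hshl : toLex (shf x) < toLex (shf (ofLex v)) := by
        refine lt_of_prefix k (fun j hj => hagree (j+1) (by omega)) hk
      obtain ⟨w, hw1, hw2⟩ := bmap_surj (shf x) (v := toLex (shf (ofLex v))) hshl
      refine ⟨(niceTranslate (x 0 + 1)).f w, ?_⟩
      unfold amap
      rw [if_neg (by rw [niceTranslate_head]; omega)]
      rw [show (-(x 0) - 1) = -(x 0 + 1) by ring, niceTranslate_cancel', hw2]
      show toLex (cons (x 0) (shf (ofLex v))) = v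
      rw [h0, cons_shf]
      rfl

lemma amap_te (x : ℕ → ℤ) (u : LZ) : TailEquiv (ofLex u) (ofLex (amap x u)) := by
  unfold amap
  by_cases hu : x 0 < ofLex u 0
  · rw [if_pos hu]; exact te_refl _
  · rw [if_neg hu]
    exact te_trans ((niceTranslate (-(x 0) - 1)).te u)
      (te_trans (bmap_te _ _) (te_cons _ _))

def niceA (x : ℕ → ℤ) : Nice {v : LZ | toLex x < v} where
  f := amap x
  mono := amap_mono x
  rng := by
    ext v
    constructor
    · rintro ⟨u, rfl⟩; exact amap_gt x u
    · intro hv; exact amap_surj x hv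
  te := amap_te x


/-! ### classification of up-rays -/

def IsUpRay (U : Set LZ) : Prop :=
  U.Nonempty ∧ U ≠ Set.univ ∧ (∀ u ∈ U, ∀ v, u ≤ v → v ∈ U) ∧ (∀ u ∈ U, ∃ v ∈ U, v < u)

def Sset (V : Set LZ) : Set ℤ := {n | ∀ u : LZ, n ≤ ofLex u 0 → u ∈ V}

lemma exists_least (V : Set LZ) (h : IsUpRay V) :
    ∃ m : ℤ, m ∈ Sset V ∧ ∀ n ∈ Sset V, m ≤ n := by
  obtain ⟨⟨a, ha⟩, hproper, hup, _⟩ := h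
  obtain ⟨c, hc⟩ := Set.ne_univ_iff_exists_notMem _ |>.1 hproper
  have hne : (ofLex a 0 + 1) ∈ Sset V := by
    intro u hu
    refine hup a ha u (le_of_lt (lt_of_prefix (u := ofLex a) (v := ofLex u) 0
      (by omega) ?_))
    show ofLex a 0 < ofLex u 0
    omega
  have hbd : ∀ z : ℤ, z ∈ Sset V → ofLex c 0 ≤ z := by
    intro z hz
    by_contra hzc
    exact hc (hz c (by omega))
  obtain ⟨lb, h1, h2⟩ := Int.exists_least_of_bdd (P := fun z => z ∈ Sset V)
    ⟨ofLex c 0, hbd⟩ ⟨ofLex a 0 + 1, hne⟩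
  exact ⟨lb, h1, h2⟩

def mOf (V : Set LZ) : ℤ :=
  if h : ∃ m : ℤ, m ∈ Sset V ∧ ∀ n ∈ Sset V, m ≤ n then h.choose else 0

lemma mOf_spec (V : Set LZ) (h : IsUpRay V) :
    mOf V ∈ Sset V ∧ ∀ n ∈ Sset V, mOf V ≤ n := by
  have hex := exists_least V h
  unfold mOf
  rw [dif_pos hex]
  exact hex.choose_spec

def nxt (V : Set LZ) : Set LZ := {w : LZ | toLex (cons (mOf V - 1) (ofLex w)) ∈ V}

lemma up_sub (V : Set LZ) (hV : IsUpRay V) : ∀ u ∈ V, mOf V - 1 ≤ ofLex u 0 := by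
  intro u hu
  by_contra hc
  push_neg at hc
  have hS : (ofLex u 0 + 1) ∈ Sset V := by
    intro v hv
    refine hV.2.2.1 u hu v (le_of_lt (lt_of_prefix (u := ofLex u) (v := ofLex v) 0
      (by omega) ?_))
    show ofLex u 0 < ofLex v 0
    omega
  have := (mOf_spec V hV).2 _ hS
  omega

lemma uV_mem_iff (V : Set LZ) (hV : IsUpRay V) (u : LZ) :
    u ∈ V ↔ mOf V ≤ ofLex u 0 ∨
      (ofLex u 0 = mOf V - 1 ∧ toLex (shf (ofLex u)) ∈ nxt V) := by
  constructor
  · intro hu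
    rcases le_or_gt (mOf V) (ofLex u 0) with h | h
    · exact Or.inl h
    · have h0 : ofLex u 0 = mOf V - 1 := le_antisymm (by omega) (up_sub V hV u hu)
      refine Or.inr ⟨h0, ?_⟩
      show toLex (cons (mOf V - 1) (shf (ofLex u))) ∈ V
      rw [show cons (mOf V - 1) (shf (ofLex u)) = ofLex u by rw [← h0]; exact cons_shf _]
      exact hu
  · rintro (h | ⟨h0, hs⟩)
    · exact (mOf_spec V hV).1 u h
    · have : toLex (cons (mOf V - 1) (shf (ofLex u))) ∈ V := hs
      rwa [show cons (mOf V - 1) (shf (ofLex u)) = ofLex u by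
        rw [← h0]; exact cons_shf _] at this

lemma cons_le_cons {a : ℤ} {u v : ℕ → ℤ} (h : toLex u ≤ toLex v) :
    toLex (cons a u) ≤ toLex (cons a v) := by
  rcases eq_or_lt_of_le h with h | h
  · exact le_of_eq (by rw [show u = v from congrArg ofLex h])
  · exact le_of_lt (cons_lt_cons_iff.2 (Or.inr ⟨rfl, h⟩))

lemma nxt_upray (V : Set LZ) (hV : IsUpRay V) (hne : (nxt V).Nonempty) :
    IsUpRay (nxt V) := by
  refine ⟨hne, ?_, ?_, ?_⟩
  · intro hun
    have hS : (mOf V - 1) ∈ Sset V := by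
      intro u hu
      rcases eq_or_lt_of_le hu with h | h
      · have hu' : toLex (cons (mOf V - 1) (shf (ofLex u))) ∈ V := by
          have : toLex (shf (ofLex u)) ∈ nxt V := hun ▸ Set.mem_univ _
          exact this
        rwa [show cons (mOf V - 1) (shf (ofLex u)) = ofLex u by
          rw [h]; exact cons_shf _] at hu'
      · exact (uV_mem_iff V hV u).2 (Or.inl (by omega))
    have := (mOf_spec V hV).2 _ hS
    omega
  · intro w hw w' hww'
    have : toLex (cons (mOf V - 1) (ofLex w)) ≤ toLex (cons (mOf V - 1) (ofLex w')) :=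
      cons_le_cons hww'
    exact hV.2.2.1 _ hw _ this
  · intro w hw
    obtain ⟨v, hv, hvlt⟩ := hV.2.2.2 _ hw
    have hv0 : ofLex v 0 = mOf V - 1 := by
      have h1 := up_sub V hV v hv
      have h2 : ofLex v 0 ≤ cons (mOf V - 1) (ofLex w) 0 := head_le_of_le hvlt.le
      rw [cons_zero] at h2
      omega
    refine ⟨toLex (shf (ofLex v)), ?_, ?_⟩
    · show toLex (cons (mOf V - 1) (shf (ofLex v))) ∈ V
      rwa [show cons (mOf V - 1) (shf (ofLex v)) = ofLex v by
        rw [← hv0]; exact cons_shf _]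
    · have : toLex (cons (ofLex v 0) (shf (ofLex v))) < toLex (cons (mOf V - 1) (ofLex w)) := by
        rw [congrArg toLex (cons_shf (ofLex v))]
        exact hvlt
      rw [hv0] at this
      rcases cons_lt_cons_iff.1 this with h | ⟨_, h⟩
      · omega
      · exact h

lemma nxt_rep_of_empty (V : Set LZ) (hV : IsUpRay V) (h : nxt V = ∅) :
    V = prefixGe (mOf V) [] := by
  ext u
  rw [uV_mem_iff V hV u, h]
  show _ ↔ mOf V ≤ ofLex u 0
  simp

def seqU (U : Set LZ) (k : ℕ) : Set LZ := nxt^[k] U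

lemma seqU_zero (U : Set LZ) : seqU U 0 = U := rfl

lemma seqU_succ (U : Set LZ) (k : ℕ) : seqU U (k + 1) = nxt (seqU U k) :=
  Function.iterate_succ_apply' _ _ _

lemma seqU_succ' (U : Set LZ) (k : ℕ) : seqU U (k + 1) = seqU (nxt U) k :=
  Function.iterate_succ_apply _ _ _

lemma seq_alt (U : Set LZ) (hU : IsUpRay U) : ∀ k, IsUpRay (seqU U k) ∨ seqU U k = ∅ := by
  intro k
  induction k with
  | zero => exact Or.inl hU
  | succ k ih =>
      rcases ih with h | h
      · rcases Set.eq_empty_or_nonempty (nxt (seqU U k)) with he | hne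
        · exact Or.inr (by rw [seqU_succ, he])
        · exact Or.inl (by rw [seqU_succ]; exact nxt_upray _ h hne)
      · refine Or.inr ?_
        rw [seqU_succ, h]
        ext w
        simp [nxt]

lemma gap_rep : ∀ (n : ℕ) (V : Set LZ), IsUpRay V → seqU V (n + 1) = ∅ →
    ∃ a l, V = prefixGe a l := by
  intro n
  induction n with
  | zero =>
      intro V hV h
      rw [seqU_succ, seqU_zero] at h
      exact ⟨mOf V, [], nxt_rep_of_empty V hV h⟩
  | succ n ih =>
      intro V hV h
      rcases Set.eq_empty_or_nonempty (nxt V) with he | hne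
      · exact ⟨mOf V, [], nxt_rep_of_empty V hV he⟩
      · have hnx : IsUpRay (nxt V) := nxt_upray V hV hne
        have h2 : seqU (nxt V) (n + 1) = ∅ := by rw [← seqU_succ']; exact h
        obtain ⟨b, l, hbl⟩ := ih (nxt V) hnx h2
        refine ⟨mOf V - 1, b :: l, ?_⟩
        ext u
        rw [uV_mem_iff V hV u]
        show _ ↔ (mOf V - 1 < ofLex u 0 ∨
          (ofLex u 0 = mOf V - 1 ∧ toLex (shf (ofLex u)) ∈ prefixGe b l))
        rw [← hbl]
        constructor
        · rintro (h' | h')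
          · exact Or.inl (by omega)
          · exact Or.inr h'
        · rintro (h' | h')
          · exact Or.inl (by omega)
          · exact Or.inr h'

lemma shf_drp (k : ℕ) (v : ℕ → ℤ) : shf (drp k v) = drp (k + 1) v := by
  funext n
  show v (n + 1 + k) = v (n + (k + 1))
  congr 1
  omega

lemma point_rep (U : Set LZ) (hU : IsUpRay U) (hall : ∀ k, IsUpRay (seqU U k)) :
    U = {v : LZ | toLex (fun k => mOf (seqU U k) - 1) < v} := by
  set x : ℕ → ℤ := fun k => mOf (seqU U k) - 1 with hx
  have P1 : ∀ (k : ℕ) (u : LZ), (∀ j < k, ofLex u j = x j) →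
      (u ∈ U ↔ toLex (drp k (ofLex u)) ∈ seqU U k) := by
    intro k
    induction k with
    | zero => intro u _; exact Iff.rfl
    | succ k ih =>
        intro u hagree
        rw [ih u (fun j hj => hagree j (by omega))]
        have hhead : ofLex (toLex (drp k (ofLex u))) 0 = x k := by
          show ofLex u (0 + k) = x k
          rw [Nat.zero_add]
          exact hagree k (by omega)
        rw [uV_mem_iff _ (hall k) (toLex (drp k (ofLex u)))]
        rw [seqU_succ]
        constructor
        · rintro (h | ⟨_, h⟩)
          · rw [hhead] at h; simp only [hx] at h; omega
          · rwa [show toLex (shf (ofLex (toLex (drp k (ofLex u))))) =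
              toLex (drp (k+1) (ofLex u)) from congrArg toLex (shf_drp k _)] at h
        · intro h
          refine Or.inr ⟨by rw [hhead], ?_⟩
          rwa [show toLex (shf (ofLex (toLex (drp k (ofLex u))))) =
            toLex (drp (k+1) (ofLex u)) from congrArg toLex (shf_drp k _)]
  have claim : ∀ v : LZ, v < toLex x → v ∉ U := by
    intro v hv hvU
    obtain ⟨k, hagree, hk⟩ := hv
    have h1 := (P1 k v hagree).1 hvU
    have h2 := up_sub _ (hall k) _ h1
    have h3 : ofLex (toLex (drp k (ofLex v))) 0 = ofLex v k := by
      show ofLex v (0 + k) = ofLex v k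
      rw [Nat.zero_add]
    rw [h3] at h2
    have hk' : ofLex v k < mOf (seqU U k) - 1 := hk
    omega
  ext v
  constructor
  · intro hv
    show toLex x < v
    rcases lt_trichotomy (toLex x) v with h | h | h
    · exact h
    · exfalso
      obtain ⟨v', hv', hlt⟩ := hU.2.2.2 v hv
      rw [← h] at hlt
      exact claim v' hlt hv'
    · exact absurd hv (claim v h)
  · intro hv
    obtain ⟨k, hagree, hk⟩ := hv
    refine (P1 k v (fun j hj => (hagree j hj).symm)).2 ?_
    refine (mOf_spec _ (hall k)).1 _ ?_
    show mOf (seqU U k) ≤ ofLex v (0 + k)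
    rw [Nat.zero_add]
    have hk' : mOf (seqU U k) - 1 < ofLex v k := hk
    omega

lemma upRay_nice (U : Set LZ) (hU : IsUpRay U) : Nonempty (Nice U) := by
  by_cases hall : ∀ k, IsUpRay (seqU U k)
  · exact ⟨(niceA _).congr (point_rep U hU hall).symm⟩
  · push_neg at hall
    obtain ⟨K, hK⟩ := hall
    have hKe : seqU U K = ∅ := (seq_alt U hU K).resolve_left hK
    cases K with
    | zero => exact absurd hU (by rwa [seqU_zero] at hK)
    | succ n =>
        obtain ⟨a, l, hal⟩ := gap_rep n U hU hKe
        exact ⟨(gapNice l a).congr hal.symm⟩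


/-! ### negation and down-rays -/

def negL (u : LZ) : LZ := toLex (-(ofLex u))

lemma negL_negL (u : LZ) : negL (negL u) = u := by
  show toLex (-(-(ofLex u))) = u
  rw [neg_neg]
  rfl

lemma negL_lt {u v : LZ} (h : u < v) : negL v < negL u := by
  obtain ⟨k, hj, hk⟩ := h
  refine ⟨k, fun j hjk => ?_, ?_⟩
  · have h1 : ofLex u j = ofLex v j := hj j hjk
    show -(ofLex v j) = -(ofLex u j)
    omega
  · have h1 : ofLex u k < ofLex v k := hk
    show -(ofLex v k) < -(ofLex u k)
    omega

lemma negL_lt_iff {u v : LZ} : negL v < negL u ↔ u < v := by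
  constructor
  · intro h
    have := negL_lt h
    rwa [negL_negL, negL_negL] at this
  · exact negL_lt

lemma negL_le {u v : LZ} (h : u ≤ v) : negL v ≤ negL u := by
  rcases eq_or_lt_of_le h with h | h
  · exact le_of_eq (by rw [h])
  · exact le_of_lt (negL_lt h)

lemma te_negL {u v : LZ} (h : TailEquiv (ofLex u) (ofLex v)) :
    TailEquiv (ofLex (negL u)) (ofLex (negL v)) := te_neg h

def IsDownRay (D : Set LZ) : Prop :=
  D.Nonempty ∧ D ≠ Set.univ ∧ (∀ u ∈ D, ∀ v, v ≤ u → v ∈ D) ∧ (∀ u ∈ D, ∃ v ∈ D, u < v)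

lemma downRay_nice (D : Set LZ) (hD : IsDownRay D) : Nonempty (Nice D) := by
  set U : Set LZ := negL ⁻¹' D with hUdef
  have hmemU : ∀ u : LZ, u ∈ U ↔ negL u ∈ D := fun u => Iff.rfl
  have hUray : IsUpRay U := by
    refine ⟨?_, ?_, ?_, ?_⟩
    · obtain ⟨d, hd⟩ := hD.1
      exact ⟨negL d, by rw [hmemU, negL_negL]; exact hd⟩
    · intro h
      refine hD.2.1 (Set.eq_univ_iff_forall.2 fun v => ?_)
      have : negL v ∈ U := h ▸ Set.mem_univ _
      rwa [hmemU, negL_negL] at this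
    · intro u hu v huv
      rw [hmemU]
      exact hD.2.2.1 (negL u) hu (negL v) (negL_le huv)
    · intro u hu
      obtain ⟨d, hd, hlt⟩ := hD.2.2.2 (negL u) hu
      refine ⟨negL d, by rw [hmemU, negL_negL]; exact hd, ?_⟩
      rw [← negL_negL d] at hlt
      exact negL_lt_iff.1 hlt
  obtain ⟨G⟩ := upRay_nice U hUray
  refine ⟨{ f := fun u => negL (G.f (negL u)), mono := ?_, rng := ?_, te := ?_ }⟩
  · intro u v h
    exact negL_lt (G.mono (negL_lt h))
  · ext v
    constructor
    · rintro ⟨u, rfl⟩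
      have h1 : G.f (negL u) ∈ Set.range G.f := Set.mem_range_self _
      rw [G.rng] at h1
      exact h1
    · intro hv
      have h1 : negL v ∈ U := by rw [hmemU, negL_negL]; exact hv
      rw [← G.rng] at h1
      obtain ⟨w, hw⟩ := h1
      refine ⟨negL w, ?_⟩
      show negL (G.f (negL (negL w))) = v
      rw [negL_negL, hw, negL_negL]
  · intro u
    have h := te_negL (G.te (negL u))
    rwa [show ofLex (negL (negL u)) = ofLex u from congrArg ofLex (negL_negL u)] at h

/-! ### main assembly -/

lemma interval_nice (I : Set LZ) (hI : IsOpenInterval I) : Nonempty (Nice I) := by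
  obtain ⟨hne, hconv, hnomax, hnomin⟩ := hI
  set U : Set LZ := {u : LZ | ∃ a ∈ I, a ≤ u} with hUdef
  have hIU : I ⊆ U := fun a ha => ⟨a, ha, le_refl a⟩
  have hGex : Nonempty (Nice U) := by
    by_cases hu : U = Set.univ
    · exact ⟨Nice.idn.congr hu.symm⟩
    · refine upRay_nice U ⟨?_, hu, ?_, ?_⟩
      · obtain ⟨a, ha⟩ := hne
        exact ⟨a, hIU ha⟩
      · rintro u ⟨a, ha, hau⟩ v huv
        exact ⟨a, ha, hau.trans huv⟩
      · rintro u ⟨a, ha, hau⟩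
        obtain ⟨b, hb, hba⟩ := hnomin a ha
        exact ⟨b, hIU hb, lt_of_lt_of_le hba hau⟩
  obtain ⟨G⟩ := hGex
  set D : Set LZ := G.f ⁻¹' I with hDdef
  have hDne : D.Nonempty := by
    obtain ⟨a, ha⟩ := hne
    have h2 : a ∈ Set.range G.f := by rw [G.rng]; exact hIU ha
    obtain ⟨w, hw⟩ := h2
    exact ⟨w, by show G.f w ∈ I; rw [hw]; exact ha⟩
  by_cases hd : D = Set.univ
  · refine ⟨G.congr ?_⟩
    refine Set.Subset.antisymm ?_ hIU
    intro u hu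
    have h2 : u ∈ Set.range G.f := by rw [G.rng]; exact hu
    obtain ⟨w, hw⟩ := h2
    have : w ∈ D := hd ▸ Set.mem_univ _
    rw [← hw]
    exact this
  · have hDray : IsDownRay D := by
      refine ⟨hDne, hd, ?_, ?_⟩
      · intro u hu v hvu
        have h1 : G.f v ≤ G.f u := G.mono.monotone hvu
        have h2 : G.f v ∈ U := by
          have := Set.mem_range_self (f := G.f) v
          rwa [G.rng] at this
        obtain ⟨a, ha, hav⟩ := h2
        exact hconv a ha (G.f u) hu (G.f v) hav h1
      · intro u hu
        obtain ⟨b, hb, hlt⟩ := hnomax (G.f u) hu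
        have h2 : b ∈ Set.range G.f := by rw [G.rng]; exact hIU hb
        obtain ⟨w, hw⟩ := h2
        refine ⟨w, by show G.f w ∈ I; rw [hw]; exact hb, ?_⟩
        rw [← hw] at hlt
        exact G.mono.lt_iff_lt.1 hlt
    obtain ⟨H⟩ := downRay_nice D hDray
    refine ⟨(G.comp H).congr ?_⟩
    rw [hDdef, Set.image_preimage_eq_inter_range, G.rng]
    exact Set.inter_eq_self_of_subset_left hIU

end

end Homog

/-- If `X ⊆ ℤ^ω` is closed under tail-equivalence, then `X` is homogeneous: for every
open interval `I` of the lexicographically ordered `ℤ^ω`, `X` is order-isomorphic to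
`X ∩ I`. -/
theorem tailClosed_is_homogeneous
    (X : Set (Lex (ℕ → ℤ)))
    (hX : ∀ u ∈ X, ∀ v : Lex (ℕ → ℤ), TailEquiv (ofLex u) (ofLex v) → v ∈ X) :
    ∀ I : Set (Lex (ℕ → ℤ)), IsOpenInterval I →
      Nonempty ((X : Set (Lex (ℕ → ℤ))) ≃o (X ∩ I : Set (Lex (ℕ → ℤ)))) := by
  intro I hI
  obtain ⟨F⟩ := Homog.interval_nice I hI
  have hmem : ∀ u : Lex (ℕ → ℤ), u ∈ X → F.f u ∈ X ∩ I := by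
    intro u hu
    refine ⟨hX u hu (F.f u) (F.te u), ?_⟩
    have := Set.mem_range_self (f := F.f) u
    rwa [F.rng] at this
  refine ⟨StrictMono.orderIsoOfSurjective
    (fun u : {x // x ∈ X} => (⟨F.f u.1, hmem u.1 u.2⟩ : {x // x ∈ X ∩ I})) ?_ ?_⟩
  · intro u v huv
    simp only [Subtype.mk_lt_mk]
    exact F.mono (by exact huv)
  · rintro ⟨v, hvX, hvI⟩
    have h1 : v ∈ Set.range F.f := by rw [F.rng]; exact hvI
    obtain ⟨u, hu⟩ := h1
    have huX : u ∈ X := by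
      refine hX v hvX u (Homog.te_symm ?_)
      have := F.te u
      rwa [hu] at this
    exact ⟨⟨u, huX⟩, Subtype.ext hu⟩
end

section
/- Let C ⊆ ℤ^ω be the set of sequences u for which there exists a nonzero integer k with u tail-equivalent to u + k̄ (where k̄ is the constant sequence with value k and addition is coordinatewise). Then C is countable. -/
lemma appendSeq_shift (r : List ℤ) (w : ℕ → ℤ) (m : ℕ) :
    appendSeq r w (m + r.length) = w m := by
  simp [appendSeq]

/-- A sequence satisfying the shift recurrence is determined by its first `max a b` values. -/
lemma det (a b : ℕ) (k : ℤ) (hab : a ≠ b) (u v : ℕ → ℤ)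
    (hu : ∀ m, u (m + a) = u (m + b) + k) (hv : ∀ m, v (m + a) = v (m + b) + k)
    (h : ∀ n < max a b, u n = v n) : u = v := by
  funext n
  induction n using Nat.strong_induction_on with
  | _ n ih =>
    rcases lt_or_ge n (max a b) with hn | hn
    · exact h n hn
    · rcases lt_or_gt_of_ne hab with hlt | hlt
      · -- a < b, so n ≥ b; u n = u ((n-b)+a) - k
        have hb : b ≤ n := le_trans (le_max_right a b) hn
        have e1 : n - b + b = n := Nat.sub_add_cancel hb
        have h1 := hu (n - b)
        have h2 := hv (n - b)
        rw [e1] at h1 h2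
        have hsmall : n - b + a < n := by omega
        have := ih (n - b + a) hsmall
        omega
      · have ha : a ≤ n := le_trans (le_max_left a b) hn
        have e1 : n - a + a = n := Nat.sub_add_cancel ha
        have h1 := hu (n - a)
        have h2 := hv (n - a)
        rw [e1] at h1 h2
        have hsmall : n - a + b < n := by omega
        have := ih (n - a + b) hsmall
        omega

lemma S_countable (a b : ℕ) (k : ℤ) (hab : a ≠ b) :
    {u : ℕ → ℤ | ∀ m, u (m + a) = u (m + b) + k}.Countable := by
  have hcount : ((fun (u : ℕ → ℤ) (i : Fin (max a b)) => u i) ''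
      {u : ℕ → ℤ | ∀ m, u (m + a) = u (m + b) + k}).Countable := Set.to_countable _
  refine Set.countable_of_injective_of_countable_image ?_ hcount
  intro u hu v hv huv
  exact det a b k hab u v hu hv (fun n hn => congrFun huv ⟨n, hn⟩)

/-- The set of `u ∈ ℤ^ω` that are tail-equivalent to `u + k̄` for some nonzero integer
`k` is countable. -/
theorem shift_tailEquivalent_set_countable :
    {u : ℕ → ℤ | ∃ k : ℤ, k ≠ 0 ∧ TailEquiv u (fun n => u n + k)}.Countable := by
  have : {u : ℕ → ℤ | ∃ k : ℤ, k ≠ 0 ∧ TailEquiv u (fun n => u n + k)} ⊆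
      ⋃ (a : ℕ) (b : ℕ) (k : ℤ) (_ : a ≠ b),
        {u : ℕ → ℤ | ∀ m, u (m + a) = u (m + b) + k} := by
    rintro u ⟨k, hk, r, s, w, hur, hus⟩
    have hw1 : ∀ m, w m = u (m + r.length) := fun m => by
      rw [hur, appendSeq_shift]
    have hw2 : ∀ m, w m = u (m + s.length) + k := fun m => by
      have := congrFun hus (m + s.length)
      rw [appendSeq_shift] at this
      omega
    have hrec : ∀ m, u (m + r.length) = u (m + s.length) + k := fun m => by
      rw [← hw1, hw2]
    have hab : r.length ≠ s.length := by
      intro h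
      have := hrec 0
      rw [h] at this
      omega
    exact Set.mem_iUnion.2 ⟨r.length, Set.mem_iUnion.2 ⟨s.length,
      Set.mem_iUnion.2 ⟨k, Set.mem_iUnion.2 ⟨hab, hrec⟩⟩⟩⟩
  refine Set.Countable.mono this ?_
  refine Set.countable_iUnion fun a => Set.countable_iUnion fun b =>
    Set.countable_iUnion fun k => Set.countable_iUnion fun hab => S_countable a b k hab
end
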